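/- arXiv:1605.02414 — 9 statements merged into one kernel-verified Lean document; each statement's English description precedes it below -/
import Mathlib

section
/- A stable (independent) set in the Johnson graph J(n,r) has size at most (1/(n+1-r)) * C(n,r). -/
/-- A stable set in the Johnson graph `J(n,r)` (a family of `r`-subsets of `{1,...,n}` no two
of which intersect in exactly `r-1` elements, i.e. all pairwise intersections have size at most
`r-2`) has size at most `(1/(n+1-r)) * C(n,r)`. -/
theorem johnson_stable_set_card_le (n r : ℕ) (hr1 : 1 ≤ r) (hrn : r ≤ n)
    (S : Finset (Finset (Fin n)))
    (hsized : ∀ A ∈ S, A.card = r)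
    (hstable : ∀ A ∈ S, ∀ B ∈ S, A ≠ B → (A ∩ B).card + 2 ≤ r) :
    (S.card : ℝ) ≤ (1 / ((n : ℝ) + 1 - r)) * (n.choose r) := by
  -- the shadow map
  set f : Finset (Fin n) → Finset (Finset (Fin n)) :=
    fun A => A.powersetCard (r - 1) with hf
  have hdisj : (S : Set (Finset (Fin n))).PairwiseDisjoint f := by
    intro A hA B hB hAB
    rw [Function.onFun, Finset.disjoint_left]
    intro C hCA hCB
    simp only [hf, Finset.mem_powersetCard] at hCA hCB
    have h1 : C ⊆ A ∩ B := Finset.subset_inter hCA.1 hCB.1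
    have h2 := Finset.card_le_card h1
    have h3 := hstable A hA B hB hAB
    omega
  have hcardU : (S.biUnion f).card = S.card * r := by
    rw [Finset.card_biUnion (by intro A hA B hB hAB; exact hdisj hA hB hAB)]
    rw [Finset.sum_congr rfl (fun A hA => ?_), Finset.sum_const, smul_eq_mul]
    rw [hf, Finset.card_powersetCard, hsized A hA]
    rw [Nat.choose_symm (by omega), Nat.choose_one_right]
  have hsub : S.biUnion f ⊆ (Finset.univ : Finset (Fin n)).powersetCard (r - 1) := by
    intro C hC
    rw [Finset.mem_biUnion] at hC
    obtain ⟨A, hA, hCA⟩ := hC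
    rw [hf, Finset.mem_powersetCard] at hCA
    rw [Finset.mem_powersetCard]
    exact ⟨Finset.subset_univ _, hCA.2⟩
  have hcount : S.card * r ≤ n.choose (r - 1) := by
    have := Finset.card_le_card hsub
    rwa [hcardU, Finset.card_powersetCard, Finset.card_univ, Fintype.card_fin] at this
  -- key choose identity
  have hkey : n.choose (r - 1) * (n - (r - 1)) = n.choose r * r := by
    have := Nat.choose_succ_right_eq n (r - 1)
    have h1 : r - 1 + 1 = r := by omega
    rw [h1] at this
    omega
  have hmain : S.card * (n - r + 1) ≤ n.choose r := by
    have h2 : S.card * r * (n - (r - 1)) ≤ n.choose r * r :=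
      hkey ▸ Nat.mul_le_mul_right _ hcount
    have h3 : n - (r - 1) = n - r + 1 := by omega
    rw [h3] at h2
    have h4 : S.card * r * (n - r + 1) = (S.card * (n - r + 1)) * r := by ring
    rw [h4] at h2
    exact Nat.le_of_mul_le_mul_right h2 (by omega)
  have hpos : (0 : ℝ) < (n : ℝ) + 1 - r := by
    have : (r : ℝ) ≤ n := by exact_mod_cast hrn
    linarith
  rw [div_mul_eq_mul_div, one_mul, le_div_iff₀ hpos]
  have hc : ((n - r + 1 : ℕ) : ℝ) = (n : ℝ) + 1 - r := by
    have : (r : ℝ) ≤ n := by exact_mod_cast hrn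
    push_cast [Nat.cast_sub hrn]
    ring
  calc (S.card : ℝ) * ((n : ℝ) + 1 - r) = ((S.card * (n - r + 1) : ℕ) : ℝ) := by
        rw [Nat.cast_mul, hc]
    _ ≤ (n.choose r : ℝ) := by exact_mod_cast hmain
end

section
/- For any n-vertex graph G and any k ≥ 1, the number of maximal stable sets of G of size k is at most ⌊n/k⌋^(k-α) · (⌊n/k⌋+1)^α, where α = n mod k. -/
/-- A set of vertices of a graph is stable (independent) if it contains no two adjacent
vertices. -/
def SimpleGraph.IsStableSet {V : Type*} (G : SimpleGraph V) (s : Finset V) : Prop :=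
  ∀ a ∈ s, ∀ b ∈ s, ¬ G.Adj a b

/-- A stable set is maximal if it is not properly contained in any larger stable set. -/
def SimpleGraph.IsMaximalStableSet {V : Type*} (G : SimpleGraph V) (s : Finset V) : Prop :=
  G.IsStableSet s ∧ ∀ t : Finset V, G.IsStableSet t → s ⊆ t → t = s


/-- The balanced product bound. -/
def BB (n k : ℕ) : ℕ := (n / k) ^ (k - n % k) * (n / k + 1) ^ (n % k)

lemma BB_zero (n : ℕ) : BB n 0 = 1 := by
  simp [BB, Nat.mod_zero, Nat.div_zero, Nat.zero_sub]

lemma BB_one (n : ℕ) : BB n 1 = n := by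
  simp [BB, Nat.mod_one, Nat.div_one]

lemma div_mod_spec {n k q a : ℕ} (hk : 0 < k) (h : n = k * q + a) (ha : a < k) :
    n / k = q ∧ n % k = a :=
  (Nat.div_mod_unique hk).2 ⟨by omega, ha⟩

lemma BB_eq {n k q a : ℕ} (hk : 0 < k) (h : n = k * q + a) (ha : a < k) :
    BB n k = q ^ (k - a) * (q + 1) ^ a := by
  obtain ⟨h1, h2⟩ := div_mod_spec hk h ha
  rw [BB, h1, h2]

lemma BB_step (k N : ℕ) (hk : 1 ≤ k) (hN : 1 ≤ N) :
    BB N k * ((N - 1) / k) = BB (N - 1) k * ((N - 1) / k + 1) := by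
  have hk0 : 0 < k := hk
  have hdm := (Nat.div_add_mod N k).symm
  have hmod : N % k < k := Nat.mod_lt _ hk0
  set q := N / k with hq
  set α := N % k with hα'
  by_cases hα : α = 0
  · -- N = k * q, q ≥ 1
    have hkN : k ≤ N := by
      by_contra h
      push_neg at h
      have := Nat.mod_eq_of_lt h
      omega
    have hq1 : 1 ≤ q := by rw [hq]; exact (Nat.one_le_div_iff hk0).2 hkN
    have hb : k * q = k * (q - 1) + k := by
      conv_lhs => rw [show q = (q - 1) + 1 by omega]
      rw [Nat.mul_add, Nat.mul_one]
    have hN1 : N - 1 = k * (q - 1) + (k - 1) := by omega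
    have e1 : BB N k = q ^ (k - 0) * (q + 1) ^ 0 := BB_eq hk0 (by omega) hk0
    have e2 : BB (N - 1) k = (q - 1) ^ (k - (k - 1)) * (q - 1 + 1) ^ (k - 1) :=
      BB_eq hk0 hN1 (by omega)
    have e3 : (N - 1) / k = q - 1 := (div_mod_spec hk0 hN1 (by omega)).1
    rw [e1, e2, e3, show k - (k - 1) = 1 by omega, show q - 1 + 1 = q by omega,
      Nat.sub_zero, pow_zero, pow_one, show q ^ k = q ^ (k - 1) * q by
        conv_lhs => rw [show k = (k - 1) + 1 by omega, pow_succ]]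
    ring
  · -- α ≥ 1
    set β := α - 1 with hβ
    have hNe : N = k * q + (β + 1) := by omega
    have hN1 : N - 1 = k * q + β := by omega
    have e1 : BB N k = q ^ (k - (β + 1)) * (q + 1) ^ (β + 1) := BB_eq hk0 hNe (by omega)
    have e2 : BB (N - 1) k = q ^ (k - β) * (q + 1) ^ β := BB_eq hk0 hN1 (by omega)
    have e3 : (N - 1) / k = q := (div_mod_spec hk0 hN1 (by omega)).1
    rw [e1, e2, e3, show k - β = (k - (β + 1)) + 1 by omega, pow_succ, pow_succ]
    ring

lemma BB_le_succ (k N : ℕ) : BB N k ≤ BB (N + 1) k := by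
  rcases Nat.eq_zero_or_pos k with hk | hk
  · subst hk; rw [BB_zero, BB_zero]
  · have h := BB_step k (N + 1) hk (by omega)
    simp only [Nat.add_sub_cancel] at h
    have hpos : 0 < N / k + 1 := Nat.succ_pos _
    have : BB N k * (N / k + 1) ≤ BB (N + 1) k * (N / k + 1) := by
      calc BB N k * (N / k + 1) = BB (N + 1) k * (N / k) := h.symm
        _ ≤ BB (N + 1) k * (N / k + 1) := Nat.mul_le_mul_left _ (by omega)
    exact Nat.le_of_mul_le_mul_right this hpos

lemma BB_mono (k : ℕ) {a b : ℕ} (h : a ≤ b) : BB a k ≤ BB b k :=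
  monotone_nat_of_le_succ (fun N => BB_le_succ k N) h

lemma BB_key (k n m : ℕ) (hm : m ≤ n) : m * BB (n - m) k ≤ BB n (k + 1) := by
  rcases Nat.eq_zero_or_pos k with rfl | hk0
  · rw [BB_zero, BB_one, Nat.mul_one]; exact hm
  rcases Nat.eq_zero_or_pos n with rfl | hn0
  · interval_cases m; simp
  -- setup
  have hK : 0 < k + 1 := Nat.succ_pos k
  obtain ⟨q, α, hdm, hmodK⟩ : ∃ q α, n = q * (k + 1) + α ∧ α < k + 1 :=
    ⟨n / (k + 1), n % (k + 1), (Nat.div_add_mod' n (k + 1)).symm, Nat.mod_lt _ hK⟩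
  -- the optimum m0 and its properties
  obtain ⟨m0, hm01, hm0n, hup, hdown, heq⟩ :
      ∃ m0, 1 ≤ m0 ∧ m0 ≤ n ∧ (∀ m', m' < m0 → m' * (k + 1) + 1 ≤ n) ∧
        (∀ m', m0 ≤ m' → n ≤ m' * (k + 1) + k) ∧
        m0 * BB (n - m0) k = BB n (k + 1) := by
    have hmul : q * (k + 1) = q * k + q := Nat.mul_succ q k
    by_cases hα0 : α = 0
    · refine ⟨q, ?_, ?_, ?_, ?_, ?_⟩
      · -- 1 ≤ q
        by_contra h
        have hq0 : q = 0 := by omega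
        rw [hq0, Nat.zero_mul] at hdm
        omega
      · omega
      · intro m' hlt
        have h1 := Nat.mul_le_mul_right (k + 1) (show m' + 1 ≤ q by omega)
        have h2 : (m' + 1) * (k + 1) = m' * (k + 1) + (k + 1) := Nat.succ_mul m' (k + 1)
        omega
      · intro m' hge
        have h1 := Nat.mul_le_mul_right (k + 1) hge
        omega
      · have hsub : n - q = k * q + 0 := by
          have hx : q * (k + 1) = k * q + q := by ring
          omega
        have e2 : BB (n - q) k = q ^ (k - 0) * (q + 1) ^ 0 := BB_eq hk0 hsub hk0
        have e1 : BB n (k + 1) = q ^ (k + 1 - 0) * (q + 1) ^ 0 :=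
          BB_eq hK (by have : q * (k+1) = (k+1) * q := Nat.mul_comm _ _; omega) hK
        rw [e1, e2, Nat.sub_zero, Nat.sub_zero, pow_zero, Nat.mul_one, Nat.mul_one,
          show q ^ (k + 1) = q * q ^ k from by rw [pow_succ]; ring]
    · refine ⟨q + 1, by omega, ?_, ?_, ?_, ?_⟩
      · -- q + 1 ≤ n
        have h1 : q * 1 ≤ q * (k + 1) := Nat.mul_le_mul_left q (by omega)
        omega
      · intro m' hlt
        have h1 := Nat.mul_le_mul_right (k + 1) (show m' ≤ q by omega)
        omega
      · intro m' hge
        have h1 := Nat.mul_le_mul_right (k + 1) (show q ≤ m' by omega)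
        omega
      · have hsub : n - (q + 1) = k * q + (α - 1) := by
          have hx : q * (k + 1) = k * q + q := by ring
          omega
        have e2 : BB (n - (q + 1)) k = q ^ (k - (α - 1)) * (q + 1) ^ (α - 1) :=
          BB_eq hk0 hsub (by omega)
        have e1 : BB n (k + 1) = q ^ (k + 1 - α) * (q + 1) ^ α :=
          BB_eq hK (by have : q * (k+1) = (k+1) * q := Nat.mul_comm _ _; omega) (by omega)
        rw [e1, e2, show k + 1 - α = k - (α - 1) from by omega,
          show (q + 1) ^ α = (q + 1) ^ (α - 1) * (q + 1) from by
            rw [← pow_succ]; congr 1; omega]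
        ring
  -- one-step monotonicity claims
  have claim_up : ∀ m', m' < m0 → m' + 1 ≤ n →
      m' * BB (n - m') k ≤ (m' + 1) * BB (n - m' - 1) k := by
    intro m' hlt hmn
    rcases Nat.eq_zero_or_pos m' with rfl | hm1
    · simp
    have hbound := hup m' hlt
    have hmt : m' ≤ (n - m' - 1) / k := by
      rw [Nat.le_div_iff_mul_le hk0]
      have : m' * (k + 1) = m' * k + m' := Nat.mul_succ m' k
      omega
    set t := (n - m' - 1) / k with ht
    have hstep : BB (n - m') k * t = BB (n - m' - 1) k * (t + 1) :=
      BB_step k (n - m') hk0 (by omega)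
    have htpos : 0 < t := lt_of_lt_of_le hm1 hmt
    apply Nat.le_of_mul_le_mul_right _ htpos
    calc m' * BB (n - m') k * t = m' * (BB (n - m') k * t) := by ring
      _ = m' * (BB (n - m' - 1) k * (t + 1)) := by rw [hstep]
      _ = BB (n - m' - 1) k * (m' * (t + 1)) := by ring
      _ ≤ BB (n - m' - 1) k * ((m' + 1) * t) := by
          apply Nat.mul_le_mul_left
          have h1 : m' * (t + 1) = m' * t + m' := Nat.mul_succ m' t
          have h2 : (m' + 1) * t = m' * t + t := Nat.succ_mul m' t
          omega
      _ = (m' + 1) * BB (n - m' - 1) k * t := by ring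
  have claim_down : ∀ m', m0 ≤ m' → m' + 1 ≤ n →
      (m' + 1) * BB (n - m' - 1) k ≤ m' * BB (n - m') k := by
    intro m' hge hmn
    have hbound := hdown m' hge
    have hmt : (n - m' - 1) / k ≤ m' := by
      have h3 : (n - m' - 1) / k < m' + 1 := by
        rw [Nat.div_lt_iff_lt_mul hk0]
        have h1 : (m' + 1) * k = m' * k + k := Nat.succ_mul m' k
        have h2 : m' * (k + 1) = m' * k + m' := Nat.mul_succ m' k
        omega
      omega
    set t := (n - m' - 1) / k with ht
    have hstep : BB (n - m') k * t = BB (n - m' - 1) k * (t + 1) :=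
      BB_step k (n - m') hk0 (by omega)
    apply Nat.le_of_mul_le_mul_right _ (Nat.succ_pos t)
    calc (m' + 1) * BB (n - m' - 1) k * (t + 1)
        = (m' + 1) * (BB (n - m' - 1) k * (t + 1)) := by ring
      _ = (m' + 1) * (BB (n - m') k * t) := by rw [hstep]
      _ = BB (n - m') k * ((m' + 1) * t) := by ring
      _ ≤ BB (n - m') k * (m' * (t + 1)) := by
          apply Nat.mul_le_mul_left
          have h1 : m' * (t + 1) = m' * t + m' := Nat.mul_succ m' t
          have h2 : (m' + 1) * t = m' * t + t := Nat.succ_mul m' t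
          omega
      _ = m' * BB (n - m') k * (t + 1) := by ring
  -- propagate to all m
  have main_up : ∀ j, j ≤ m0 → (m0 - j) * BB (n - (m0 - j)) k ≤ m0 * BB (n - m0) k := by
    intro j
    induction j with
    | zero => intro _; simp
    | succ j ih =>
      intro hj
      have h1 : m0 - j = (m0 - (j + 1)) + 1 := by omega
      calc (m0 - (j + 1)) * BB (n - (m0 - (j + 1))) k
          ≤ ((m0 - (j + 1)) + 1) * BB (n - (m0 - (j + 1)) - 1) k :=
            claim_up (m0 - (j + 1)) (by omega) (by omega)
        _ = (m0 - j) * BB (n - (m0 - j)) k := by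
            rw [show n - (m0 - (j + 1)) - 1 = n - (m0 - j) from by omega, ← h1]
        _ ≤ m0 * BB (n - m0) k := ih (by omega)
  have main_down : ∀ j, m0 + j ≤ n → (m0 + j) * BB (n - (m0 + j)) k ≤ m0 * BB (n - m0) k := by
    intro j
    induction j with
    | zero => intro _; simp
    | succ j ih =>
      intro hj
      calc (m0 + (j + 1)) * BB (n - (m0 + (j + 1))) k
          = ((m0 + j) + 1) * BB (n - (m0 + j) - 1) k := by
            rw [show m0 + (j + 1) = m0 + j + 1 from by omega,
              show n - (m0 + j + 1) = n - (m0 + j) - 1 from by omega]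
        _ ≤ (m0 + j) * BB (n - (m0 + j)) k :=
            claim_down (m0 + j) (by omega) (by omega)
        _ ≤ m0 * BB (n - m0) k := ih (by omega)
  rcases le_or_gt m m0 with h | h
  · have h2 := main_up (m0 - m) (by omega)
    rw [show m0 - (m0 - m) = m from by omega] at h2
    exact le_trans h2 (le_of_eq heq)
  · have h2 := main_down (m - m0) (by omega)
    rw [show m0 + (m - m0) = m from by omega] at h2
    exact le_trans h2 (le_of_eq heq)


lemma setOf_ncard_eq {γ : Type*} [Fintype γ] [DecidableEq γ] (P : Finset γ → Prop)
    [DecidablePred P] :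
    {s : Finset γ | P s}.ncard = (Finset.univ.filter P).card := by
  rw [← Set.ncard_coe_finset]
  congr 1
  ext s
  simp

lemma maximal_meets {V : Type*} [DecidableEq V] (G : SimpleGraph V) {s : Finset V}
    (hs : G.IsMaximalStableSet s) (v : V) : ∃ u ∈ s, u = v ∨ G.Adj v u := by
  by_cases hv : v ∈ s
  · exact ⟨v, hv, Or.inl rfl⟩
  by_contra hcon
  push_neg at hcon
  have hstab : G.IsStableSet (insert v s) := by
    intro a ha b hb
    rcases Finset.mem_insert.1 ha with rfl | ha' <;> rcases Finset.mem_insert.1 hb with rfl | hb'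
    · exact G.irrefl
    · exact (hcon b hb').2
    · exact fun h => (hcon a ha').2 h.symm
    · exact hs.1 a ha' b hb'
  have h1 := hs.2 _ hstab (Finset.subset_insert v s)
  exact hv (h1 ▸ Finset.mem_insert_self v s)

lemma count_bound : ∀ (k : ℕ) (V : Type u) [Fintype V] [DecidableEq V] (G : SimpleGraph V),
    {s : Finset V | s.card = k ∧ G.IsMaximalStableSet s}.ncard ≤ BB (Fintype.card V) k := by
  intro k
  induction k with
  | zero =>
    intro V _ _ G
    rw [BB_zero]
    have hsub : {s : Finset V | s.card = 0 ∧ G.IsMaximalStableSet s} ⊆ {(∅ : Finset V)} := by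
      intro s hs
      simp only [Set.mem_setOf_eq] at hs
      simp [Finset.card_eq_zero.1 hs.1]
    exact le_trans (Set.ncard_le_ncard hsub (Set.finite_singleton _)) (by simp)
  | succ k ih =>
    intro V _ _ G
    classical
    rcases isEmpty_or_nonempty V with hV | hV
    · have hemp : {s : Finset V | s.card = k + 1 ∧ G.IsMaximalStableSet s} = ∅ := by
        ext s
        simp only [Set.mem_setOf_eq, Set.mem_empty_iff_false, iff_false, not_and]
        intro hc
        obtain ⟨x, -⟩ := Finset.card_pos.1 (by omega : 0 < s.card)
        exact (hV.false x).elim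
      rw [hemp]
      simp
    rw [setOf_ncard_eq]
    set n := Fintype.card V with hn
    set h : V → ℕ := fun v => (Finset.univ.filter (fun w => w = v ∨ G.Adj v w)).card with hh
    obtain ⟨v, -, hv⟩ := Finset.exists_min_image Finset.univ h
      ⟨Classical.arbitrary V, Finset.mem_univ _⟩
    set Nv : Finset V := Finset.univ.filter (fun w => w = v ∨ G.Adj v w) with hNv
    set F : Finset (Finset V) :=
      Finset.univ.filter (fun s : Finset V => s.card = k + 1 ∧ G.IsMaximalStableSet s) with hF
    -- Step 1: F is covered by the fibers over the closed neighborhood of v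
    have hcover : F ⊆ Nv.biUnion (fun u => F.filter (fun s => u ∈ s)) := by
      intro s hsF
      have hP := (Finset.mem_filter.1 hsF).2
      obtain ⟨u, hus, hu⟩ := maximal_meets G hP.2 v
      exact Finset.mem_biUnion.2 ⟨u, Finset.mem_filter.2 ⟨Finset.mem_univ _, hu⟩,
        Finset.mem_filter.2 ⟨hsF, hus⟩⟩
    -- Step 2: each fiber injects into the maximal stable k-sets of the graph off N[u]
    have hfiber : ∀ u : V, (F.filter (fun s => u ∈ s)).card ≤ BB (n - h u) k := by
      intro u
      set p : V → Prop := fun w => ¬(w = u ∨ G.Adj u w) with hp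
      set G' : SimpleGraph {w // p w} := SimpleGraph.comap (Subtype.val) G with hG'
      have hcardsub : Fintype.card {w // p w} = n - h u := by
        rw [Fintype.card_subtype]
        simp only [hp]
        have hsplit := Finset.card_filter_add_card_filter_not
          (s := (Finset.univ : Finset V)) (p := fun w => w = u ∨ G.Adj u w)
        have hc : (Finset.univ : Finset V).card = n := Finset.card_univ
        have hhu : h u = (Finset.univ.filter (fun w => w = u ∨ G.Adj u w)).card := rfl
        omega
      have hih := ih {w // p w} G'
      rw [setOf_ncard_eq, hcardsub] at hih
      refine le_trans ?_ hih
      -- the injection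
      set φ : Finset V → Finset {w // p w} := fun s => (s.erase u).subtype p with hφ
      have hA : ∀ s : Finset V, G.IsMaximalStableSet s → u ∈ s →
          ∀ w ∈ s.erase u, p w := by
        intro s hmax hus w hw hcontra
        obtain ⟨hwne, hws⟩ := Finset.mem_erase.1 hw
        rcases hcontra with rfl | hadj
        · exact hwne rfl
        · exact hmax.1 u hus w hws hadj
      have hB : ∀ s : Finset V, G.IsMaximalStableSet s → u ∈ s →
          (φ s).map (Function.Embedding.subtype p) = s.erase u := by
        intro s hmax hus
        rw [hφ]
        simp only
        rw [Finset.subtype_map]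
        exact Finset.filter_eq_self.2 (hA s hmax hus)
      apply Finset.card_le_card_of_injOn φ
      · -- maps into F'
        intro s hsmem
        obtain ⟨hsF', hus⟩ := Finset.mem_filter.1 hsmem
        obtain ⟨-, hcard, hmax⟩ :
            s ∈ Finset.univ ∧ s.card = k + 1 ∧ G.IsMaximalStableSet s := by
          obtain ⟨h1, h2⟩ := Finset.mem_filter.1 hsF'
          exact ⟨h1, h2.1, h2.2⟩
        refine Finset.mem_filter.2 ⟨Finset.mem_univ _, ?_, ?_, ?_⟩
        · -- card
          have hcφ := congrArg Finset.card (hB s hmax hus)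
          rw [Finset.card_map] at hcφ
          rw [hcφ, Finset.card_erase_of_mem hus, hcard]
          omega
        · -- stable
          intro a ha b hb
          have ha' : (a : V) ∈ s := Finset.mem_of_mem_erase (Finset.mem_subtype.1 ha)
          have hb' : (b : V) ∈ s := Finset.mem_of_mem_erase (Finset.mem_subtype.1 hb)
          exact hmax.1 a ha' b hb'
        · -- maximal
          intro t ht hsubt
          have hTstab : G.IsStableSet (insert u (t.map (Function.Embedding.subtype p))) := by
            intro a ha b hb
            rcases Finset.mem_insert.1 ha with rfl | ha' <;>
              rcases Finset.mem_insert.1 hb with rfl | hb'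
            · exact G.irrefl
            · obtain ⟨b', hb't, rfl⟩ := Finset.mem_map.1 hb'
              exact fun hadj => b'.2 (Or.inr hadj)
            · obtain ⟨a', ha't, rfl⟩ := Finset.mem_map.1 ha'
              exact fun hadj => a'.2 (Or.inr hadj.symm)
            · obtain ⟨a', ha't, rfl⟩ := Finset.mem_map.1 ha'
              obtain ⟨b', hb't, rfl⟩ := Finset.mem_map.1 hb'
              exact ht a' ha't b' hb't
          have hsT : s ⊆ insert u (t.map (Function.Embedding.subtype p)) := by
            intro w hws
            by_cases hwu : w = u
            · subst hwu; exact Finset.mem_insert_self _ _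
            · have hpw : p w := hA s hmax hus w (Finset.mem_erase.2 ⟨hwu, hws⟩)
              have hmem : (⟨w, hpw⟩ : {w // p w}) ∈ φ s :=
                Finset.mem_subtype.2 (Finset.mem_erase.2 ⟨hwu, hws⟩)
              exact Finset.mem_insert.2
                (Or.inr (Finset.mem_map.2 ⟨_, hsubt hmem, rfl⟩))
          have hTs := hmax.2 _ hTstab hsT
          apply Finset.Subset.antisymm _ hsubt
          intro w' hw't
          have hw'T : (w' : V) ∈ insert u (t.map (Function.Embedding.subtype p)) :=
            Finset.mem_insert.2 (Or.inr (Finset.mem_map.2 ⟨w', hw't, rfl⟩))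
          rw [hTs] at hw'T
          have hw'ne : (w' : V) ≠ u := fun hh => w'.2 (Or.inl hh)
          exact Finset.mem_subtype.2 (Finset.mem_erase.2 ⟨hw'ne, hw'T⟩)
      · -- injective on the fiber
        intro s1 hs1 s2 hs2 hφeq
        simp only [Finset.coe_filter, Set.mem_setOf_eq] at hs1 hs2
        obtain ⟨hs1F, hus1⟩ := hs1
        obtain ⟨hs2F, hus2⟩ := hs2
        have hmax1 := ((Finset.mem_filter.1 hs1F).2).2
        have hmax2 := ((Finset.mem_filter.1 hs2F).2).2
        have he : s1.erase u = s2.erase u := by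
          rw [← hB s1 hmax1 hus1, ← hB s2 hmax2 hus2, hφeq]
        calc s1 = insert u (s1.erase u) := (Finset.insert_erase hus1).symm
          _ = insert u (s2.erase u) := by rw [he]
          _ = s2 := Finset.insert_erase hus2
    -- Step 3: put it together
    have hmono : ∀ u ∈ Nv, BB (n - h u) k ≤ BB (n - h v) k := by
      intro u _
      exact BB_mono k (Nat.sub_le_sub_left (hv u (Finset.mem_univ u)) n)
    calc F.card ≤ (Nv.biUnion (fun u => F.filter (fun s => u ∈ s))).card :=
          Finset.card_le_card hcover
      _ ≤ ∑ u ∈ Nv, (F.filter (fun s => u ∈ s)).card := Finset.card_biUnion_le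
      _ ≤ ∑ u ∈ Nv, BB (n - h v) k := by
          apply Finset.sum_le_sum
          intro u hu
          exact le_trans (hfiber u) (hmono u hu)
      _ = Nv.card * BB (n - h v) k := by rw [Finset.sum_const, smul_eq_mul]
      _ = h v * BB (n - h v) k := rfl
      _ ≤ BB n (k + 1) := BB_key k n (h v) (by
          have : Nv.card ≤ n := le_trans (Finset.card_filter_le _ _)
            (le_of_eq Finset.card_univ)
          exact this)

/-- For any `n`-vertex graph `G` and any `k ≥ 1`, the number of maximal stable sets of `G` of
size `k` is at most `⌊n/k⌋^(k-α) · (⌊n/k⌋+1)^α`, where `α = n mod k`. -/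
theorem maximal_stable_sets_count {V : Type*} [Fintype V] [DecidableEq V]
    (G : SimpleGraph V) (n k : ℕ) (hn : Fintype.card V = n) (hk : 1 ≤ k) :
    {s : Finset V | s.card = k ∧ G.IsMaximalStableSet s}.ncard ≤
      (n / k) ^ (k - n % k) * (n / k + 1) ^ (n % k) := by
  have h := count_bound k V G
  rw [hn] at h
  exact h
end

section
/- The number of sparse paving matroids on ground set {1,...,n} is at least 2^((1/n)·C(n, ⌊n/2⌋)). -/
open Set

/-- `C` is a circuit of the matroid `M`: a minimal dependent subset of the ground set. -/
def Matroid.IsCircuit' {α : Type*} (M : Matroid α) (C : Set α) : Prop :=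
  C ⊆ M.E ∧ ¬ M.Indep C ∧ ∀ x ∈ C, M.Indep (C \ {x})

/-- `H` is a hyperplane of the matroid `M`: a maximal proper flat. -/
def Matroid.IsHyperplane' {α : Type*} (M : Matroid α) (H : Set α) : Prop :=
  M.IsFlat H ∧ ¬ M.Spanning H ∧ ∀ e ∈ M.E \ H, M.Spanning (insert e H)

/-- `C` is a circuit-hyperplane of `M`. -/
def Matroid.IsCircuitHyperplane {α : Type*} (M : Matroid α) (C : Set α) : Prop :=
  M.IsCircuit' C ∧ M.IsHyperplane' C

/-- `M` is a sparse paving matroid of rank `r`. -/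
def Matroid.SparsePaving {α : Type*} (M : Matroid α) (r : ℕ) : Prop :=
  (∃ B, M.IsBase B ∧ B.ncard = r) ∧
    ∀ C ⊆ M.E, C.ncard = r → ¬ M.Indep C → M.IsCircuitHyperplane C

section Construction

variable {n r : ℕ} {F : Finset (Finset (Fin n))}

/-- A "good" family: a stable set of `r`-subsets in the Johnson graph. -/
structure GoodFam (n r : ℕ) (F : Finset (Finset (Fin n))) : Prop where
  hr : 1 ≤ r
  hrn : r < n
  cards : ∀ S ∈ F, S.card = r
  stab : ∀ S ∈ F, ∀ T ∈ F, S ≠ T → (S ∩ T).card + 2 ≤ r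

theorem GoodFam.indep_empty (h : GoodFam n r F) : (∅ : Finset (Fin n)).card ≤ r ∧ ∅ ∉ F := by
  refine ⟨by simp, fun hmem => ?_⟩
  have h1 := h.cards _ hmem
  have h2 := h.hr
  simp only [Finset.card_empty] at h1
  omega

theorem GoodFam.indep_subset (h : GoodFam n r F) ⦃I J : Finset (Fin n)⦄
    (hJ : J.card ≤ r ∧ J ∉ F) (hIJ : I ⊆ J) : I.card ≤ r ∧ I ∉ F := by
  refine ⟨(Finset.card_le_card hIJ).trans hJ.1, fun hmem => hJ.2 ?_⟩
  have hIr := h.cards _ hmem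
  have : I = J := Finset.eq_of_subset_of_card_le hIJ (by omega)
  rwa [← this]

theorem GoodFam.indep_aug (h : GoodFam n r F) ⦃I J : Finset (Fin n)⦄
    (hI : I.card ≤ r ∧ I ∉ F) (hJ : J.card ≤ r ∧ J ∉ F) (hIJ : I.card < J.card) :
    ∃ e ∈ J, e ∉ I ∧ (insert e I).card ≤ r ∧ insert e I ∉ F := by
  classical
  have hJI : (J \ I).Nonempty := by
    rw [Finset.sdiff_nonempty]
    intro hsub
    exact absurd (Finset.card_le_card hsub) (by omega)
  by_cases hcard : I.card + 1 < r
  · obtain ⟨e, he⟩ := hJI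
    rw [Finset.mem_sdiff] at he
    refine ⟨e, he.1, he.2, ?_, fun hmem => ?_⟩
    · have := Finset.card_insert_le e I; omega
    · have := h.cards _ hmem
      have := Finset.card_insert_le e I
      omega
  -- I.card + 1 = r (since I.card < J.card ≤ r)
  have hIr : I.card + 1 = r := by omega
  by_contra hcon
  push_neg at hcon
  have hmemF : ∀ e ∈ J, e ∉ I → insert e I ∈ F := by
    intro e heJ heI
    have hc : (insert e I).card ≤ r := by
      rw [Finset.card_insert_of_notMem heI]; omega
    by_contra hne
    exact absurd hc (by simpa [hne] using hcon e heJ heI)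
  obtain ⟨e, he⟩ := hJI
  rw [Finset.mem_sdiff] at he
  by_cases h1 : J \ I = {e}
  · -- then J ⊆ insert e I, and card J = r means J = insert e I ∈ F, contradiction
    have hJsub : J ⊆ insert e I := by
      intro x hx
      by_cases hxI : x ∈ I
      · exact Finset.mem_insert_of_mem hxI
      · have : x ∈ J \ I := Finset.mem_sdiff.2 ⟨hx, hxI⟩
        rw [h1, Finset.mem_singleton] at this
        simp [this]
    have hJcard : J.card = r := by
      have := Finset.card_insert_of_notMem he.2
      have := Finset.card_le_card hJsub
      omega
    have : J = insert e I := Finset.eq_of_subset_of_card_le hJsub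
      (by rw [Finset.card_insert_of_notMem he.2]; omega)
    exact hJ.2 (this ▸ hmemF e he.1 he.2)
  · -- two distinct elements of J \ I
    obtain ⟨f, hf, hfe⟩ : ∃ f ∈ J \ I, f ≠ e := by
      by_contra hcon2
      push_neg at hcon2
      exact h1 (Finset.eq_singleton_iff_unique_mem.2 ⟨Finset.mem_sdiff.2 he, hcon2⟩)
    rw [Finset.mem_sdiff] at hf
    have hSe := hmemF e he.1 he.2
    have hSf := hmemF f hf.1 hf.2
    have hne : insert f I ≠ insert e I := by
      intro heq
      apply hfe
      have : f ∈ insert e I := heq ▸ Finset.mem_insert_self f I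
      rcases Finset.mem_insert.1 this with h' | h'
      · exact h'
      · exact absurd h' hf.2
    have hsub : I ⊆ insert f I ∩ insert e I :=
      Finset.subset_inter (Finset.subset_insert _ _) (Finset.subset_insert _ _)
    have := h.stab _ hSf _ hSe hne
    have := Finset.card_le_card hsub
    omega

theorem GoodFam.subset_ground (_h : GoodFam n r F) ⦃I : Finset (Fin n)⦄
    (_hI : I.card ≤ r ∧ I ∉ F) : (I : Set (Fin n)) ⊆ Set.univ := Set.subset_univ _

/-- The sparse paving matroid associated to a good family. -/
noncomputable def famMatroid (h : GoodFam n r F) : Matroid (Fin n) :=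
  (IndepMatroid.ofFinset Set.univ (fun I => I.card ≤ r ∧ I ∉ F)
    h.indep_empty h.indep_subset h.indep_aug h.subset_ground).matroid

@[simp] theorem famMatroid_E (h : GoodFam n r F) : (famMatroid h).E = Set.univ := rfl

theorem famMatroid_indep_finset (h : GoodFam n r F) {I : Finset (Fin n)} :
    (famMatroid h).Indep ↑I ↔ I.card ≤ r ∧ I ∉ F := by
  simp [famMatroid, IndepMatroid.ofFinset_indep]

theorem famMatroid_indep (h : GoodFam n r F) {I : Set (Fin n)} :
    (famMatroid h).Indep I ↔ I.ncard ≤ r ∧ I.toFinite.toFinset ∉ F := by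
  classical
  conv_lhs => rw [show I = ↑I.toFinite.toFinset from (Set.Finite.coe_toFinset _).symm]
  rw [famMatroid_indep_finset h, Set.ncard_eq_toFinset_card I I.toFinite]

end Construction
section Construction2

variable {n r : ℕ} {F : Finset (Finset (Fin n))}

/-- There is an independent `r`-set. -/
theorem GoodFam.exists_indep_rset (h : GoodFam n r F) :
    ∃ B : Finset (Fin n), B.card = r ∧ B ∉ F := by
  classical
  obtain ⟨S, -, hS⟩ := Finset.exists_subset_card_eq
    (show r ≤ (Finset.univ : Finset (Fin n)).card by simp [le_of_lt h.hrn])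
  by_cases hSF : S ∈ F
  · -- swap one element
    obtain ⟨x, hx⟩ : S.Nonempty := Finset.card_pos.1 (by have := h.hr; omega)
    obtain ⟨e, he⟩ : ∃ e, e ∉ S := by
      by_contra hcon
      push_neg at hcon
      have : (Finset.univ : Finset (Fin n)) ⊆ S := fun y _ => hcon y
      have h2 := Finset.card_le_card this
      rw [Finset.card_univ, Fintype.card_fin] at h2
      have := h.hrn
      omega
    refine ⟨insert e (S.erase x), ?_, fun hmem => ?_⟩
    · rw [Finset.card_insert_of_notMem (fun hc => he (Finset.erase_subset _ _ hc)),
        Finset.card_erase_of_mem hx]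
      have := h.hr
      omega
    · have hne : insert e (S.erase x) ≠ S := fun heq => he (heq ▸ Finset.mem_insert_self e _)
      have hsub : S.erase x ⊆ insert e (S.erase x) ∩ S :=
        Finset.subset_inter (Finset.subset_insert _ _) (Finset.erase_subset _ _)
      have := h.stab _ hmem _ hSF hne
      have := Finset.card_le_card hsub
      rw [Finset.card_erase_of_mem hx] at this
      have := h.hr
      omega
  · exact ⟨S, hS, hSF⟩

theorem GoodFam.base_iff (h : GoodFam n r F) {B : Set (Fin n)} :
    (famMatroid h).IsBase B ↔ (famMatroid h).Indep B ∧ B.ncard = r := by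
  classical
  constructor
  · intro hB
    refine ⟨hB.indep, ?_⟩
    obtain ⟨B₀, hB₀card, hB₀F⟩ := h.exists_indep_rset
    have hB₀indep : (famMatroid h).Indep ↑B₀ :=
      (famMatroid_indep_finset h).2 ⟨le_of_eq hB₀card, hB₀F⟩
    obtain ⟨B₁, hB₁, hsub⟩ := hB₀indep.exists_isBase_superset
    have hB₁indep := hB₁.indep
    rw [famMatroid_indep h] at hB₁indep
    have h1 : r ≤ B₁.ncard := by
      have : (↑B₀ : Set (Fin n)).ncard ≤ B₁.ncard :=
        Set.ncard_le_ncard hsub (Set.toFinite _)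
      rwa [Set.ncard_coe_finset, hB₀card] at this
    have h2 := hB.ncard_eq_ncard_of_isBase hB₁
    omega
  · rintro ⟨hindep, hcard⟩
    rw [Matroid.isBase_iff_maximal_indep]
    refine ⟨hindep, fun I hI hBI => ?_⟩
    have hIcard : I.ncard ≤ r := ((famMatroid_indep h).1 hI).1
    exact le_of_eq (Set.eq_of_subset_of_ncard_le hBI (by omega) (Set.toFinite _)).symm

/-- Any member of `F` is a circuit-hyperplane of the associated matroid. -/
theorem GoodFam.circuitHyperplane (h : GoodFam n r F) {C : Finset (Fin n)} (hC : C ∈ F) :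
    (famMatroid h).IsCircuitHyperplane ↑C := by
  classical
  have hCr : C.card = r := h.cards _ hC
  have hCdep : ¬ (famMatroid h).Indep ↑C := by
    rw [famMatroid_indep_finset h]
    intro hcon
    exact hcon.2 hC
  -- key stability consequence: swapping in a point outside C keeps independence
  have hswap : ∀ (D : Finset (Fin n)), D.card = r → (D ∩ C).card + 1 = r → D ∉ F := by
    intro D hDr hDC hmem
    have hne : D ≠ C := by
      intro heq
      rw [heq, Finset.inter_self, hCr] at hDC
      omega
    have := h.stab _ hmem _ hC hne
    omega
  refine ⟨⟨Set.subset_univ _, hCdep, fun x hx => ?_⟩, ?_, ?_, ?_⟩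
  · -- erase any point: independent
    rw [Finset.mem_coe] at hx
    rw [show (↑C : Set (Fin n)) \ {x} = ↑(C.erase x) by simp [Finset.coe_erase],
      famMatroid_indep_finset h]
    rw [Finset.card_erase_of_mem hx, hCr]
    refine ⟨by omega, fun hmem => ?_⟩
    have := h.cards _ hmem
    rw [Finset.card_erase_of_mem hx, hCr] at this
    have := h.hr
    omega
  · -- Flat
    refine ⟨fun I X hIC hIX => ?_, Set.subset_univ _⟩
    intro e heX
    by_contra heC
    have hIfin : I.Finite := Set.toFinite _
    set If := hIfin.toFinset with hIf
    have hIcoe : (If : Set (Fin n)) = I := hIfin.coe_toFinset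
    have hIsub : If ⊆ C := by
      intro y hy
      rw [← Finset.mem_coe, hIcoe] at hy
      exact hIC.subset hy
    have hIindep := hIC.indep
    -- If has card r - 1
    have hIne : If ≠ C := by
      intro heq
      rw [← hIcoe, heq] at hIindep
      exact hCdep hIindep
    have hIlt : If.card < r := by
      have := Finset.card_lt_card (Finset.ssubset_iff_subset_ne.2 ⟨hIsub, hIne⟩)
      omega
    have hIcard : If.card = r - 1 := by
      by_contra hlt
      obtain ⟨x, hxC, hxI⟩ : ∃ x ∈ C, x ∉ If := by
        by_contra hcon
        push_neg at hcon
        exact absurd (Finset.eq_of_subset_of_card_le (fun y hy => hcon y hy) (by omega)).symm hIne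
      have hins : (famMatroid h).Indep (insert x I) := by
        rw [show insert x I = ↑(insert x If) by rw [Finset.coe_insert, hIcoe],
          famMatroid_indep_finset h]
        rw [Finset.card_insert_of_notMem hxI]
        refine ⟨by omega, fun hmem => ?_⟩
        have := h.cards _ hmem
        rw [Finset.card_insert_of_notMem hxI] at this
        omega
      have := hIC.mem_of_insert_indep (Finset.mem_coe.2 hxC) hins
      rw [← hIcoe, Finset.mem_coe] at this
      exact hxI this
    -- insert e I is independent, contradicting Basis I X
    have heI : e ∉ If := fun hc => heC (hIC.subset (hIcoe ▸ Finset.mem_coe.2 hc))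
    have hins : (famMatroid h).Indep (insert e I) := by
      rw [show insert e I = ↑(insert e If) by rw [Finset.coe_insert, hIcoe],
        famMatroid_indep_finset h]
      rw [Finset.card_insert_of_notMem heI]
      refine ⟨by omega, ?_⟩
      apply hswap
      · rw [Finset.card_insert_of_notMem heI]; omega
      · have : (insert e If) ∩ C = If := by
          ext y
          simp only [Finset.mem_inter, Finset.mem_insert]
          constructor
          · rintro ⟨hy1 | hy1, hy2⟩
            · exact absurd (hy1 ▸ hy2) (fun hc => heC (Finset.mem_coe.2 hc))
            · exact hy1
          · intro hy
            exact ⟨Or.inr hy, hIsub hy⟩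
        rw [this, hIcard]
        have := h.hr
        omega
    have := hIX.mem_of_insert_indep heX hins
    rw [← hIcoe, Finset.mem_coe] at this
    exact heI this
  · -- not spanning
    intro hsp
    obtain ⟨B, hB, hBC⟩ := ((famMatroid h).spanning_iff_exists_isBase_subset
      (Set.subset_univ _)).1 hsp
    rw [h.base_iff] at hB
    have : B = ↑C :=
      Set.eq_of_subset_of_ncard_le hBC (by rw [Set.ncard_coe_finset, hCr, hB.2])
        (Set.toFinite _)
    rw [this] at hB
    exact hCdep hB.1
  · -- insert e C is spanning for e outside C
    intro e he
    rw [famMatroid_E, Set.mem_diff] at he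
    have heC : e ∉ C := fun hc => he.2 (Finset.mem_coe.2 hc)
    obtain ⟨x, hx⟩ : C.Nonempty := Finset.card_pos.1 (by have := h.hr; omega)
    have hB : (famMatroid h).IsBase ↑(insert e (C.erase x)) := by
      rw [h.base_iff]
      have hcard : (insert e (C.erase x)).card = r := by
        rw [Finset.card_insert_of_notMem (fun hc => heC (Finset.erase_subset _ _ hc)),
          Finset.card_erase_of_mem hx]
        have := h.hr
        omega
      refine ⟨(famMatroid_indep_finset h).2 ⟨le_of_eq hcard, ?_⟩, by rw [Set.ncard_coe_finset, hcard]⟩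
      apply hswap _ hcard
      have hint : (insert e (C.erase x)) ∩ C = C.erase x := by
        ext y
        simp only [Finset.mem_inter, Finset.mem_insert, Finset.mem_erase]
        constructor
        · rintro ⟨hy1 | hy1, hy2⟩
          · exact absurd (hy1 ▸ hy2) heC
          · exact hy1
        · intro hy
          exact ⟨Or.inr hy, hy.2⟩
      rw [hint, Finset.card_erase_of_mem hx, hCr]
      have := h.hr
      omega
    refine hB.spanning_of_superset ?_ (Set.subset_univ _)
    intro y hy
    simp only [Finset.coe_insert, Set.mem_insert_iff, Finset.coe_erase, Set.mem_diff,
      Finset.mem_coe] at hy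
    rcases hy with hy | hy
    · exact hy ▸ Set.mem_insert _ _
    · exact Set.mem_insert_of_mem _ hy.1

/-- The matroid of a good family is sparse paving of rank `r`. -/
theorem GoodFam.sparsePaving (h : GoodFam n r F) : (famMatroid h).SparsePaving r := by
  classical
  constructor
  · obtain ⟨B, hBcard, hBF⟩ := h.exists_indep_rset
    refine ⟨↑B, ?_, by rw [Set.ncard_coe_finset, hBcard]⟩
    rw [h.base_iff]
    exact ⟨(famMatroid_indep_finset h).2 ⟨le_of_eq hBcard, hBF⟩,
      by rw [Set.ncard_coe_finset, hBcard]⟩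
  · intro C _ hCcard hCdep
    have hCF : C.toFinite.toFinset ∈ F := by
      by_contra hcon
      exact hCdep ((famMatroid_indep h).2 ⟨le_of_eq hCcard, hcon⟩)
    have := h.circuitHyperplane hCF
    rwa [Set.Finite.coe_toFinset] at this

end Construction2
section Counting

variable {n r : ℕ} {F : Finset (Finset (Fin n))}

theorem famMatroid_mem_F_iff (h : GoodFam n r F) {S : Finset (Fin n)} :
    S ∈ F ↔ S.card = r ∧ ¬ (famMatroid h).Indep ↑S := by
  rw [famMatroid_indep_finset h]
  constructor
  · intro hS
    exact ⟨h.cards _ hS, fun hc => hc.2 hS⟩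
  · rintro ⟨hcard, hdep⟩
    by_contra hSF
    exact hdep ⟨le_of_eq hcard, hSF⟩

/-- Matroids on a finite type form a finite type. -/
theorem matroid_finite : Finite (Matroid (Fin n)) := by
  apply Finite.of_injective (fun M : Matroid (Fin n) => (M.E, M.Indep))
  intro M₁ M₂ hM
  rw [Prod.mk.injEq] at hM
  exact Matroid.ext_indep hM.1 (fun I _ => by rw [hM.2])

/-- The Graham–Sloane weight of a set: the sum of its elements mod `n`. -/
def gsWeight (n : ℕ) (S : Finset (Fin n)) : ZMod n := ∑ i ∈ S, ((i : ℕ) : ZMod n)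

theorem gs_stable {n r : ℕ} [NeZero n] {S T : Finset (Fin n)} (hS : S.card = r)
    (hT : T.card = r) (hw : gsWeight n S = gsWeight n T) (hcard : r ≤ (S ∩ T).card + 1) :
    S = T := by
  classical
  have hST : (S \ T).card + (S ∩ T).card = r := by
    rw [Finset.card_sdiff_add_card_inter, hS]
  have hTS : (T \ S).card + (S ∩ T).card = r := by
    rw [Finset.inter_comm, Finset.card_sdiff_add_card_inter, hT]
  by_cases h0 : (S \ T).card = 0
  · have hsub : S ⊆ T := by
      rw [Finset.card_eq_zero, Finset.sdiff_eq_empty_iff_subset] at h0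
      exact h0
    exact Finset.eq_of_subset_of_card_le hsub (by omega)
  · exfalso
    have h1 : (S \ T).card = 1 := by omega
    have h2 : (T \ S).card = 1 := by omega
    obtain ⟨a, ha⟩ := Finset.card_eq_one.1 h1
    obtain ⟨b, hb⟩ := Finset.card_eq_one.1 h2
    have hsum1 : gsWeight n S = ∑ i ∈ S ∩ T, ((i : ℕ) : ZMod n) + ((a : ℕ) : ZMod n) := by
      rw [gsWeight, ← Finset.sum_inter_add_sum_sdiff S T (fun i => ((i : ℕ) : ZMod n)), ha,
        Finset.sum_singleton]
    have hsum2 : gsWeight n T = ∑ i ∈ S ∩ T, ((i : ℕ) : ZMod n) + ((b : ℕ) : ZMod n) := by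
      rw [gsWeight, ← Finset.sum_inter_add_sum_sdiff T S (fun i => ((i : ℕ) : ZMod n)),
        Finset.inter_comm, hb, Finset.sum_singleton]
    have hab : ((a : ℕ) : ZMod n) = ((b : ℕ) : ZMod n) := by
      rw [hsum1, hsum2] at hw
      exact add_left_cancel hw
    have : (a : ℕ) = (b : ℕ) := by
      have h1 := ZMod.val_cast_of_lt a.isLt
      have h2 := ZMod.val_cast_of_lt b.isLt
      rw [← h1, ← h2, hab]
    have hab' : a = b := Fin.ext this
    have haS : a ∈ S \ T := ha ▸ Finset.mem_singleton_self a
    have hbT : b ∈ T \ S := hb ▸ Finset.mem_singleton_self b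
    rw [Finset.mem_sdiff] at haS hbT
    exact haS.2 (hab' ▸ hbT.1)

end Counting
section Main

theorem main_count (n : ℕ) (hn : 2 ≤ n) :
    ∃ c : ZMod n, n.choose (n / 2) ≤ n * ((Finset.powersetCard (n / 2) Finset.univ).filter
      (fun S : Finset (Fin n) => gsWeight n S = c)).card ∧
      2 ^ ((Finset.powersetCard (n / 2) Finset.univ).filter
        (fun S : Finset (Fin n) => gsWeight n S = c)).card ≤
        {M : Matroid (Fin n) | M.E = Set.univ ∧ ∃ r, M.SparsePaving r}.ncard := by
  classical
  haveI : NeZero n := ⟨by omega⟩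
  haveI : Finite (Matroid (Fin n)) := matroid_finite
  set r := n / 2 with hr
  have hr1 : 1 ≤ r := by omega
  have hrn : r < n := by omega
  set P := Finset.powersetCard r (Finset.univ : Finset (Fin n)) with hP
  set A : ZMod n → Finset (Finset (Fin n)) :=
    fun c => P.filter (fun S => gsWeight n S = c) with hA
  -- pigeonhole
  have hfiber : P.card = ∑ c : ZMod n, (A c).card :=
    Finset.card_eq_sum_card_fiberwise (f := gsWeight n) (fun S _ => Finset.mem_univ _)
  have hPcard : P.card = n.choose r := by
    rw [hP, Finset.card_powersetCard, Finset.card_univ, Fintype.card_fin]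
  obtain ⟨c, -, hc⟩ := Finset.exists_max_image (Finset.univ : Finset (ZMod n))
    (fun c => (A c).card) ⟨0, Finset.mem_univ 0⟩
  have hsum_le : ∑ c' : ZMod n, (A c').card ≤ n * (A c).card := by
    calc ∑ c' : ZMod n, (A c').card ≤ Finset.univ.card • (A c).card :=
          Finset.sum_le_card_nsmul _ _ _ (fun x _ => hc x (Finset.mem_univ x))
      _ = n * (A c).card := by rw [Finset.card_univ, ZMod.card, smul_eq_mul]
  refine ⟨c, by rw [← hPcard, hfiber]; exact hsum_le, ?_⟩
  -- every subfamily of A c is good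
  have hgood : ∀ G ∈ (A c).powerset, GoodFam n r G := by
    intro G hG
    rw [Finset.mem_powerset] at hG
    have hmem : ∀ S ∈ G, S.card = r ∧ gsWeight n S = c := by
      intro S hS
      have := hG hS
      rw [hA, Finset.mem_filter, hP, Finset.mem_powersetCard] at this
      exact ⟨this.1.2, this.2⟩
    refine ⟨hr1, hrn, fun S hS => (hmem S hS).1, fun S hS T hT hne => ?_⟩
    by_contra hcon
    exact hne (gs_stable (hmem S hS).1 (hmem T hT).1
      ((hmem S hS).2.trans (hmem T hT).2.symm) (by omega))
  -- the injection
  set f : Finset (Finset (Fin n)) → Matroid (Fin n) :=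
    fun G => if hG : GoodFam n r G then famMatroid hG else Matroid.emptyOn (Fin n) with hf
  have hsub : f '' ↑((A c).powerset) ⊆
      {M : Matroid (Fin n) | M.E = Set.univ ∧ ∃ r, M.SparsePaving r} := by
    rintro - ⟨G, hG, rfl⟩
    rw [Finset.mem_coe] at hG
    have hGgood := hgood G hG
    rw [hf]
    simp only [hGgood, dif_pos]
    exact ⟨famMatroid_E hGgood, r, hGgood.sparsePaving⟩
  have hinj : Set.InjOn f ↑((A c).powerset) := by
    intro G hG G' hG' heq
    rw [Finset.mem_coe] at hG hG'
    have h1 := hgood G hG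
    have h2 := hgood G' hG'
    rw [hf] at heq
    simp only [h1, h2, dif_pos] at heq
    ext S
    rw [famMatroid_mem_F_iff h1 (S := S), famMatroid_mem_F_iff h2 (S := S), heq]
  calc (2 : ℕ) ^ (A c).card = ((A c).powerset.card : ℕ) := (Finset.card_powerset _).symm
    _ = (↑((A c).powerset) : Set (Finset (Finset (Fin n)))).ncard := (Set.ncard_coe_finset _).symm
    _ = (f '' ↑((A c).powerset)).ncard := (Set.ncard_image_of_injOn hinj).symm
    _ ≤ _ := Set.ncard_le_ncard hsub (Set.toFinite _)

end Main
/-- The number of sparse paving matroids on ground set `{1,...,n}` is at least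
`2^((1/n)·C(n,⌊n/2⌋))`. -/
theorem sparsePaving_count_lower_bound (n : ℕ) (hn : 1 ≤ n) :
    (2 : ℝ) ^ ((n.choose (n / 2) : ℝ) / n) ≤
      ({M : Matroid (Fin n) | M.E = Set.univ ∧ ∃ r, M.SparsePaving r}.ncard : ℝ) := by
  classical
  haveI : Finite (Matroid (Fin n)) := matroid_finite
  set 𝒮 := {M : Matroid (Fin n) | M.E = Set.univ ∧ ∃ r, M.SparsePaving r} with h𝒮
  rcases eq_or_lt_of_le hn with h1 | h2
  · -- n = 1 : exhibit two matroids
    subst h1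
    have hfree : Matroid.freeOn (Set.univ : Set (Fin 1)) ∈ 𝒮 := by
      refine ⟨by simp, 1, ⟨Set.univ, ?_, by simp [Set.ncard_univ]⟩, ?_⟩
      · rw [Matroid.freeOn_isBase_iff]
      · intro C _ _ hdep
        exact absurd (Matroid.freeOn_indep_iff.2 (Set.subset_univ C)) hdep
    have hloopy : Matroid.loopyOn (Set.univ : Set (Fin 1)) ∈ 𝒮 := by
      refine ⟨by simp, 0, ⟨∅, ?_, by simp⟩, ?_⟩
      · rw [Matroid.loopyOn_isBase_iff]
      · intro C _ hC hdep
        rw [Set.ncard_eq_zero (Set.toFinite C)] at hC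
        exact absurd (by rw [hC]; exact (Matroid.loopyOn (Set.univ : Set (Fin 1))).empty_indep) hdep
    have hne : Matroid.freeOn (Set.univ : Set (Fin 1)) ≠ Matroid.loopyOn Set.univ := by
      intro heq
      have h1 : (Matroid.freeOn (Set.univ : Set (Fin 1))).Indep Set.univ :=
        Matroid.freeOn_indep_iff.2 (Set.subset_univ _)
      rw [heq, Matroid.loopyOn_indep_iff] at h1
      exact (Set.univ_nonempty (α := Fin 1)).ne_empty h1
    have h2le : 2 ≤ 𝒮.ncard := by
      have : ({Matroid.freeOn (Set.univ : Set (Fin 1)), Matroid.loopyOn Set.univ} : Set _) ⊆ 𝒮 := by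
        rintro M (rfl | rfl)
        exacts [hfree, hloopy]
      calc 2 = ({Matroid.freeOn (Set.univ : Set (Fin 1)), Matroid.loopyOn Set.univ} :
              Set (Matroid (Fin 1))).ncard := by
            rw [Set.ncard_pair hne]
        _ ≤ 𝒮.ncard := Set.ncard_le_ncard this (Set.toFinite _)
    have : ((Nat.choose 1 (1 / 2) : ℝ) / (1 : ℕ)) = 1 := by norm_num
    rw [this, Real.rpow_one]
    exact_mod_cast h2le
  · -- n ≥ 2
    obtain ⟨c, hcount, hle⟩ := main_count n h2
    set m := ((Finset.powersetCard (n / 2) Finset.univ).filter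
      (fun S : Finset (Fin n) => gsWeight n S = c)).card with hm
    have hnpos : (0 : ℝ) < n := by positivity
    have hexp : (n.choose (n / 2) : ℝ) / n ≤ (m : ℝ) := by
      rw [div_le_iff₀ hnpos]
      calc (n.choose (n / 2) : ℝ) ≤ ((n * m : ℕ) : ℝ) := by exact_mod_cast hcount
        _ = (m : ℝ) * n := by push_cast; ring
    calc (2 : ℝ) ^ ((n.choose (n / 2) : ℝ) / n) ≤ (2 : ℝ) ^ (m : ℝ) :=
          Real.rpow_le_rpow_of_exponent_le one_le_two hexp
      _ = ((2 ^ m : ℕ) : ℝ) := by rw [Real.rpow_natCast]; push_cast; ring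
      _ ≤ (𝒮.ncard : ℝ) := by exact_mod_cast hle
end

section
/- For every 0 < δ ≤ 1, the proportion of n-element sparse paving matroids whose rank lies outside the interval ((0.5-δ)n, (0.5+δ)n) tends to 0 as n → ∞. -/
open Set Filter

namespace SPAux

/-- A good family: an `r`-uniform family on `Fin n` in which no two distinct members have
symmetric difference of size two. -/
structure Good (n r : ℕ) (F : Set (Set (Fin n))) : Prop where
  hcard : ∀ S ∈ F, S.ncard = r
  hdist : ∀ S ∈ F, ∀ x ∈ S, ∀ y, y ∉ S → insert y (S \ {x}) ∉ F
  hr1 : 1 ≤ r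
  hrn : r < n

variable {n r : ℕ} {F : Set (Set (Fin n))}

lemma Good.aug (h : Good n r F) : ∀ ⦃I J : Set (Fin n)⦄,
    (I.ncard ≤ r ∧ I ∉ F) → (J.ncard ≤ r ∧ J ∉ F) → I.ncard < J.ncard →
    ∃ e ∈ J, e ∉ I ∧ ((insert e I).ncard ≤ r ∧ insert e I ∉ F) := by
  intro I J hI hJ hlt
  have hJI : ¬ J ⊆ I := fun hs => absurd (Set.ncard_le_ncard hs (I.toFinite)) (by omega)
  obtain ⟨e, heJ, heI⟩ := Set.not_subset.mp hJI
  have hIr : I.ncard + 1 ≤ r := by have := hJ.1; omega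
  by_cases hcase : I.ncard + 1 < r
  · exact ⟨e, heJ, heI, by rw [Set.ncard_insert_of_notMem heI]; omega,
      fun hmem => by have := h.hcard _ hmem; rw [Set.ncard_insert_of_notMem heI] at this; omega⟩
  by_contra hcon
  push_neg at hcon
  have hmem : ∀ e' ∈ J, e' ∉ I → insert e' I ∈ F := fun e' he' hei =>
    hcon e' he' hei (by rw [Set.ncard_insert_of_notMem hei]; omega)
  have huniq : ∀ e1 ∈ J, ∀ e2 ∈ J, e1 ∉ I → e2 ∉ I → e1 = e2 := by
    intro e1 h1 e2 h2 hi1 hi2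
    by_contra hne
    have hS := hmem e1 h1 hi1
    have h2' : e2 ∉ insert e1 I := by simp [hi2, Ne.symm hne, (Ne.symm hne : e2 ≠ e1)]
    have hkey := h.hdist _ hS e1 (Set.mem_insert _ _) e2 h2'
    rw [Set.insert_diff_self_of_notMem hi1] at hkey
    exact hkey (hmem e2 h2 hi2)
  have hJsub : J ⊆ insert e I := by
    intro x hx
    by_cases hxI : x ∈ I
    · exact Set.mem_insert_of_mem _ hxI
    · rw [huniq x hx e heJ hxI heI]; exact Set.mem_insert _ _
  have hJeq : J = insert e I :=
    Set.eq_of_subset_of_ncard_le hJsub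
      (by rw [Set.ncard_insert_of_notMem heI]; omega) (insert e I).toFinite
  exact hJ.2 (hJeq ▸ hmem e heJ heI)

/-- The sparse paving matroid determined by a good family of circuit-hyperplanes. -/
noncomputable def codeM (h : Good n r F) : Matroid (Fin n) :=
  (IndepMatroid.ofFinite (Set.finite_univ (α := Fin n))
    (fun I => I.ncard ≤ r ∧ I ∉ F)
    ⟨by simp, fun hF => by have h0 := h.hcard ∅ hF; rw [Set.ncard_empty] at h0; have := h.hr1; omega⟩
    (fun I J hJ hIJ => ⟨(Set.ncard_le_ncard hIJ J.toFinite).trans hJ.1,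
      fun hIF => hJ.2 (by
        rwa [Set.eq_of_subset_of_ncard_le hIJ
          (hJ.1.trans (h.hcard I hIF).ge) J.toFinite] at hIF)⟩)
    h.aug
    (fun I _ => Set.subset_univ I)).matroid

@[simp] lemma codeM_E (h : Good n r F) : (codeM h).E = Set.univ := rfl

lemma codeM_indep (h : Good n r F) {I : Set (Fin n)} :
    (codeM h).Indep I ↔ I.ncard ≤ r ∧ I ∉ F := by
  simp [codeM]

lemma Good.swap_ncard (h : Good n r F) {S : Set (Fin n)} {x y : Fin n}
    (hS : S.ncard = r) (hx : x ∈ S) (hy : y ∉ S) : (insert y (S \ {x})).ncard = r := by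
  have h1 : (S \ {x}).ncard = r - 1 := by rw [Set.ncard_diff_singleton_of_mem hx, hS]
  have h2 : y ∉ S \ {x} := fun hc => hy hc.1
  rw [Set.ncard_insert_of_notMem h2, h1]
  have := h.hr1
  omega

lemma Good.exists_base_set (h : Good n r F) : ∃ B : Set (Fin n), B.ncard = r ∧ B ∉ F := by
  obtain ⟨t, -, ht⟩ := Finset.exists_subset_card_eq (s := (Finset.univ : Finset (Fin n))) (n := r)
    (by simpa using h.hrn.le)
  by_cases htF : (↑t : Set (Fin n)) ∈ F
  · have hcard : (↑t : Set (Fin n)).ncard = r := by simp [ht]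
    have hne : (↑t : Set (Fin n)).Nonempty := by
      rw [Set.nonempty_iff_ne_empty]
      intro hc; rw [hc] at hcard; simp at hcard; have := h.hr1; omega
    obtain ⟨x, hx⟩ := hne
    have hnuniv : (↑t : Set (Fin n)) ≠ Set.univ := by
      intro hc
      rw [hc, Set.ncard_univ] at hcard
      simp at hcard
      have := h.hrn
      omega
    obtain ⟨y, hy⟩ := Set.ne_univ_iff_exists_notMem _ |>.mp hnuniv
    exact ⟨insert y ((↑t : Set (Fin n)) \ {x}), h.swap_ncard hcard hx hy,
      h.hdist _ htF x hx y hy⟩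
  · exact ⟨↑t, by simp [ht], htF⟩

lemma codeM_base_iff (h : Good n r F) {B : Set (Fin n)} :
    (codeM h).IsBase B ↔ B.ncard = r ∧ B ∉ F := by
  rw [Matroid.isBase_iff_maximal_indep]
  constructor
  · rintro ⟨hBi, hmax⟩
    have hB := (codeM_indep h).mp hBi
    refine ⟨?_, hB.2⟩
    by_contra hne
    have hBlt : B.ncard < r := lt_of_le_of_ne hB.1 hne
    obtain ⟨S, hSr, hSF⟩ := h.exists_base_set
    have hSi : (codeM h).Indep S := (codeM_indep h).mpr ⟨hSr.le, hSF⟩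
    have hlt : B.encard < S.encard := by
      rw [← B.toFinite.cast_ncard_eq, ← S.toFinite.cast_ncard_eq]
      exact_mod_cast (by omega : B.ncard < S.ncard)
    obtain ⟨e, he, hei⟩ := hBi.augment hSi hlt
    have := hmax hei (Set.subset_insert _ _)
    exact he.2 (this (Set.mem_insert _ _))
  · rintro ⟨hcard, hnF⟩
    refine ⟨(codeM_indep h).mpr ⟨hcard.le, hnF⟩, ?_⟩
    intro J hJ hBJ
    have hJc := ((codeM_indep h).mp hJ).1
    exact (Set.eq_of_subset_of_ncard_le hBJ (by omega) J.toFinite).ge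

lemma codeM_sparsePaving (h : Good n r F) : (codeM h).SparsePaving r := by
  constructor
  · obtain ⟨B, hB1, hB2⟩ := h.exists_base_set
    exact ⟨B, (codeM_base_iff h).mpr ⟨hB1, hB2⟩, hB1⟩
  · intro C hCE hCr hCd
    have hCF : C ∈ F := by
      by_contra hc
      exact hCd ((codeM_indep h).mpr ⟨hCr.le, hc⟩)
    have hCne : C.Nonempty := by
      rw [Set.nonempty_iff_ne_empty]
      intro hc; rw [hc] at hCr; simp at hCr; have := h.hr1; omega
    have hdiff_indep : ∀ x ∈ C, (codeM h).Indep (C \ {x}) := by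
      intro x hx
      rw [codeM_indep h]
      have h1 : (C \ {x}).ncard = r - 1 := by rw [Set.ncard_diff_singleton_of_mem hx, hCr]
      exact ⟨by omega, fun hmem => by have := h.hcard _ hmem; have := h.hr1; omega⟩
    have hswap_indep : ∀ x ∈ C, ∀ y, y ∉ C → (codeM h).Indep (insert y (C \ {x})) := by
      intro x hx y hy
      rw [codeM_indep h]
      exact ⟨(h.swap_ncard hCr hx hy).le, h.hdist _ hCF x hx y hy⟩
    refine ⟨⟨hCE, hCd, hdiff_indep⟩, ?_, ?_, ?_⟩
    · -- Flat
      refine ⟨?_, hCE⟩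
      intro I X hIC hIX
      have hIne : I ≠ C := fun h' => hCd (h' ▸ hIC.indep)
      obtain ⟨x, hxC, hxI⟩ := Set.exists_of_ssubset (hIC.subset.ssubset_of_ne hIne)
      have hIeq : I = C \ {x} := by
        refine hIC.eq_of_subset_indep (hdiff_indep x hxC)
          (Set.subset_diff_singleton hIC.subset hxI) Set.diff_subset
      intro y hyX
      by_contra hyC
      have hyI : y ∉ I := fun hyI => hyC (hIC.subset hyI)
      have hins : (codeM h).Indep (insert y I) := by
        rw [hIeq]; exact hswap_indep x hxC y hyC
      have := hIX.eq_of_subset_indep hins (Set.subset_insert _ _)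
        (Set.insert_subset hyX hIX.subset)
      exact hyI (this ▸ Set.mem_insert _ _)
    · -- not spanning
      intro hsp
      obtain ⟨B, hB, hBC⟩ := (Matroid.spanning_iff_exists_isBase_subset hCE).mp hsp
      have hBr := (codeM_base_iff h).mp hB
      have : B = C := Set.eq_of_subset_of_ncard_le hBC (by omega) C.toFinite
      exact hBr.2 (this ▸ hCF)
    · -- insert is spanning
      intro e he
      obtain ⟨x, hx⟩ := hCne
      have heC : e ∉ C := he.2
      have hB : (codeM h).IsBase (insert e (C \ {x})) :=
        (codeM_base_iff h).mpr ⟨h.swap_ncard hCr hx heC, h.hdist _ hCF x hx e heC⟩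
      exact (Matroid.spanning_iff_exists_isBase_subset (Set.subset_univ _)).mpr
        ⟨_, hB, Set.insert_subset_insert Set.diff_subset⟩


section Counting

variable {n r : ℕ}

instance matroidFinite (n : ℕ) : Finite (Matroid (Fin n)) := by
  have hinj : Function.Injective (fun M : Matroid (Fin n) => (M.E, M.IsBase)) := by
    intro M M' hMM
    have hE : M.E = M'.E := congrArg Prod.fst hMM
    have hB : M.IsBase = M'.IsBase := congrArg Prod.snd hMM
    exact Matroid.ext_isBase hE (fun B _ => by rw [hB])
  exact Finite.of_injective _ hinj

lemma base_ncard {M : Matroid (Fin n)} (hM : M.SparsePaving r) {B : Set (Fin n)}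
    (hB : M.IsBase B) : B.ncard = r := by
  obtain ⟨B0, hB0, hB0r⟩ := hM.1
  rw [← hB0r, Set.ncard_def, hB.encard_eq_encard_of_isBase hB0, ← Set.ncard_def]

open Classical in
/-- The family of bases of a matroid, as a finset of `r`-sets. -/
noncomputable def baseFamily (n r : ℕ) (M : Matroid (Fin n)) : Finset (Finset (Fin n)) :=
  (Finset.univ.powersetCard r).filter (fun s => M.IsBase (↑s : Set (Fin n)))

lemma baseFamily_injOn (n r : ℕ) :
    Set.InjOn (baseFamily n r) {M : Matroid (Fin n) | M.E = Set.univ ∧ M.SparsePaving r} := by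
  classical
  intro M hM M' hM' hff
  have key : ∀ (N N' : Matroid (Fin n)), N.SparsePaving r →
      baseFamily n r N = baseFamily n r N' → ∀ B : Set (Fin n), N.IsBase B → N'.IsBase B := by
    intro N N' hsp hf B hB
    have hBr : B.ncard = r := base_ncard hsp hB
    have hmem : B.toFinset ∈ baseFamily n r N := by
      rw [baseFamily, Finset.mem_filter, Finset.mem_powersetCard]
      exact ⟨⟨Finset.subset_univ _, by rw [← Set.ncard_eq_toFinset_card', hBr]⟩,
        by rw [Set.coe_toFinset]; exact hB⟩
    rw [hf] at hmem
    have := (Finset.mem_filter.mp hmem).2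
    rwa [Set.coe_toFinset] at this
  exact Matroid.ext_isBase (hM.1.trans hM'.1.symm)
    (fun B _ => ⟨key M M' hM.2 hff B, key M' M hM'.2 hff.symm B⟩)

lemma card_fixed_rank (n r : ℕ) :
    {M : Matroid (Fin n) | M.E = Set.univ ∧ M.SparsePaving r}.ncard ≤ 2 ^ n.choose r := by
  classical
  have hle := Set.ncard_le_ncard_of_injOn (t := ↑(Finset.univ.powersetCard r :
      Finset (Finset (Fin n))).powerset) (baseFamily n r)
    (fun M _ => Finset.mem_coe.mpr (Finset.mem_powerset.mpr (Finset.filter_subset _ _)))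
    (baseFamily_injOn n r) (Set.toFinite _)
  rwa [Set.ncard_coe_finset, Finset.card_powerset, Finset.card_powersetCard,
    Finset.card_univ, Fintype.card_fin] at hle

lemma ncard_biUnion_le {ι β : Type*} [Finite β] (s : Finset ι) (f : ι → Set β) :
    (⋃ i ∈ s, f i).ncard ≤ ∑ i ∈ s, (f i).ncard := by
  classical
  induction s using Finset.induction_on with
  | empty => simp
  | @insert a s ha ih =>
    rw [Finset.set_biUnion_insert, Finset.sum_insert ha]
    exact (Set.ncard_union_le _ _).trans (by omega)

lemma rank_le_n {M : Matroid (Fin n)} (hM : M.SparsePaving r) : r ≤ n := by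
  obtain ⟨B, hB, hBr⟩ := hM.1
  calc r = B.ncard := hBr.symm
    _ ≤ (Set.univ : Set (Fin n)).ncard := Set.ncard_le_ncard (Set.subset_univ B) Set.finite_univ
    _ = n := by rw [Set.ncard_univ, Nat.card_eq_fintype_card, Fintype.card_fin]

lemma card_bad_le (n m : ℕ) (p : ℕ → Prop) (hp : ∀ r ≤ n, p r → n.choose r ≤ n.choose m) :
    {M : Matroid (Fin n) | M.E = Set.univ ∧ ∃ r : ℕ, M.SparsePaving r ∧ p r}.ncard
      ≤ (n + 1) * 2 ^ n.choose m := by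
  classical
  have hsub : {M : Matroid (Fin n) | M.E = Set.univ ∧ ∃ r : ℕ, M.SparsePaving r ∧ p r}
      ⊆ ⋃ r ∈ Finset.range (n+1),
        {M : Matroid (Fin n) | M.E = Set.univ ∧ M.SparsePaving r ∧ p r} := by
    rintro M ⟨hE, r, hsp, hpr⟩
    have hrn : r ≤ n := rank_le_n hsp
    exact Set.mem_biUnion (Finset.mem_range.mpr (by omega)) ⟨hE, hsp, hpr⟩
  refine (Set.ncard_le_ncard hsub (Set.toFinite _)).trans
    ((ncard_biUnion_le _ _).trans ?_)
  have hbound : ∀ r ∈ Finset.range (n+1),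
      {M : Matroid (Fin n) | M.E = Set.univ ∧ M.SparsePaving r ∧ p r}.ncard
        ≤ 2 ^ n.choose m := by
    intro r hr
    rcases Set.eq_empty_or_nonempty
        {M : Matroid (Fin n) | M.E = Set.univ ∧ M.SparsePaving r ∧ p r} with he | hne
    · rw [he]; simp
    · obtain ⟨M, hME, hMsp, hMp⟩ := hne
      have h1 : n.choose r ≤ n.choose m :=
        hp r (by have := Finset.mem_range.mp hr; omega) hMp
      refine le_trans (le_trans (Set.ncard_le_ncard ?_ (Set.toFinite _))
        (card_fixed_rank n r)) (Nat.pow_le_pow_right (by norm_num) h1)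
      exact fun M hM => ⟨hM.1, hM.2.1⟩
  calc ∑ r ∈ Finset.range (n+1),
        {M : Matroid (Fin n) | M.E = Set.univ ∧ M.SparsePaving r ∧ p r}.ncard
      ≤ ∑ _r ∈ Finset.range (n+1), 2 ^ n.choose m := Finset.sum_le_sum hbound
    _ = (n + 1) * 2 ^ n.choose m := by
        rw [Finset.sum_const, Finset.card_range, smul_eq_mul]

/-- The set family determined by a finset of finsets. -/
def famSet (G : Finset (Finset (Fin n))) : Set (Set (Fin n)) :=
  {S : Set (Fin n) | ∃ s ∈ G, (↑s : Set (Fin n)) = S}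

lemma denom_ge (n r : ℕ) (A : Finset (Finset (Fin n)))
    (hGood : ∀ G : Finset (Finset (Fin n)), G ⊆ A → Good n r (famSet G)) :
    2 ^ A.card ≤ {M : Matroid (Fin n) | M.E = Set.univ ∧ ∃ r' : ℕ, M.SparsePaving r'}.ncard := by
  classical
  set f : Finset (Finset (Fin n)) → Matroid (Fin n) :=
    fun G => if hG : G ⊆ A then codeM (hGood G hG) else Matroid.emptyOn (Fin n) with hf
  have hmaps : ∀ G ∈ (↑A.powerset : Set (Finset (Finset (Fin n)))),
      f G ∈ {M : Matroid (Fin n) | M.E = Set.univ ∧ ∃ r' : ℕ, M.SparsePaving r'} := by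
    intro G hG
    have hGA : G ⊆ A := Finset.mem_powerset.mp (Finset.mem_coe.mp hG)
    rw [hf]
    simp only [dif_pos hGA]
    exact ⟨rfl, r, codeM_sparsePaving (hGood G hGA)⟩
  have hinj : Set.InjOn f (↑A.powerset : Set (Finset (Finset (Fin n)))) := by
    intro G hG G' hG' hfe
    have hGA : G ⊆ A := Finset.mem_powerset.mp (Finset.mem_coe.mp hG)
    have hGA' : G' ⊆ A := Finset.mem_powerset.mp (Finset.mem_coe.mp hG')
    rw [hf] at hfe
    simp only [dif_pos hGA, dif_pos hGA'] at hfe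
    have hind : ∀ I : Set (Fin n),
        (I.ncard ≤ r ∧ I ∉ famSet G) ↔ (I.ncard ≤ r ∧ I ∉ famSet G') := by
      intro I
      rw [← codeM_indep (hGood G hGA), ← codeM_indep (hGood G' hGA'), hfe]
    have hFF : famSet G = famSet G' := by
      ext S
      constructor
      · intro hS
        have hSr : S.ncard = r := (hGood G hGA).hcard S hS
        by_contra hS'
        have := (hind S).mpr ⟨hSr.le, hS'⟩
        exact this.2 hS
      · intro hS
        have hSr : S.ncard = r := (hGood G' hGA').hcard S hS
        by_contra hS'
        have := (hind S).mp ⟨hSr.le, hS'⟩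
        exact this.2 hS
    ext s
    constructor
    · intro hs
      have : (↑s : Set (Fin n)) ∈ famSet G' := hFF ▸ ⟨s, hs, rfl⟩
      obtain ⟨t, ht, hts⟩ := this
      rwa [← Finset.coe_injective hts]
    · intro hs
      have : (↑s : Set (Fin n)) ∈ famSet G := hFF ▸ ⟨s, hs, rfl⟩
      obtain ⟨t, ht, hts⟩ := this
      rwa [← Finset.coe_injective hts]
  have hle := Set.ncard_le_ncard_of_injOn f hmaps hinj (Set.toFinite _)
  rwa [Set.ncard_coe_finset, Finset.card_powerset] at hle

/-- weight of a finset, in `ZMod n`. -/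
def wsum {n : ℕ} (s : Finset (Fin n)) : ZMod n := ∑ x ∈ s, ((x : ℕ) : ZMod n)

lemma exists_class (n : ℕ) (hn : 2 ≤ n) : ∃ A : Finset (Finset (Fin n)),
    (∀ G : Finset (Finset (Fin n)), G ⊆ A → Good n (n / 2) (famSet G)) ∧
    n.choose (n / 2) ≤ n * A.card := by
  classical
  haveI : NeZero n := ⟨by omega⟩
  set T := (Finset.univ.powersetCard (n / 2) : Finset (Finset (Fin n))) with hT
  obtain ⟨c, -, hc⟩ := Finset.exists_max_image (Finset.univ : Finset (ZMod n))
    (fun c => (T.filter (fun s => wsum s = c)).card) ⟨0, Finset.mem_univ 0⟩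
  refine ⟨T.filter (fun s => wsum s = c), ?_, ?_⟩
  · intro G hGA
    have hmemT : ∀ s ∈ G, s ∈ T ∧ wsum s = c := by
      intro s hs
      have := hGA hs
      exact ⟨(Finset.mem_filter.mp this).1, (Finset.mem_filter.mp this).2⟩
    have hcard : ∀ s ∈ G, s.card = n / 2 := by
      intro s hs
      exact (Finset.mem_powersetCard.mp (hmemT s hs).1).2
    refine ⟨?_, ?_, by omega, by omega⟩
    · rintro S ⟨s, hs, rfl⟩
      rw [Set.ncard_coe_finset]
      exact hcard s hs
    · rintro S ⟨s, hs, rfl⟩ x hx y hy hmem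
      obtain ⟨t, ht, hts⟩ := hmem
      have hteq : t = insert y (s.erase x) := by
        apply Finset.coe_injective
        rw [Finset.coe_insert, Finset.coe_erase, hts]
      have hxs : x ∈ s := hx
      have hys : y ∉ s := hy
      have hyerase : y ∉ s.erase x := fun hmem' => hys (Finset.mem_of_mem_erase hmem')
      have hws : wsum s = c := (hmemT s hs).2
      have hwt : wsum t = c := (hmemT t ht).2
      have hsum1 : wsum t = ((y : ℕ) : ZMod n) + wsum (s.erase x) := by
        rw [hteq, wsum, Finset.sum_insert hyerase]; rfl
      have hsum2 : wsum (s.erase x) + ((x : ℕ) : ZMod n) = wsum s :=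
        Finset.sum_erase_add s _ hxs
      have hxy : ((x : ℕ) : ZMod n) = ((y : ℕ) : ZMod n) := by
        have h1 : wsum t + ((x : ℕ) : ZMod n) = ((y : ℕ) : ZMod n) + wsum s := by
          rw [hsum1, ← hsum2]; ring
        rw [hws, hwt] at h1
        linear_combination h1
      have hval : (x : ℕ) = (y : ℕ) := by
        have h1 := congrArg ZMod.val hxy
        rwa [ZMod.val_cast_of_lt x.isLt, ZMod.val_cast_of_lt y.isLt] at h1
      exact hys (by rwa [Fin.val_injective hval] at hxs)
  · have hTsum : T.card = ∑ c' ∈ (Finset.univ : Finset (ZMod n)),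
        (T.filter (fun s => wsum s = c')).card :=
      Finset.card_eq_sum_card_fiberwise (fun x _ => Finset.mem_univ _)
    have hmax : ∑ c' ∈ (Finset.univ : Finset (ZMod n)),
        (T.filter (fun s => wsum s = c')).card
          ≤ (Finset.univ : Finset (ZMod n)).card * (T.filter (fun s => wsum s = c)).card := by
      have := Finset.sum_le_card_nsmul (Finset.univ : Finset (ZMod n))
        (fun c' => (T.filter (fun s => wsum s = c')).card)
        ((T.filter (fun s => wsum s = c)).card) (fun c' _ => hc c' (Finset.mem_univ c'))
      simpa using this
    have hTcard : T.card = n.choose (n / 2) := by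
      rw [hT, Finset.card_powersetCard, Finset.card_univ, Fintype.card_fin]
    have hZcard : (Finset.univ : Finset (ZMod n)).card = n := by
      rw [Finset.card_univ, ZMod.card]
    rw [hZcard] at hmax
    omega

end Counting


section Binomial

lemma choose_mono_half {n a b : ℕ} (hab : a ≤ b) (hb : b ≤ n / 2) :
    n.choose a ≤ n.choose b := by
  obtain ⟨k, rfl⟩ := Nat.exists_eq_add_of_le hab
  clear hab
  induction k with
  | zero => simp
  | succ k ih =>
    have h2 : a + k < n / 2 := by omega
    calc n.choose a ≤ n.choose (a + k) := ih (by omega)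
      _ ≤ n.choose (a + k + 1) := Nat.choose_le_succ_of_lt_half_left h2
      _ = n.choose (a + (k + 1)) := by rw [Nat.add_assoc]

lemma pow_add_le {d g : ℕ} : ∀ j : ℕ, d ^ (j+1) + (j+1) * g * d ^ j ≤ (d + g) ^ (j + 1) := by
  intro j
  induction j with
  | zero => simp
  | succ j ih =>
    have h2 : (d ^ (j+1) + (j+1) * g * d ^ j) * (d + g) ≤ (d + g) ^ (j+1) * (d + g) :=
      Nat.mul_le_mul_right _ ih
    have h3 : d ^ (j+1+1) + (j+1+1) * g * d ^ (j+1)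
        ≤ (d ^ (j+1) + (j+1) * g * d ^ j) * (d + g) := by
      have e3 : (d ^ (j+1) + (j+1) * g * d ^ j) * (d + g)
          = d ^ (j+1+1) + (j+1+1) * g * d ^ (j+1) + (j+1) * (g * g) * d ^ j := by
        have e1 : d ^ (j+1) = d ^ j * d := pow_succ d j
        have e2 : d ^ (j+1+1) = d ^ (j+1) * d := pow_succ d (j+1)
        rw [e2, e1]; ring
      rw [e3]
      exact Nat.le_add_right _ _
    calc d ^ (j+1+1) + (j+1+1) * g * d ^ (j+1)
        ≤ (d ^ (j+1) + (j+1) * g * d ^ j) * (d + g) := h3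
      _ ≤ (d + g) ^ (j+1) * (d + g) := h2
      _ = (d + g) ^ (j+1+1) := (pow_succ _ _).symm

lemma choose_chain (n : ℕ) : ∀ (j a : ℕ), a + j ≤ n / 2 →
    n.choose a * (n + 1 - (a + j)) ^ j ≤ n.choose (a + j) * (n / 2) ^ j := by
  intro j
  induction j with
  | zero => simp
  | succ j ih =>
    intro a h
    have h1 : a + j ≤ n / 2 := by omega
    have ihh := ih a h1
    have hmon : n.choose a * (n + 1 - (a + (j+1))) ^ j ≤ n.choose (a+j) * (n / 2) ^ j :=
      le_trans (Nat.mul_le_mul_left _ (Nat.pow_le_pow_left (by omega) j)) ihh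
    have hρ : n + 1 - (a + (j+1)) = n - (a + j) := by omega
    have hid : n.choose (a+j) * (n - (a+j)) = n.choose (a+j+1) * (a+j+1) :=
      (Nat.choose_succ_right_eq n (a+j)).symm
    calc n.choose a * (n + 1 - (a + (j+1))) ^ (j+1)
        = (n.choose a * (n + 1 - (a + (j+1))) ^ j) * (n - (a+j)) := by rw [hρ]; ring
      _ ≤ (n.choose (a+j) * (n / 2) ^ j) * (n - (a+j)) := Nat.mul_le_mul_right _ hmon
      _ = (n.choose (a+j) * (n - (a+j))) * (n / 2) ^ j := by ring
      _ = (n.choose (a+j+1) * (a+j+1)) * (n / 2) ^ j := by rw [hid]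
      _ ≤ (n.choose (a+j+1) * (n / 2)) * (n / 2) ^ j :=
          Nat.mul_le_mul_right _ (Nat.mul_le_mul_left _ (by omega))
      _ = n.choose (a + (j+1)) * (n / 2) ^ (j+1) := by
          rw [show a + j + 1 = a + (j+1) by omega]; ring

lemma choose_double {n a j : ℕ} (hn : 2 ≤ n) (hj : a + j ≤ n / 2)
    (hg : n / 2 ≤ j * ((n + 1 - (a + j)) - n / 2)) :
    2 * n.choose a ≤ n.choose (a + j) := by
  have hj1 : 1 ≤ j := by
    rcases Nat.eq_zero_or_pos j with h | h
    · subst h; simp at hg; omega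
    · exact h
  set d := n / 2 with hd
  set g := (n + 1 - (a + j)) - d with hgdef
  have hd1 : 1 ≤ d := by omega
  have hρ : n + 1 - (a + j) = d + g := by omega
  have hchain := choose_chain n j a hj
  rw [hρ] at hchain
  obtain ⟨j', rfl⟩ : ∃ j', j = j' + 1 := ⟨j - 1, by omega⟩
  have hbin : d ^ (j'+1) + (j'+1) * g * d ^ j' ≤ (d + g) ^ (j'+1) := pow_add_le j'
  have h2 : 2 * d ^ (j'+1) ≤ (d + g) ^ (j'+1) := by
    have hdg : d * d ^ j' ≤ ((j'+1) * g) * d ^ j' :=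
      Nat.mul_le_mul_right _ (by exact hg)
    have e1 : d ^ (j'+1) = d * d ^ j' := by ring
    have e2 : (j'+1) * g * d ^ j' = ((j'+1) * g) * d ^ j' := by ring
    linarith [hbin]
  have hfin : (2 * n.choose a) * d ^ (j'+1) ≤ n.choose (a+(j'+1)) * d ^ (j'+1) :=
    calc (2 * n.choose a) * d ^ (j'+1) = n.choose a * (2 * d ^ (j'+1)) := by ring
      _ ≤ n.choose a * (d + g) ^ (j'+1) := Nat.mul_le_mul_left _ h2
      _ ≤ n.choose (a+(j'+1)) * d ^ (j'+1) := hchain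
  exact Nat.le_of_mul_le_mul_right hfin (by positivity)

lemma choose_iter {n b j : ℕ} (hn : 2 ≤ n) (hb : b ≤ n / 2)
    (hj : n / 2 ≤ j * ((n + 1 - b) - n / 2)) :
    ∀ (i a : ℕ), a + i * j ≤ b → 2 ^ i * n.choose a ≤ n.choose (a + i * j) := by
  intro i
  induction i with
  | zero => intro a _; simp
  | succ i ih =>
    intro a h
    have hmul : (i+1) * j = i * j + j := by ring
    have h1 : a + i * j ≤ b := by omega
    have hd : 2 * n.choose (a + i * j) ≤ n.choose (a + i * j + j) := by
      apply choose_double hn (by omega)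
      refine le_trans hj (Nat.mul_le_mul_left j (Nat.sub_le_sub_right (by omega) _))
    calc 2 ^ (i+1) * n.choose a = 2 * (2 ^ i * n.choose a) := by ring
      _ ≤ 2 * n.choose (a + i * j) := Nat.mul_le_mul_left _ (ih a h1)
      _ ≤ n.choose (a + i * j + j) := hd
      _ = n.choose (a + (i+1) * j) := by rw [show a + i * j + j = a + (i+1) * j by omega]

lemma cube_le_two_pow (i : ℕ) (hi : 10 ≤ i) : i ^ 3 ≤ 2 ^ i := by
  induction i, hi using Nat.le_induction with
  | base => norm_num
  | succ i hi ih =>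
    have h1 : (i+1) ^ 3 ≤ 2 * i ^ 3 := by
      have ha : 10 * (i * i) ≤ i * (i * i) := Nat.mul_le_mul_right _ hi
      have hb : 10 * i ≤ i * i := Nat.mul_le_mul_right _ hi
      nlinarith [ha, hb, hi]
    calc (i+1) ^ 3 ≤ 2 * i ^ 3 := h1
      _ ≤ 2 * 2 ^ i := by omega
      _ = 2 ^ (i+1) := by ring

lemma growth (n m K : ℕ) (hn : 2 ≤ n) (hK : 2 ≤ K) (hmb : m ≤ n / 2 - (n / K + 1)) :
    2 ^ ((n / 2 - (n / K + 1) - m) / K) * n.choose m ≤ n.choose (n / 2) := by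
  have hKn : n / K ≤ n / 2 := Nat.div_le_div_left hK (by omega)
  have hdm : K * (n / K) + n % K = n := Nat.div_add_mod n K
  have hmod : n % K < K := Nat.mod_lt _ (by omega)
  set q := n / K with hqdef
  set b := n / 2 - (q + 1) with hb
  set i := (b - m) / K with hi
  have hbn : b ≤ n / 2 := Nat.sub_le _ _
  have hsub : q + 1 ≤ (n + 1 - b) - n / 2 := by omega
  have hj : n / 2 ≤ K * ((n + 1 - b) - n / 2) := by
    have he : K * (q + 1) = K * q + K := by ring
    have h1 : n + 1 ≤ K * (q + 1) := by linarith [hdm, hmod, he]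
    calc n / 2 ≤ n + 1 := by omega
      _ ≤ K * (q + 1) := h1
      _ ≤ K * ((n + 1 - b) - n / 2) := Nat.mul_le_mul_left K hsub
  have hiK : i * K ≤ b - m := Nat.div_mul_le_self _ _
  have hmb' : m + i * K ≤ b := by
    have h2 : m + (b - m) = b := by omega
    exact le_of_le_of_eq (Nat.add_le_add_left hiK m) h2
  have hstep := choose_iter hn hbn hj i m hmb'
  exact le_trans hstep (choose_mono_half (hmb'.trans hbn) le_rfl)

end Binomial


section Final

lemma floor_half (n : ℕ) : ⌊(n : ℝ) / 2⌋₊ = n / 2 := by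
  rw [show ((2:ℝ)) = ((2:ℕ):ℝ) by norm_num, Nat.floor_div_natCast, Nat.floor_natCast]

lemma cast_sub_ge (a c : ℕ) : (a : ℝ) - (c : ℝ) ≤ ((a - c : ℕ) : ℝ) := by
  rcases le_total c a with h | h
  · rw [Nat.cast_sub h]
  · have h1 : a - c = 0 := by omega
    have h2 := (Nat.cast_le (α := ℝ)).mpr h
    rw [h1, Nat.cast_zero]
    linarith

lemma cast_half_ge (n : ℕ) : (n : ℝ) / 2 - 1 ≤ ((n / 2 : ℕ) : ℝ) := by
  have h := Nat.div_add_mod n 2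
  have h2 : n % 2 < 2 := Nat.mod_lt _ (by norm_num)
  have hcast : 2 * ((n / 2 : ℕ) : ℝ) + ((n % 2 : ℕ) : ℝ) = (n : ℝ) := by
    exact_mod_cast congrArg (Nat.cast : ℕ → ℝ) h
  have : ((n % 2 : ℕ) : ℝ) < 2 := by exact_mod_cast h2
  linarith

lemma num_le (δ : ℝ) (hδ0 : 0 < δ) (hδ1 : δ ≤ 1/4) (n : ℕ) :
    ({M : Matroid (Fin n) | M.E = Set.univ ∧ ∃ r : ℕ, M.SparsePaving r ∧
        ¬ ((1/2 - δ) * n < (r : ℝ) ∧ (r : ℝ) < (1/2 + δ) * n)}.ncard)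
      ≤ (n + 1) * 2 ^ (n.choose ⌊(1/2 - δ) * (n : ℝ)⌋₊) := by
  apply card_bad_le
  intro r hrn hpr
  set m := ⌊(1/2 - δ) * (n : ℝ)⌋₊ with hm
  have hn0 : (0:ℝ) ≤ (n:ℝ) := Nat.cast_nonneg n
  have hm2 : m ≤ n / 2 := by
    rw [hm, ← floor_half n]
    apply Nat.floor_mono
    nlinarith [mul_nonneg hδ0.le hn0]
  rw [not_and_or] at hpr
  rcases hpr with h | h
  · push_neg at h
    exact choose_mono_half (Nat.le_floor h) hm2
  · push_neg at h
    rw [← Nat.choose_symm hrn]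
    apply choose_mono_half ?_ hm2
    apply Nat.le_floor
    rw [Nat.cast_sub hrn]
    linarith

lemma aux_tendsto : Tendsto (fun n : ℕ => ((n : ℝ) + 1) / 2 ^ n) atTop (nhds 0) := by
  have t1 := tendsto_pow_const_div_const_pow_of_one_lt 1 (one_lt_two (α := ℝ))
  have t2 := tendsto_pow_const_div_const_pow_of_one_lt 0 (one_lt_two (α := ℝ))
  have := t1.add t2
  rw [add_zero] at this
  refine this.congr (fun n => ?_)
  simp only [pow_one, pow_zero]
  rw [← add_div]

lemma mainAux (δ : ℝ) (hδ0 : 0 < δ) (hδ1 : δ ≤ 1/4) :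
    Tendsto
      (fun n : ℕ =>
        (({M : Matroid (Fin n) | M.E = Set.univ ∧ ∃ r : ℕ, M.SparsePaving r ∧
            ¬ ((1 / 2 - δ) * n < (r : ℝ) ∧ (r : ℝ) < (1 / 2 + δ) * n)}.ncard : ℝ) /
          ({M : Matroid (Fin n) | M.E = Set.univ ∧ ∃ r : ℕ, M.SparsePaving r}.ncard : ℝ)))
      atTop (nhds 0) := by
  classical
  set K : ℕ := ⌈8 / δ⌉₊ with hKdef
  have hK8 : 8 / δ ≤ (K : ℝ) := Nat.le_ceil _
  have hKd : 8 ≤ δ * K := by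
    rw [div_le_iff₀ hδ0] at hK8
    linarith
  have hK2 : 2 ≤ K := by
    have h1 : (2:ℝ) ≤ 8 / δ := by
      rw [le_div_iff₀ hδ0]; linarith
    have h2 : (2:ℝ) ≤ (K : ℝ) := le_trans h1 hK8
    exact_mod_cast h2
  have hK0 : (0:ℝ) < (K : ℝ) := by positivity
  set T : ℕ := 10 + 2 * K ^ 4 with hTdef
  -- eventual facts
  have hevδ : Tendsto (fun n : ℕ => δ * n) atTop atTop :=
    (tendsto_natCast_atTop_atTop (R := ℝ)).const_mul_atTop hδ0
  have hevn : Tendsto (fun n : ℕ => (n : ℝ)) atTop atTop := tendsto_natCast_atTop_atTop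
  have hevA : ∀ᶠ n : ℕ in atTop, 8 * ((K:ℝ) * ((T:ℝ) + 1)) + 32 ≤ δ * n :=
    hevδ.eventually_ge_atTop _
  have hevB : ∀ᶠ n : ℕ in atTop, (K:ℝ) * K + 2 * K ≤ 6 * n := by
    have := (hevn.const_mul_atTop (show (0:ℝ) < 6 by norm_num)).eventually_ge_atTop
      ((K:ℝ) * K + 2 * K)
    exact this
  have hevC : ∀ᶠ n : ℕ in atTop, 2 ≤ n := eventually_ge_atTop 2
  have hmain : ∀ᶠ n : ℕ in atTop,
      (({M : Matroid (Fin n) | M.E = Set.univ ∧ ∃ r : ℕ, M.SparsePaving r ∧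
          ¬ ((1 / 2 - δ) * n < (r : ℝ) ∧ (r : ℝ) < (1 / 2 + δ) * n)}.ncard : ℝ) /
        ({M : Matroid (Fin n) | M.E = Set.univ ∧ ∃ r : ℕ, M.SparsePaving r}.ncard : ℝ))
        ≤ ((n : ℝ) + 1) / 2 ^ n := by
    filter_upwards [hevA, hevB, hevC] with n hA' hB' hn2
    set m : ℕ := ⌊(1/2 - δ) * (n : ℝ)⌋₊ with hmdef
    set b : ℕ := n / 2 - (n / K + 1) with hbdef
    set i : ℕ := (b - m) / K with hidef
    have hn0 : (0:ℝ) ≤ (n:ℝ) := Nat.cast_nonneg n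
    -- real bounds on b and m
    have hbK : ((n / K : ℕ) : ℝ) ≤ δ * n / 8 := by
      have h1 : ((n / K : ℕ) : ℝ) ≤ (n : ℝ) / K := Nat.cast_div_le
      have h2 : (n : ℝ) / K ≤ δ * n / 8 := by
        rw [div_le_div_iff₀ hK0 (by norm_num)]
        nlinarith
      linarith
    have hb_lb : (n : ℝ) / 2 - δ * n / 8 - 2 ≤ (b : ℝ) := by
      have h1 := cast_sub_ge (n / 2) (n / K + 1)
      have h2 := cast_half_ge n
      have h3 : (((n / K + 1) : ℕ) : ℝ) = ((n / K : ℕ) : ℝ) + 1 := by push_cast; ring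
      rw [hbdef]
      calc (n : ℝ) / 2 - δ * n / 8 - 2
          ≤ ((n / 2 : ℕ) : ℝ) - (((n / K + 1) : ℕ) : ℝ) := by rw [h3]; linarith
        _ ≤ _ := h1
    have hm_ub : (m : ℝ) ≤ (1/2 - δ) * n :=
      Nat.floor_le (mul_nonneg (by linarith) hn0)
    -- F1
    have hF1 : m + K * (T + 1) ≤ b := by
      have : ((m + K * (T + 1) : ℕ) : ℝ) ≤ (b : ℝ) := by
        push_cast
        linarith
      exact_mod_cast this
    have hmb : m ≤ b := le_trans (Nat.le_add_right _ _) hF1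
    -- F2'
    have hF2 : n + K * K ≤ K * (b - m) := by
      have hcast : ((b - m : ℕ) : ℝ) = (b : ℝ) - m := Nat.cast_sub hmb
      have hgap : (7/8) * (δ * n) - 2 ≤ ((b - m : ℕ) : ℝ) := by
        rw [hcast]; linarith
      have hKdn : 8 * (n:ℝ) ≤ δ * K * n := by nlinarith
      have : ((n + K * K : ℕ) : ℝ) ≤ ((K * (b - m) : ℕ) : ℝ) := by
        push_cast
        nlinarith [mul_le_mul_of_nonneg_left hgap (le_of_lt hK0), hKdn, hB']
      exact_mod_cast this
    -- nat facts about i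
    have hdm : K * i + (b - m) % K = b - m := by rw [hidef]; exact Nat.div_add_mod _ _
    have hmodK : (b - m) % K < K := Nat.mod_lt _ (by omega)
    have hiT : T + 1 ≤ i := by
      rw [hidef]
      rw [Nat.le_div_iff_mul_le (by omega : 0 < K)]
      calc (T + 1) * K = K * (T + 1) := by ring
        _ ≤ b - m := by
            set u := K * (T + 1) with hu
            omega
    have hnKi : n ≤ K * K * i := by
      have e1 : K * (b - m) = K * (K * i) + K * ((b - m) % K) := by
        conv_lhs => rw [← hdm]
        ring
      have e2 : K * ((b - m) % K) ≤ K * K := Nat.mul_le_mul_left K hmodK.le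
      have e3 : K * (K * i) = K * K * i := by ring
      linarith
    have h2pow : n + n * n ≤ 2 ^ i := by
      have hc1 : i ^ 3 ≤ 2 ^ i := cube_le_two_pow i (by
        have hT10 : 10 ≤ T := Nat.le_add_right 10 (2 * K ^ 4) |>.trans_eq (by rw [hTdef])
        omega)
      have p1 : n * n ≤ (K * K * i) * (K * K * i) := Nat.mul_le_mul hnKi hnKi
      have p2 : 2 * ((K * K * i) * (K * K * i)) = (2 * (K * K * (K * K))) * (i * i) := by ring
      have p3 : 2 * (K * K * (K * K)) ≤ i := by
        have e4 : K ^ 4 = K * K * (K * K) := by ring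
        have hT : T = 10 + 2 * (K * K * (K * K)) := by rw [hTdef, e4]
        clear hTdef hidef hdm
        set v := K * K * (K * K) with hv
        omega
      have p4 : (2 * (K * K * (K * K))) * (i * i) ≤ i * (i * i) :=
        Nat.mul_le_mul_right _ p3
      have p5 : i * (i * i) = i ^ 3 := by ring
      have p0 : n ≤ n * n := Nat.le_mul_of_pos_left n (by omega)
      linarith
    -- key cardinality inequality
    have hm2 : m ≤ n / 2 := le_trans hmb (hbdef ▸ Nat.sub_le _ _)
    have hmn : m ≤ n := le_trans hm2 (Nat.div_le_self n 2)
    have hCpos : 1 ≤ n.choose m := Nat.choose_pos hmn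
    have hgrow : 2 ^ i * n.choose m ≤ n.choose (n / 2) := by
      have := growth n m K hn2 hK2 (hbdef ▸ hmb)
      rw [← hbdef, ← hidef] at this
      exact this
    obtain ⟨A, hGood, hAcard⟩ := exists_class n hn2
    have hden : 2 ^ A.card ≤
        {M : Matroid (Fin n) | M.E = Set.univ ∧ ∃ r' : ℕ, M.SparsePaving r'}.ncard :=
      denom_ge n (n / 2) A hGood
    have hkey : n.choose m + n ≤ A.card := by
      have q1 : (n + n * n) * n.choose m ≤ 2 ^ i * n.choose m :=
        Nat.mul_le_mul_right _ h2pow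
      have q4 : n * n.choose m + n * n ≤ (n + n * n) * n.choose m := by
        have e5 : (n + n * n) * n.choose m = n * n.choose m + (n * n) * n.choose m := by ring
        have e6 : n * n ≤ (n * n) * n.choose m := Nat.le_mul_of_pos_right _ (by omega)
        linarith
      have q5 : n * (n.choose m + n) = n * n.choose m + n * n := by ring
      have : n * (n.choose m + n) ≤ n * A.card := by linarith
      exact Nat.le_of_mul_le_mul_left this (by omega)
    -- final real computation
    have hnum := num_le δ hδ0 hδ1 n
    rw [← hmdef] at hnum
    have hdenN : 2 ^ (n.choose m + n) ≤
        {M : Matroid (Fin n) | M.E = Set.univ ∧ ∃ r' : ℕ, M.SparsePaving r'}.ncard :=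
      le_trans (Nat.pow_le_pow_right (by norm_num) hkey) hden
    have hD0 : (0:ℕ) < {M : Matroid (Fin n) | M.E = Set.univ ∧ ∃ r' : ℕ, M.SparsePaving r'}.ncard :=
      lt_of_lt_of_le (Nat.pow_pos (by norm_num)) hdenN
    have hDR : ((2:ℝ) ^ n.choose m * 2 ^ n) ≤
        (({M : Matroid (Fin n) | M.E = Set.univ ∧ ∃ r' : ℕ, M.SparsePaving r'}.ncard : ℕ) : ℝ) := by
      rw [← pow_add]
      exact_mod_cast hdenN
    have hNR : (({M : Matroid (Fin n) | M.E = Set.univ ∧ ∃ r : ℕ, M.SparsePaving r ∧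
        ¬ ((1 / 2 - δ) * n < (r : ℝ) ∧ (r : ℝ) < (1 / 2 + δ) * n)}.ncard : ℕ) : ℝ)
          ≤ ((n : ℝ) + 1) * 2 ^ n.choose m := by
      have := hnum
      have h1 : (({M : Matroid (Fin n) | M.E = Set.univ ∧ ∃ r : ℕ, M.SparsePaving r ∧
          ¬ ((1 / 2 - δ) * n < (r : ℝ) ∧ (r : ℝ) < (1 / 2 + δ) * n)}.ncard : ℕ) : ℝ)
            ≤ (((n + 1) * 2 ^ n.choose m : ℕ) : ℝ) := Nat.cast_le.mpr this
      push_cast at h1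
      exact h1
    calc (({M : Matroid (Fin n) | M.E = Set.univ ∧ ∃ r : ℕ, M.SparsePaving r ∧
            ¬ ((1 / 2 - δ) * n < (r : ℝ) ∧ (r : ℝ) < (1 / 2 + δ) * n)}.ncard : ℝ) /
          ({M : Matroid (Fin n) | M.E = Set.univ ∧ ∃ r : ℕ, M.SparsePaving r}.ncard : ℝ))
        ≤ (((n : ℝ) + 1) * 2 ^ n.choose m) / ((2:ℝ) ^ n.choose m * 2 ^ n) := by
          apply div_le_div₀ (by positivity) hNR (by positivity) hDR
      _ = ((n : ℝ) + 1) / 2 ^ n := by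
          rw [mul_comm ((n : ℝ) + 1) _, mul_div_mul_left _ _ (by positivity : ((2:ℝ) ^ n.choose m) ≠ 0)]
  refine tendsto_of_tendsto_of_tendsto_of_le_of_le' tendsto_const_nhds aux_tendsto ?_ hmain
  exact Eventually.of_forall (fun n => div_nonneg (Nat.cast_nonneg _) (Nat.cast_nonneg _))

end Final

end SPAux

/-- For every `0 < δ ≤ 1`, the proportion of sparse paving matroids on `{1,...,n}` whose rank
lies outside the interval `((0.5-δ)n, (0.5+δ)n)` tends to `0` as `n → ∞`. -/
theorem sparsePaving_rank_concentration (δ : ℝ) (hδ0 : 0 < δ) (hδ1 : δ ≤ 1) :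
    Tendsto
      (fun n : ℕ =>
        (({M : Matroid (Fin n) | M.E = Set.univ ∧ ∃ r : ℕ, M.SparsePaving r ∧
            ¬ ((1 / 2 - δ) * n < (r : ℝ) ∧ (r : ℝ) < (1 / 2 + δ) * n)}.ncard : ℝ) /
          ({M : Matroid (Fin n) | M.E = Set.univ ∧ ∃ r : ℕ, M.SparsePaving r}.ncard : ℝ)))
      atTop (nhds 0) := by
  rcases le_or_gt δ (1/4) with hδ4 | hδ4
  · exact SPAux.mainAux δ hδ0 hδ4
  · have hmain := SPAux.mainAux (1/4) (by norm_num) (le_refl _)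
    refine tendsto_of_tendsto_of_tendsto_of_le_of_le' tendsto_const_nhds hmain
      (Eventually.of_forall fun n => div_nonneg (Nat.cast_nonneg _) (Nat.cast_nonneg _))
      (Eventually.of_forall fun n => ?_)
    have hsub : {M : Matroid (Fin n) | M.E = Set.univ ∧ ∃ r : ℕ, M.SparsePaving r ∧
        ¬ ((1 / 2 - δ) * n < (r : ℝ) ∧ (r : ℝ) < (1 / 2 + δ) * n)}
        ⊆ {M : Matroid (Fin n) | M.E = Set.univ ∧ ∃ r : ℕ, M.SparsePaving r ∧
        ¬ ((1 / 2 - 1/4) * n < (r : ℝ) ∧ (r : ℝ) < (1 / 2 + 1/4) * n)} := by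
      rintro M ⟨hE, r, hsp, hbad⟩
      have hn0 : (0:ℝ) ≤ (n:ℝ) := Nat.cast_nonneg n
      refine ⟨hE, r, hsp, fun hcontra => hbad ⟨?_, ?_⟩⟩
      · nlinarith [hcontra.1]
      · nlinarith [hcontra.2]
    have hle : (({M : Matroid (Fin n) | M.E = Set.univ ∧ ∃ r : ℕ, M.SparsePaving r ∧
        ¬ ((1 / 2 - δ) * n < (r : ℝ) ∧ (r : ℝ) < (1 / 2 + δ) * n)}.ncard : ℕ) : ℝ)
          ≤ (({M : Matroid (Fin n) | M.E = Set.univ ∧ ∃ r : ℕ, M.SparsePaving r ∧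
        ¬ ((1 / 2 - 1/4) * n < (r : ℝ) ∧ (r : ℝ) < (1 / 2 + 1/4) * n)}.ncard : ℕ) : ℝ) :=
      Nat.cast_le.mpr (Set.ncard_le_ncard hsub (Set.toFinite _))
    rcases eq_or_lt_of_le ((Nat.cast_nonneg
        ({M : Matroid (Fin n) | M.E = Set.univ ∧ ∃ r : ℕ, M.SparsePaving r}.ncard)) :
        (0:ℝ) ≤ _) with hd0 | hpos
    · rw [← hd0, div_zero, div_zero]
    · exact (div_le_div_iff_of_pos_right hpos).mpr hle
end

section
/- Let J be a finite set and let <' be a fixed choice function assigning to each subset I ⊆ J a distinguished superset m'(I) ⊆ J with I ⊆ m'(I), satisfying: I ⊆ I' ⊆ m'(I) implies m'(I') = m'(I). Define A_r = {I ⊆ J : |I| = r, m'(I) ≠ J}. Then the shadow ∂A_r is contained in A_{r-1}, and consequently, by the local LYM inequality, for r < s the probability (over a uniformly random r-subset I of J) that m'(I) = J is at most the probability over a uniformly random s-subset that m'(I) = J. -/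
open Finset

private lemma step_lemma {α : Type*} [DecidableEq α]
    (J : Finset α) (m' : Finset α → Finset α)
    (hcanon : ∀ I I', I ⊆ J → I ⊆ I' → I' ⊆ m' I → m' I' = m' I)
    (k : ℕ) (hk : k + 1 ≤ J.card) :
    (((J.powersetCard k).filter (fun I => m' I = J)).card : ℝ) /
        ((J.powersetCard k).card : ℝ) ≤
      (((J.powersetCard (k+1)).filter (fun I => m' I = J)).card : ℝ) /
        ((J.powersetCard (k+1)).card : ℝ) := by
  classical
  set n := J.card with hn
  set G : ℕ → Finset (Finset α) := fun j => (J.powersetCard j).filter (fun I => m' I = J) with hG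
  have hup : ∀ I S : Finset α, I ⊆ J → m' I = J → I ⊆ S → S ⊆ J → m' S = J := by
    intro I S hIJ hmI hIS hSJ
    rw [hcanon I S hIJ hIS (by rw [hmI]; exact hSJ), hmI]
  have hfiber : ∀ I ∈ G k, ((G (k+1)).filter (fun S => I ⊆ S)).card = n - k := by
    intro I hI
    simp only [hG, mem_filter, mem_powersetCard] at hI
    obtain ⟨⟨hIJ, hIc⟩, hmI⟩ := hI
    have heq : (G (k+1)).filter (fun S => I ⊆ S) = (J \ I).image (fun i => insert i I) := by
      ext S
      simp only [hG, mem_filter, mem_powersetCard, mem_image, mem_sdiff]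
      constructor
      · rintro ⟨⟨⟨hSJ, hSc⟩, hmS⟩, hIS⟩
        obtain ⟨i, hi⟩ : ∃ i, S \ I = {i} := by
          rw [← card_eq_one, card_sdiff_of_subset hIS, hSc, hIc]; omega
        have hiS : i ∈ S ∧ i ∉ I := by
          have := hi ▸ mem_singleton_self i
          exact mem_sdiff.mp (hi ▸ mem_singleton_self i)
        refine ⟨i, ⟨hSJ hiS.1, hiS.2⟩, ?_⟩
        have : I ∪ (S \ I) = S := union_sdiff_of_subset hIS
        rw [hi] at this
        rw [← this, union_comm]
        rw [insert_eq]
      · rintro ⟨i, ⟨hiJ, hiI⟩, rfl⟩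
        have hins : insert i I ⊆ J := insert_subset hiJ hIJ
        exact ⟨⟨⟨hins, by rw [card_insert_of_notMem hiI, hIc]⟩,
          hup I _ hIJ hmI (subset_insert _ _) hins⟩, subset_insert _ _⟩
    rw [heq, card_image_of_injOn, card_sdiff_of_subset hIJ, hIc]
    intro i hi j hj hij
    have hij' : insert i I = insert j I := hij
    have : i ∈ insert j I := hij' ▸ mem_insert_self i I
    rcases mem_insert.mp this with h | h
    · exact h
    · exact absurd h (mem_sdiff.mp hi).2
  have key : (G k).card * (n - k) ≤ (G (k+1)).card * (k+1) := by
    calc (G k).card * (n - k)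
        = ∑ I ∈ G k, ((G (k+1)).filter (fun S => I ⊆ S)).card := by
          rw [Finset.sum_congr rfl hfiber, sum_const, smul_eq_mul]
      _ = ∑ I ∈ G k, ∑ S ∈ G (k+1), if I ⊆ S then 1 else 0 :=
          Finset.sum_congr rfl fun I _ => Finset.card_filter _ _
      _ = ∑ S ∈ G (k+1), ∑ I ∈ G k, if I ⊆ S then 1 else 0 := Finset.sum_comm
      _ = ∑ S ∈ G (k+1), ((G k).filter (fun I => I ⊆ S)).card :=
          Finset.sum_congr rfl fun S _ => (Finset.card_filter _ _).symm
      _ ≤ ∑ S ∈ G (k+1), (k+1) := by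
          apply Finset.sum_le_sum
          intro S hS
          simp only [hG, mem_filter, mem_powersetCard] at hS
          have hsubS : (G k).filter (fun I => I ⊆ S) ⊆ S.powersetCard k := by
            intro I hI
            simp only [hG, mem_filter, mem_powersetCard] at hI ⊢
            exact ⟨hI.2, hI.1.1.2⟩
          calc ((G k).filter (fun I => I ⊆ S)).card ≤ (S.powersetCard k).card :=
                card_le_card hsubS
            _ = (k+1).choose k := by rw [card_powersetCard, hS.1.2]
            _ = k + 1 := Nat.choose_succ_self_right k
      _ = (G (k+1)).card * (k+1) := by rw [sum_const, smul_eq_mul]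
  have keyN : (G k).card * n.choose (k+1) ≤ (G (k+1)).card * n.choose k := by
    apply Nat.le_of_mul_le_mul_right _ (Nat.succ_pos k)
    calc (G k).card * n.choose (k+1) * (k+1)
        = (G k).card * (n.choose (k+1) * (k+1)) := by ring
      _ = (G k).card * (n.choose k * (n - k)) := by rw [Nat.choose_succ_right_eq]
      _ = (G k).card * (n - k) * n.choose k := by ring
      _ ≤ (G (k+1)).card * (k+1) * n.choose k := Nat.mul_le_mul_right _ key
      _ = (G (k+1)).card * n.choose k * (k+1) := by ring
  have h1 : (0:ℝ) < (n.choose k : ℝ) := by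
    exact_mod_cast Nat.choose_pos (by omega)
  have h2 : (0:ℝ) < (n.choose (k+1) : ℝ) := by
    exact_mod_cast Nat.choose_pos hk
  rw [card_powersetCard, card_powersetCard, ← hn, div_le_div_iff₀ h1 h2]
  exact_mod_cast keyN

/-- Let `J` be a finite set and `m'` a canonical-maximal-extension operator on subsets of `J`:
`I ⊆ m'(I) ⊆ J`, and `I ⊆ I' ⊆ m'(I)` implies `m'(I') = m'(I)`. Let
`A_r = {I ⊆ J : |I| = r, m'(I) ≠ J}`. Then the shadow `∂A_r` is contained in `A_{r-1}`, and
consequently for `r < s` the probability (over a uniformly random `r`-subset `I` of `J`) that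
`m'(I) = J` is at most the corresponding probability for a uniformly random `s`-subset. -/
theorem canonical_extension_shadow_and_monotonicity {α : Type*} [DecidableEq α]
    (J : Finset α) (m' : Finset α → Finset α)
    (hsub : ∀ I, I ⊆ J → I ⊆ m' I ∧ m' I ⊆ J)
    (hcanon : ∀ I I', I ⊆ J → I ⊆ I' → I' ⊆ m' I → m' I' = m' I)
    (r s : ℕ) (hr : 1 ≤ r) (hrs : r < s) (hs : s ≤ J.card) :
    (∀ B : Finset α, B.card = r - 1 →
        (∃ i, i ∉ B ∧ insert i B ∈ (J.powersetCard r).filter (fun I => m' I ≠ J)) →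
        B ∈ (J.powersetCard (r - 1)).filter (fun I => m' I ≠ J)) ∧
      ((((J.powersetCard r).filter (fun I => m' I = J)).card : ℝ) /
          ((J.powersetCard r).card : ℝ) ≤
        (((J.powersetCard s).filter (fun I => m' I = J)).card : ℝ) /
          ((J.powersetCard s).card : ℝ)) := by
  constructor
  · rintro B hB ⟨i, hiB, hins⟩
    simp only [mem_filter, mem_powersetCard] at hins ⊢
    obtain ⟨⟨hinsJ, hinsc⟩, hmne⟩ := hins
    have hBJ : B ⊆ J := (subset_insert i B).trans hinsJ
    refine ⟨⟨hBJ, hB⟩, ?_⟩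
    intro hmB
    exact hmne (by rw [hcanon B (insert i B) hBJ (subset_insert i B)
      (by rw [hmB]; exact hinsJ), hmB])
  · have main : ∀ t, r + 1 ≤ t → t ≤ J.card →
        (((J.powersetCard r).filter (fun I => m' I = J)).card : ℝ) /
            ((J.powersetCard r).card : ℝ) ≤
          (((J.powersetCard t).filter (fun I => m' I = J)).card : ℝ) /
            ((J.powersetCard t).card : ℝ) := by
      intro t ht
      induction t, ht using Nat.le_induction with
      | base => exact fun h => step_lemma J m' hcanon r h
      | succ t ht ih =>
        intro h
        exact (ih (by omega)).trans (step_lemma J m' hcanon t h)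
    exact main s hrs hs
end

section
/- For all sufficiently large n: every collection F of 10-subsets of {1,...,n}, pairwise intersecting in at most 8 elements, with |F| ≥ (1/9)·(1/n)·C(n,10), contains three sets C = {a1,...,a10}, C' = {a1,...,a8, b, c}, and C'' = {a1,...,a7, a9, b, d} with b, c, d ∉ C and c ≠ d. -/
open Finset

section WhirlAux

variable {n : ℕ}

private lemma three_elt_struct {x : Finset (Fin n)} {p q : Fin n}
    (h3 : x.card = 3) (hp : p ∈ x) (hq : q ∈ x) (hpq : p ≠ q) :
    ∃ t, t ≠ p ∧ t ≠ q ∧ x = {p, q, t} := by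
  have hsub : ({p, q} : Finset (Fin n)) ⊆ x := by
    intro w hw
    rcases mem_insert.1 hw with rfl | hw
    · exact hp
    · exact (mem_singleton.1 hw) ▸ hq
  have hcard2 : ({p, q} : Finset (Fin n)).card = 2 := card_pair hpq
  have h1 : (x \ {p, q}).card = 1 := by
    rw [card_sdiff_of_subset hsub, h3, hcard2]
  obtain ⟨t, ht⟩ := card_eq_one.1 h1
  have htmem : t ∈ x \ ({p, q} : Finset (Fin n)) := ht ▸ mem_singleton_self t
  have htx : t ∈ x := (mem_sdiff.1 htmem).1
  have htpq : t ∉ ({p, q} : Finset (Fin n)) := (mem_sdiff.1 htmem).2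
  refine ⟨t, fun h => htpq (by simp [h]), fun h => htpq (by simp [h]), ?_⟩
  apply Subset.antisymm
  · intro w hw
    by_cases hwp : w = p
    · simp [hwp]
    by_cases hwq : w = q
    · simp [hwq]
    have hws : w ∈ x \ ({p, q} : Finset (Fin n)) :=
      mem_sdiff.2 ⟨hw, by simp [hwp, hwq]⟩
    rw [ht] at hws
    simp [mem_singleton.1 hws]
  · intro w hw
    rcases mem_insert.1 hw with rfl | hw
    · exact hp
    rcases mem_insert.1 hw with rfl | hw
    · exact hq
    · exact (mem_singleton.1 hw) ▸ htx

private lemma embed_aux {U : Finset (Fin n)} (hU : U.card = 7) {p q t : Fin n}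
    (hp : p ∉ U) (hq : q ∉ U) (ht : t ∉ U)
    (hpq : p ≠ q) (htp : t ≠ p) (htq : t ≠ q) :
    ∃ a : Fin 10 ↪ Fin n,
      Finset.univ.map a = U ∪ {p, q, t} ∧
      ((Finset.univ.filter (fun i : Fin 10 => i.val < 8)).map a) = U ∪ {p} ∧
      ((Finset.univ.filter (fun i : Fin 10 => i.val < 7 ∨ i.val = 8)).map a) = U ∪ {q} := by
  classical
  have hUcard : Fintype.card {x // x ∈ U} = 7 := by
    rw [Fintype.card_coe, hU]
  obtain eqv := Fintype.equivFinOfCardEq hUcard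
  set uu : Fin 7 → Fin n := fun i => (eqv.symm i : Fin n) with huu
  have huU : ∀ i, uu i ∈ U := fun i => (eqv.symm i).2
  have huinj : Function.Injective uu := fun i j h =>
    eqv.symm.injective (Subtype.coe_injective h)
  have husurj : ∀ w ∈ U, ∃ i : Fin 7, uu i = w := by
    intro w hw
    exact ⟨eqv ⟨w, hw⟩, by simp [huu]⟩
  set g : Fin 10 → Fin n := fun i =>
    if h : (i : ℕ) < 7 then uu ⟨(i : ℕ), h⟩
    else if (i : ℕ) = 7 then p else if (i : ℕ) = 8 then q else t with hg
  have hglt : ∀ (i : Fin 10) (h : (i : ℕ) < 7), g i = uu ⟨(i : ℕ), h⟩ := by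
    intro i h; simp only [hg]; rw [dif_pos h]
  have hchar : ∀ k : Fin 10,
      (∃ h : (k : ℕ) < 7, g k = uu ⟨(k : ℕ), h⟩) ∨ ((k : ℕ) = 7 ∧ g k = p) ∨
      ((k : ℕ) = 8 ∧ g k = q) ∨ ((k : ℕ) = 9 ∧ g k = t) := by
    intro k
    by_cases h7 : (k : ℕ) < 7
    · exact Or.inl ⟨h7, hglt k h7⟩
    by_cases h8 : (k : ℕ) = 7
    · refine Or.inr (Or.inl ⟨h8, ?_⟩)
      simp only [hg]; rw [dif_neg h7, if_pos h8]
    by_cases h9 : (k : ℕ) = 8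
    · refine Or.inr (Or.inr (Or.inl ⟨h9, ?_⟩))
      simp only [hg]; rw [dif_neg h7, if_neg h8, if_pos h9]
    · refine Or.inr (Or.inr (Or.inr ⟨by omega, ?_⟩))
      simp only [hg]; rw [dif_neg h7, if_neg h8, if_neg h9]
  have hgU : ∀ (k : Fin 10), (k : ℕ) < 7 → g k ∈ U := by
    intro k h; rw [hglt k h]; exact huU _
  have hginj : Function.Injective g := by
    intro i j hij
    rcases hchar i with ⟨hi, hgi⟩ | ⟨hi, hgi⟩ | ⟨hi, hgi⟩ | ⟨hi, hgi⟩ <;>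
      rcases hchar j with ⟨hj, hgj⟩ | ⟨hj, hgj⟩ | ⟨hj, hgj⟩ | ⟨hj, hgj⟩
    · rw [hgi, hgj] at hij
      have := congrArg Fin.val (huinj hij)
      simp only at this
      exact Fin.ext this
    · exact absurd (show p ∈ U by rw [← hgj, ← hij]; exact hgU i hi) hp
    · exact absurd (show q ∈ U by rw [← hgj, ← hij]; exact hgU i hi) hq
    · exact absurd (show t ∈ U by rw [← hgj, ← hij]; exact hgU i hi) ht
    · exact absurd (show p ∈ U by rw [← hgi, hij]; exact hgU j hj) hp
    · exact Fin.ext (by omega)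
    · exact absurd (show p = q by rw [← hgi, hij, hgj]) hpq
    · exact absurd (show t = p by rw [← hgj, ← hij, hgi]) htp
    · exact absurd (show q ∈ U by rw [← hgi, hij]; exact hgU j hj) hq
    · exact absurd (show p = q by rw [← hgj, ← hij, hgi]) hpq
    · exact Fin.ext (by omega)
    · exact absurd (show t = q by rw [← hgj, ← hij, hgi]) htq
    · exact absurd (show t ∈ U by rw [← hgi, hij]; exact hgU j hj) ht
    · exact absurd (show t = p by rw [← hgi, hij, hgj]) htp
    · exact absurd (show t = q by rw [← hgi, hij, hgj]) htq
    · exact Fin.ext (by omega)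
  refine ⟨⟨g, hginj⟩, ?_, ?_, ?_⟩
  · ext w
    simp only [mem_map, mem_univ, true_and, Function.Embedding.coeFn_mk, mem_union,
      mem_insert, mem_singleton]
    constructor
    · rintro ⟨i, rfl⟩
      rcases hchar i with ⟨hi, hgi⟩ | ⟨hi, hgi⟩ | ⟨hi, hgi⟩ | ⟨hi, hgi⟩
      · exact Or.inl (by rw [hgi]; exact huU _)
      · exact Or.inr (Or.inl hgi)
      · exact Or.inr (Or.inr (Or.inl hgi))
      · exact Or.inr (Or.inr (Or.inr hgi))
    · rintro (hw | hw | hw | hw)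
      · obtain ⟨i, hi⟩ := husurj w hw
        refine ⟨⟨(i : ℕ), by omega⟩, ?_⟩
        rw [hglt _ (i.isLt)]
        exact hi
      · exact ⟨⟨7, by norm_num⟩, by rw [hw]; simp only [hg]; norm_num⟩
      · exact ⟨⟨8, by norm_num⟩, by rw [hw]; simp only [hg]; norm_num⟩
      · exact ⟨⟨9, by norm_num⟩, by rw [hw]; simp only [hg]; norm_num⟩
  · ext w
    simp only [mem_map, mem_filter, mem_univ, true_and, Function.Embedding.coeFn_mk,
      mem_union, mem_singleton]
    constructor
    · rintro ⟨i, hi8, rfl⟩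
      rcases hchar i with ⟨hi, hgi⟩ | ⟨hi, hgi⟩ | ⟨hi, hgi⟩ | ⟨hi, hgi⟩
      · exact Or.inl (by rw [hgi]; exact huU _)
      · exact Or.inr hgi
      · omega
      · omega
    · rintro (hw | hw)
      · obtain ⟨i, hi⟩ := husurj w hw
        refine ⟨⟨(i : ℕ), by omega⟩, by simp; omega, ?_⟩
        rw [hglt _ (i.isLt)]
        exact hi
      · exact ⟨⟨7, by norm_num⟩, by norm_num, by rw [hw]; simp only [hg]; norm_num⟩
  · ext w
    simp only [mem_map, mem_filter, mem_univ, true_and, Function.Embedding.coeFn_mk,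
      mem_union, mem_singleton]
    constructor
    · rintro ⟨i, hi78, rfl⟩
      rcases hchar i with ⟨hi, hgi⟩ | ⟨hi, hgi⟩ | ⟨hi, hgi⟩ | ⟨hi, hgi⟩
      · exact Or.inl (by rw [hgi]; exact huU _)
      · omega
      · exact Or.inr hgi
      · omega
    · rintro (hw | hw)
      · obtain ⟨i, hi⟩ := husurj w hw
        refine ⟨⟨(i : ℕ), by omega⟩, Or.inl i.isLt, ?_⟩
        rw [hglt _ (i.isLt)]
        exact hi
      · exact ⟨⟨8, by norm_num⟩, by norm_num, by rw [hw]; simp only [hg]; norm_num⟩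

end WhirlAux

section WhirlAux2

open Finset
variable {n : ℕ}

private lemma whirl_of_triangle {F : Finset (Finset (Fin n))}
    {U x y z : Finset (Fin n)} {p q r : Fin n}
    (hU : U.card = 7)
    (hxU : ∀ w ∈ x, w ∉ U) (hyU : ∀ w ∈ y, w ∉ U) (hzU : ∀ w ∈ z, w ∉ U)
    (hx3 : x.card = 3) (hy3 : y.card = 3) (hz3 : z.card = 3)
    (hxy : x ∩ y = {p}) (hxz : x ∩ z = {q}) (hyz : y ∩ z = {r})
    (hpq : p ≠ q) (hpr : p ≠ r) (hqr : q ≠ r)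
    (hCx : U ∪ x ∈ F) (hCy : U ∪ y ∈ F) (hCz : U ∪ z ∈ F) :
    ∃ (a : Fin 10 ↪ Fin n) (b c d : Fin n),
      b ∉ (Finset.univ.map a) ∧ c ∉ (Finset.univ.map a) ∧ d ∉ (Finset.univ.map a) ∧
      c ≠ d ∧
      (Finset.univ.map a) ∈ F ∧
      (((Finset.univ.filter (fun i : Fin 10 => i.val < 8)).map a) ∪ {b, c}) ∈ F ∧
      (((Finset.univ.filter (fun i : Fin 10 => i.val < 7 ∨ i.val = 8)).map a) ∪ {b, d})
        ∈ F := by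
  have hpx : p ∈ x := (mem_inter.1 (hxy ▸ mem_singleton_self p)).1
  have hpy : p ∈ y := (mem_inter.1 (hxy ▸ mem_singleton_self p)).2
  have hqx : q ∈ x := (mem_inter.1 (hxz ▸ mem_singleton_self q)).1
  have hqz : q ∈ z := (mem_inter.1 (hxz ▸ mem_singleton_self q)).2
  have hry : r ∈ y := (mem_inter.1 (hyz ▸ mem_singleton_self r)).1
  have hrz : r ∈ z := (mem_inter.1 (hyz ▸ mem_singleton_self r)).2
  obtain ⟨t, htp, htq, hxe⟩ := three_elt_struct hx3 hpx hqx hpq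
  obtain ⟨c, hcp, hcr, hye⟩ := three_elt_struct hy3 hpy hry hpr
  obtain ⟨d, hdq, hdr, hze⟩ := three_elt_struct hz3 hqz hrz hqr
  have htx : t ∈ x := by rw [hxe]; simp
  have hcy : c ∈ y := by rw [hye]; simp
  have hdz : d ∈ z := by rw [hze]; simp
  obtain ⟨a, ha1, ha2, ha3⟩ :=
    embed_aux hU (hxU p hpx) (hxU q hqx) (hxU t htx) hpq htp htq
  -- t ∉ y and t ∉ z
  have htny : t ∉ y := fun h => htp (mem_singleton.1 (hxy ▸ mem_inter.2 ⟨htx, h⟩))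
  have htnz : t ∉ z := fun h => htq (mem_singleton.1 (hxz ▸ mem_inter.2 ⟨htx, h⟩))
  refine ⟨a, r, c, d, ?_, ?_, ?_, ?_, ?_, ?_, ?_⟩
  · rw [ha1]
    intro hmem
    rcases mem_union.1 hmem with hmem | hmem
    · exact hyU r hry hmem
    rcases mem_insert.1 hmem with rfl | hmem
    · exact hpr rfl
    rcases mem_insert.1 hmem with rfl | hmem
    · exact hqr rfl
    · exact htny ((mem_singleton.1 hmem) ▸ hry)
  · rw [ha1]
    intro hmem
    rcases mem_union.1 hmem with hmem | hmem
    · exact hyU c hcy hmem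
    rcases mem_insert.1 hmem with rfl | hmem
    · exact hcp rfl
    rcases mem_insert.1 hmem with rfl | hmem
    · exact hpq (mem_singleton.1 (hxy ▸ mem_inter.2 ⟨hqx, hcy⟩)).symm
    · exact htny ((mem_singleton.1 hmem) ▸ hcy)
  · rw [ha1]
    intro hmem
    rcases mem_union.1 hmem with hmem | hmem
    · exact hzU d hdz hmem
    rcases mem_insert.1 hmem with rfl | hmem
    · exact hpq (mem_singleton.1 (hxz ▸ mem_inter.2 ⟨hpx, hdz⟩))
    rcases mem_insert.1 hmem with rfl | hmem
    · exact hdq rfl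
    · exact htnz ((mem_singleton.1 hmem) ▸ hdz)
  · intro h
    exact hcr (mem_singleton.1 (hyz ▸ mem_inter.2 ⟨hcy, h ▸ hdz⟩))
  · rw [ha1, ← hxe]; exact hCx
  · rw [ha2]
    have hun : (U ∪ {p}) ∪ ({r, c} : Finset (Fin n)) = U ∪ y := by
      rw [hye]; ext w; simp only [mem_union, mem_insert, mem_singleton]; tauto
    rw [hun]; exact hCy
  · rw [ha3]
    have hun : (U ∪ {q}) ∪ ({r, d} : Finset (Fin n)) = U ∪ z := by
      rw [hze]; ext w; simp only [mem_union, mem_insert, mem_singleton]; tauto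
    rw [hun]; exact hCz

private lemma choose_ident (n : ℕ) :
    720 * n.choose 10 = n.choose 7 * ((n - 7) * ((n - 8) * (n - 9))) := by
  have h8 := Nat.choose_succ_right_eq n 7
  have h9 := Nat.choose_succ_right_eq n 8
  have h10 := Nat.choose_succ_right_eq n 9
  calc 720 * n.choose 10 = 72 * (n.choose 10 * 10) := by ring
    _ = 72 * (n.choose 9 * (n - 9)) := by rw [h10]
    _ = 8 * (n.choose 9 * 9) * (n - 9) := by ring
    _ = 8 * (n.choose 8 * (n - 8)) * (n - 9) := by rw [h9]
    _ = (n.choose 8 * 8) * ((n - 8) * (n - 9)) := by ring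
    _ = (n.choose 7 * (n - 7)) * ((n - 8) * (n - 9)) := by rw [h8]
    _ = n.choose 7 * ((n - 7) * ((n - 8) * (n - 9))) := by ring

private lemma link_linear {F : Finset (Finset (Fin n))}
    (hstab : ∀ A ∈ F, ∀ B ∈ F, A ≠ B → (A ∩ B).card ≤ 8)
    {U A B : Finset (Fin n)} (hU : U.card = 7) (hA : A ∈ F) (hB : B ∈ F) (hAB : A ≠ B)
    (hUA : U ⊆ A) (hUB : U ⊆ B) : ((A \ U) ∩ (B \ U)).card ≤ 1 := by
  have h1 : (A \ U) ∩ (B \ U) = (A ∩ B) \ U := by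
    ext w; simp only [mem_inter, mem_sdiff]; tauto
  have h2 := hstab A hA B hB hAB
  rw [h1, card_sdiff_of_subset (subset_inter hUA hUB), hU]
  omega

end WhirlAux2

set_option maxHeartbeats 1000000 in
/-- For all sufficiently large `n`: every family `F` of `10`-subsets of `{1,...,n}` pairwise
intersecting in at most `8` elements with `|F| ≥ (1/9)·(1/n)·C(n,10)` contains three sets
`C = {a₁,...,a₁₀}`, `C' = {a₁,...,a₈,b,c}` and `C'' = {a₁,...,a₇,a₉,b,d}` with
`b, c, d ∉ C` and `c ≠ d`. -/
theorem whirl_configuration_forced :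
    ∃ N : ℕ, ∀ n : ℕ, N ≤ n →
      ∀ F : Finset (Finset (Fin n)),
        (∀ C ∈ F, C.card = 10) →
        (∀ A ∈ F, ∀ B ∈ F, A ≠ B → (A ∩ B).card ≤ 8) →
        (1 / 9 : ℝ) * (1 / (n : ℝ)) * (n.choose 10) ≤ (F.card : ℝ) →
        ∃ (a : Fin 10 ↪ Fin n) (b c d : Fin n),
          b ∉ (Finset.univ.map a) ∧ c ∉ (Finset.univ.map a) ∧ d ∉ (Finset.univ.map a) ∧
          c ≠ d ∧
          (Finset.univ.map a) ∈ F ∧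
          (((Finset.univ.filter (fun i : Fin 10 => i.val < 8)).map a) ∪ {b, c}) ∈ F ∧
          (((Finset.univ.filter (fun i : Fin 10 => i.val < 7 ∨ i.val = 8)).map a) ∪ {b, d})
            ∈ F := by
  classical
  obtain ⟨N₀, hN₀⟩ := exists_nat_gt (1 / SimpleGraph.triangleRemovalBound (1/100 : ℝ))
  have hbpos : 0 < SimpleGraph.triangleRemovalBound (1/100 : ℝ) :=
    SimpleGraph.triangleRemovalBound_pos (by norm_num)
  refine ⟨max 100 N₀, fun n hn F hcard hstab hsize => ?_⟩
  have hn100 : 100 ≤ n := le_trans (le_max_left _ _) hn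
  have hnN₀ : N₀ ≤ n := le_trans (le_max_right _ _) hn
  by_contra hno
  -- Step 1 : find a 7-set U contained in many members of F
  set P7 := (Finset.univ : Finset (Fin n)).powersetCard 7 with hP7
  have hP7card : P7.card = n.choose 7 := by
    rw [hP7, card_powersetCard, card_univ, Fintype.card_fin]
  have key_sum : ∑ V ∈ P7, (F.filter (fun C => V ⊆ C)).card = 120 * F.card := by
    calc ∑ V ∈ P7, (F.filter (fun C => V ⊆ C)).card
        = ∑ V ∈ P7, ∑ C ∈ F, if V ⊆ C then 1 else 0 := by
          refine sum_congr rfl fun V _ => ?_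
          exact card_filter _ _
      _ = ∑ C ∈ F, ∑ V ∈ P7, if V ⊆ C then 1 else 0 := Finset.sum_comm
      _ = ∑ C ∈ F, (P7.filter (fun V => V ⊆ C)).card := by
          refine sum_congr rfl fun C _ => ?_
          exact (card_filter _ _).symm
      _ = ∑ C ∈ F, 120 := by
          refine sum_congr rfl fun C hC => ?_
          have hPC : P7.filter (fun V => V ⊆ C) = C.powersetCard 7 := by
            ext V
            simp only [mem_filter, hP7, mem_powersetCard, subset_univ, true_and]
            tauto
          rw [hPC, card_powersetCard, hcard C hC]
          decide
      _ = 120 * F.card := by rw [sum_const, smul_eq_mul, mul_comm]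
  have hP7ne : P7.Nonempty := by
    obtain ⟨V, hVsub, hVcard⟩ := Finset.exists_subset_card_eq
      (s := (Finset.univ : Finset (Fin n))) (n := 7) (by rw [card_univ, Fintype.card_fin]; omega)
    exact ⟨V, by rw [hP7, mem_powersetCard]; exact ⟨hVsub, hVcard⟩⟩
  obtain ⟨U, hUP7, hUmax⟩ :=
    Finset.exists_max_image P7 (fun V => (F.filter (fun C => V ⊆ C)).card) hP7ne
  have hU7 : U.card = 7 := (mem_powersetCard.1 (hP7 ▸ hUP7)).2
  set FU := F.filter (fun C => U ⊆ C) with hFU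
  set M := FU.card with hM
  have hsum_le : 120 * F.card ≤ n.choose 7 * M := by
    rw [← key_sum, ← hP7card]
    calc ∑ V ∈ P7, (F.filter (fun C => V ⊆ C)).card
        ≤ ∑ _V ∈ P7, M := sum_le_sum fun V hV => hUmax V hV
      _ = P7.card * M := by rw [sum_const, smul_eq_mul]
  -- Step 2 : numeric lower bound on M
  have hn0 : (0 : ℝ) < (n : ℝ) := by
    have : (0:ℕ) < n := by omega
    exact_mod_cast this
  have hc7pos : (0 : ℝ) < (n.choose 7 : ℝ) := by
    have := Nat.choose_pos (show 7 ≤ n by omega)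
    exact_mod_cast this
  have hch : (n.choose 7 : ℝ) * (((n:ℝ) - 7) * (((n:ℝ) - 8) * ((n:ℝ) - 9)))
      = 720 * (n.choose 10 : ℝ) := by
    have h := congrArg (fun m : ℕ => (m : ℝ)) (choose_ident n)
    push_cast [Nat.cast_sub (show (7:ℕ) ≤ n by omega),
      Nat.cast_sub (show (8:ℕ) ≤ n by omega),
      Nat.cast_sub (show (9:ℕ) ≤ n by omega)] at h
    linarith
  have hFc : (n.choose 10 : ℝ) ≤ 9 * n * F.card := by
    have h1 : (1/9 : ℝ) * (1/(n:ℝ)) * (n.choose 10) = (n.choose 10 : ℝ)/(9*n) := by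
      ring
    rw [h1] at hsize
    have h3 := (div_le_iff₀ (by positivity : (0:ℝ) < 9*(n:ℝ))).1 hsize
    linarith
  have hsum_leR : (120 : ℝ) * F.card ≤ (n.choose 7 : ℝ) * M := by exact_mod_cast hsum_le
  have hA54 : ((n:ℝ) - 7) * (((n:ℝ) - 8) * ((n:ℝ) - 9)) ≤ 54 * n * M := by
    have h5 : (n.choose 7 : ℝ) * (((n:ℝ)-7) * (((n:ℝ)-8)*((n:ℝ)-9)))
        ≤ (n.choose 7 : ℝ) * (54 * n * M) := by
      rw [hch]
      calc (720:ℝ) * (n.choose 10) ≤ 720 * (9 * n * F.card) := by linarith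
        _ = 54 * n * (120 * F.card) := by ring
        _ ≤ 54 * n * ((n.choose 7:ℝ) * M) :=
            mul_le_mul_of_nonneg_left hsum_leR (by positivity)
        _ = (n.choose 7 : ℝ) * (54 * n * M) := by ring
    exact le_of_mul_le_mul_left h5 hc7pos
  have hn100R : (100 : ℝ) ≤ (n:ℝ) := by exact_mod_cast hn100
  have hMge : ((n:ℝ)^2)/100 ≤ (M:ℝ) := by
    by_contra hlt
    push_neg at hlt
    have h1 : 54 * (n:ℝ) * M < 54 * n * ((n:ℝ)^2/100) :=
      mul_lt_mul_of_pos_left hlt (by positivity)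
    have h2 : ((n:ℝ)-7) * (((n:ℝ)-8)*((n:ℝ)-9)) < 54 * n * ((n:ℝ)^2/100) :=
      lt_of_le_of_lt hA54 h1
    nlinarith [mul_nonneg (mul_nonneg (sub_nonneg.2 hn100R) hn0.le) hn0.le,
      mul_nonneg (sub_nonneg.2 hn100R) hn0.le]
  -- Step 3 : the link of U
  set L := FU.image (fun C => C \ U) with hL
  have hmemL : ∀ e ∈ L, ∃ C, C ∈ F ∧ U ⊆ C ∧ C \ U = e := by
    intro e he
    obtain ⟨C, hC, hCe⟩ := mem_image.1 he
    exact ⟨C, (mem_filter.1 hC).1, (mem_filter.1 hC).2, hCe⟩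
  have hL3 : ∀ e ∈ L, e.card = 3 := by
    intro e he
    obtain ⟨C, hCF, hUC, rfl⟩ := hmemL e he
    rw [card_sdiff_of_subset hUC, hcard C hCF, hU7]
  have hLU : ∀ e ∈ L, ∀ w ∈ e, w ∉ U := by
    intro e he w hw
    obtain ⟨C, hCF, hUC, rfl⟩ := hmemL e he
    exact (mem_sdiff.1 hw).2
  have hLF : ∀ e ∈ L, U ∪ e ∈ F := by
    intro e he
    obtain ⟨C, hCF, hUC, rfl⟩ := hmemL e he
    rw [union_sdiff_of_subset hUC]; exact hCF
  have hLcard : L.card = M := by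
    rw [hL, hM]
    apply card_image_of_injOn
    intro A hA B hB hAB
    dsimp only at hAB
    have hUA : U ⊆ A := (mem_filter.1 hA).2
    have hUB : U ⊆ B := (mem_filter.1 hB).2
    rw [← union_sdiff_of_subset hUA, ← union_sdiff_of_subset hUB, hAB]
  have hLlin : ∀ e ∈ L, ∀ f ∈ L, e ≠ f → (e ∩ f).card ≤ 1 := by
    intro e he f hf hef
    obtain ⟨A, hAF, hUA, rfl⟩ := hmemL e he
    obtain ⟨B, hBF, hUB, rfl⟩ := hmemL f hf
    exact link_linear hstab hU7 hAF hBF (fun h => hef (by rw [h])) hUA hUB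
  -- Step 4 : the graph of covered pairs
  let G : SimpleGraph (Fin n) :=
    { Adj := fun a b => a ≠ b ∧ ∃ e ∈ L, a ∈ e ∧ b ∈ e
      symm := ⟨by rintro a b ⟨hab, e, he, ha, hb⟩; exact ⟨hab.symm, e, he, hb, ha⟩⟩
      loopless := ⟨by rintro a ⟨ha, -⟩; exact ha rfl⟩ }
  haveI : DecidableRel G.Adj := Classical.decRel _
  have hGadj : ∀ a b : Fin n, G.Adj a b ↔ (a ≠ b ∧ ∃ e ∈ L, a ∈ e ∧ b ∈ e) :=
    fun a b => Iff.rfl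
  have hinter_singleton : ∀ e ∈ L, ∀ f ∈ L, e ≠ f →
      ∀ v : Fin n, v ∈ e → v ∈ f → e ∩ f = {v} := by
    intro e he f hf hef v hv hvf
    refine (eq_of_subset_of_card_le
      (singleton_subset_iff.2 (mem_inter.2 ⟨hv, hvf⟩)) ?_).symm
    rw [card_singleton]; exact hLlin e he f hf hef
  have htri : G.cliqueFinset 3 ⊆ L := by
    intro T hT
    have hT' := SimpleGraph.mem_cliqueFinset_iff.1 hT
    have hTcard : T.card = 3 := hT'.card_eq
    obtain ⟨u, v, w, huv, huw, hvw, hTe⟩ := card_eq_three.1 hTcard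
    have huT : u ∈ T := by rw [hTe]; simp
    have hvT : v ∈ T := by rw [hTe]; simp
    have hwT : w ∈ T := by rw [hTe]; simp
    have hadj : ∀ a b : Fin n, a ∈ T → b ∈ T → a ≠ b → ∃ e ∈ L, a ∈ e ∧ b ∈ e := by
      intro a b ha hb hab
      exact ((hGadj a b).1 (hT'.isClique (Finset.mem_coe.2 ha) (Finset.mem_coe.2 hb) hab)).2
    obtain ⟨e₁, he₁, hue₁, hve₁⟩ := hadj u v huT hvT huv
    obtain ⟨e₂, he₂, hve₂, hwe₂⟩ := hadj v w hvT hwT hvw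
    obtain ⟨e₃, he₃, hue₃, hwe₃⟩ := hadj u w huT hwT huw
    have hTsub : ∀ e ∈ L, u ∈ e → v ∈ e → w ∈ e → T ∈ L := by
      intro e he hu hv hw
      have hTe' : T = e := by
        apply eq_of_subset_of_card_le
        · rw [hTe]
          exact insert_subset_iff.2 ⟨hu, insert_subset_iff.2 ⟨hv, singleton_subset_iff.2 hw⟩⟩
        · rw [hL3 e he, hTcard]
      rw [hTe']; exact he
    by_cases h12 : e₁ = e₂
    · exact hTsub e₁ he₁ hue₁ hve₁ (h12 ▸ hwe₂)
    by_cases h13 : e₁ = e₃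
    · exact hTsub e₁ he₁ hue₁ hve₁ (h13 ▸ hwe₃)
    by_cases h23 : e₂ = e₃
    · exact hTsub e₂ he₂ (h23 ▸ hue₃) hve₂ hwe₂
    · exact absurd (whirl_of_triangle hU7 (hLU e₁ he₁) (hLU e₃ he₃) (hLU e₂ he₂)
        (hL3 e₁ he₁) (hL3 e₃ he₃) (hL3 e₂ he₂)
        (hinter_singleton e₁ he₁ e₃ he₃ h13 u hue₁ hue₃)
        (hinter_singleton e₁ he₁ e₂ he₂ h12 v hve₁ hve₂)
        (hinter_singleton e₃ he₃ e₂ he₂ (fun h => h23 h.symm) w hwe₃ hwe₂)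
        huv huw hvw (hLF e₁ he₁) (hLF e₃ he₃) (hLF e₂ he₂)) hno
  -- Step 5 : L is small
  have hLle2 : L.card ≤ n.choose 2 := by
    have hinj2 : L.card ≤ ((Finset.univ : Finset (Fin n)).powersetCard 2).card := by
      apply card_le_card_of_injOn
        (fun e => if h : e.Nonempty then e.erase (e.max' h) else ∅)
      · intro e he
        have h3 := hL3 e he
        have hne : e.Nonempty := card_pos.1 (by omega)
        show (if h : e.Nonempty then e.erase (e.max' h) else ∅) ∈
          (Finset.univ : Finset (Fin n)).powersetCard 2
        rw [dif_pos hne, mem_powersetCard]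
        refine ⟨subset_univ _, ?_⟩
        rw [card_erase_of_mem (max'_mem e hne), h3]
      · intro e he f hf hef
        have hene : e.Nonempty := card_pos.1 (by rw [hL3 e (Finset.mem_coe.1 he)]; omega)
        have hfne : f.Nonempty := card_pos.1 (by rw [hL3 f (Finset.mem_coe.1 hf)]; omega)
        dsimp only at hef
        rw [dif_pos hene, dif_pos hfne] at hef
        by_contra hne
        have hsub : e.erase (e.max' hene) ⊆ e ∩ f := by
          intro x hx
          refine mem_inter.2 ⟨erase_subset _ _ hx, ?_⟩
          rw [hef] at hx
          exact erase_subset _ _ hx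
        have h2 : 2 ≤ (e ∩ f).card := by
          have := card_le_card hsub
          rwa [card_erase_of_mem (max'_mem e hene), hL3 e (Finset.mem_coe.1 he)] at this
        have := hLlin e (Finset.mem_coe.1 he) f (Finset.mem_coe.1 hf) hne
        omega
    calc L.card ≤ _ := hinj2
      _ = n.choose 2 := by rw [card_powersetCard, card_univ, Fintype.card_fin]
  -- Step 6 : few triangles, so G is not far from triangle-free
  have hclq : ((G.cliqueFinset 3).card : ℝ) ≤ (n:ℝ)^2 := by
    have h1 : (G.cliqueFinset 3).card ≤ n.choose 2 :=
      le_trans (card_le_card htri) hLle2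
    have h2 : n.choose 2 ≤ n^2 := by
      calc n.choose 2 = n*(n-1)/2 := Nat.choose_two_right n
        _ ≤ n*(n-1) := Nat.div_le_self _ _
        _ ≤ n*n := Nat.mul_le_mul_left n (Nat.sub_le n 1)
        _ = n^2 := (sq n).symm
    exact_mod_cast le_trans h1 h2
  have hnotfar : ¬ G.FarFromTriangleFree (1/100 : ℝ) := by
    intro hfar
    have h1 := hfar.le_card_cliqueFinset
    rw [Fintype.card_fin] at h1
    have h2 : (1:ℝ) < SimpleGraph.triangleRemovalBound (1/100:ℝ) * n := by
      have h3 : (1:ℝ)/SimpleGraph.triangleRemovalBound (1/100:ℝ) < N₀ := hN₀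
      have h4 : (N₀:ℝ) ≤ n := by exact_mod_cast hnN₀
      rw [div_lt_iff₀ hbpos] at h3
      have h5 := mul_le_mul_of_nonneg_left h4 hbpos.le
      linarith
    have h6 := mul_lt_mul_of_pos_left h2 (mul_pos hn0 hn0)
    nlinarith [hclq, h1, h6]
  -- Step 7 : extract a small edge set whose removal kills the triangles
  rw [SimpleGraph.FarFromTriangleFree, SimpleGraph.DeleteFar] at hnotfar
  push_neg at hnotfar
  obtain ⟨s, hs_sub, hs_free, hs_lt⟩ := hnotfar
  have hs_lt' : ((s.card : ℝ)) < (n:ℝ)^2/100 := by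
    push_cast [Fintype.card_fin] at hs_lt
    linarith
  -- Step 8 : injection from L into s
  have hmapsto : ∀ e ∈ L, ∃ m ∈ s, ∃ u v : Fin n,
      u ∈ e ∧ v ∈ e ∧ u ≠ v ∧ m = s(u, v) := by
    intro e he
    by_contra hcon
    push_neg at hcon
    apply hs_free e
    refine ⟨fun a ha b hb hab => ?_, hL3 e he⟩
    rw [SimpleGraph.deleteEdges_adj]
    refine ⟨(hGadj a b).2 ⟨hab, e, he, Finset.mem_coe.1 ha, Finset.mem_coe.1 hb⟩, ?_⟩
    intro hmem
    exact hcon s(a,b) (Finset.mem_coe.1 hmem) a b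
      (Finset.mem_coe.1 ha) (Finset.mem_coe.1 hb) hab rfl
  have hfun : ∀ e : Finset (Fin n), ∃ m : Sym2 (Fin n),
      e ∈ L → m ∈ s ∧ ∃ u v : Fin n, u ∈ e ∧ v ∈ e ∧ u ≠ v ∧ m = s(u, v) := by
    intro e
    by_cases he : e ∈ L
    · obtain ⟨m, hm, hrest⟩ := hmapsto e he
      exact ⟨m, fun _ => ⟨hm, hrest⟩⟩
    · exact ⟨s(⟨0, by omega⟩, ⟨0, by omega⟩), fun h => absurd h he⟩
  choose φ hφ using hfun
  have hcardLS : L.card ≤ s.card := by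
    apply card_le_card_of_injOn φ (fun e he => (hφ e he).1)
    intro e he f hf hef
    obtain ⟨hms, u, v, hue, hve, huv, hm⟩ := hφ e (Finset.mem_coe.1 he)
    obtain ⟨hms', u', v', hue', hve', huv', hm'⟩ := hφ f (Finset.mem_coe.1 hf)
    by_contra hne
    have hpair : s(u, v) = s(u', v') := by rw [← hm, ← hm', hef]
    have h2 : ({u, v} : Finset (Fin n)) ⊆ e ∩ f := by
      intro a ha
      rcases mem_insert.1 ha with rfl | ha
      · refine mem_inter.2 ⟨hue, ?_⟩
        rcases Sym2.eq_iff.1 hpair with ⟨h1, _⟩ | ⟨h1, _⟩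
        · rw [h1]; exact hue'
        · rw [h1]; exact hve'
      · rw [mem_singleton.1 ha]
        refine mem_inter.2 ⟨hve, ?_⟩
        rcases Sym2.eq_iff.1 hpair with ⟨_, h1⟩ | ⟨_, h1⟩
        · rw [h1]; exact hve'
        · rw [h1]; exact hue'
    have h3 : 2 ≤ (e ∩ f).card := by
      have := card_le_card h2
      rwa [card_pair huv] at this
    have := hLlin e (Finset.mem_coe.1 he) f (Finset.mem_coe.1 hf) hne
    omega
  -- Final contradiction
  have hMs : (M:ℝ) ≤ (s.card : ℝ) := by exact_mod_cast (hLcard ▸ hcardLS)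
  linarith
end

section
/- Polychromatic subset lemma: Let r ≥ 1 and m ≥ r. There exists n(m,r) such that for every set X with |X| > n(m,r) and every coloring c of the r-subsets of X with the property that any two r-subsets intersecting in exactly r-1 elements receive different colors, there is a subset X' ⊆ X with |X'| = m such that all r-subsets of X' receive pairwise distinct colors. -/
open Finset

private lemma list_mem_take_of_indexOf_lt {α : Type} [DecidableEq α] {l : List α} {x : α}
    (hx : x ∈ l) : ∀ {i : ℕ}, l.idxOf x < i → x ∈ l.take i := by
  induction l with
  | nil => simp at hx
  | cons a tl ih =>
    intro i hi
    cases i with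
    | zero => omega
    | succ i =>
      by_cases hxa : x = a
      · simp [hxa, List.take_succ_cons]
      · have hx' : x ∈ tl := by simpa [hxa] using hx
        have : tl.idxOf x < i := by
          rw [List.idxOf_cons_ne _ (by simpa using (Ne.symm hxa))] at hi
          omega
        simp [List.take_succ_cons, ih hx' this]

private lemma list_mem_drop_of_le_indexOf {α : Type} [DecidableEq α] {l : List α} {x : α}
    (hx : x ∈ l) : ∀ {i : ℕ}, i ≤ l.idxOf x → x ∈ l.drop i := by
  induction l with
  | nil => simp at hx
  | cons a tl ih =>
    intro i hi
    cases i with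
    | zero => simpa using hx
    | succ i =>
      by_cases hxa : x = a
      · simp [hxa] at hi
      · have hx' : x ∈ tl := by simpa [hxa] using hx
        have : i ≤ tl.idxOf x := by
          rw [List.idxOf_cons_ne _ (by simpa using (Ne.symm hxa))] at hi
          omega
        simpa [List.drop_succ_cons] using ih hx' this

section Ramsey

variable {γ : Type} [Fintype γ] [DecidableEq γ]

/-- Bound for the pre-homogeneous sequence construction. -/
def ramseyBound (k r : ℕ) : ℕ → ℕ → ℕ
  | 0, _ => 0
  | t + 1, f => k ^ (f.choose r) * (ramseyBound k r t (f + 1) + 1)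

/-- Pigeonhole step. -/
lemma pigeon_step {α : Type} [DecidableEq α] (r : ℕ) (c : Finset α → γ) (F X : Finset α)
    (n : ℕ) (h : Fintype.card γ ^ (F.card.choose r) * n ≤ X.card) :
    ∃ X' ⊆ X, n ≤ X'.card ∧
      ∀ S ∈ F.powersetCard r, ∀ y ∈ X', ∀ y' ∈ X', c (insert y S) = c (insert y' S) := by
  haveI : Nonempty γ := ⟨c ∅⟩
  set φ : α → (↥(F.powersetCard r) → γ) := fun y S => c (insert y S.1) with hφ
  have hcard : (univ : Finset (↥(F.powersetCard r) → γ)).card * n ≤ X.card := by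
    rw [card_univ, Fintype.card_fun, Fintype.card_coe, card_powersetCard]
    exact h
  obtain ⟨b, -, hb⟩ := exists_le_card_fiber_of_mul_le_card_of_maps_to
    (f := φ) (t := univ) (fun a _ => mem_univ _) univ_nonempty hcard
  refine ⟨X.filter (fun y => φ y = b), filter_subset _ _, hb, ?_⟩
  intro S hS y hy y' hy'
  have h1 : φ y = b := (mem_filter.1 hy).2
  have h2 : φ y' = b := (mem_filter.1 hy').2
  have : φ y ⟨S, hS⟩ = φ y' ⟨S, hS⟩ := by rw [h1, h2]
  simpa [hφ] using this

/-- Pre-homogeneous sequence construction. -/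
lemma presequence (r t : ℕ) : ∀ (f : ℕ) (α : Type) [DecidableEq α] (c : Finset α → γ)
    (F X : Finset α), F.card = f → Disjoint F X →
    ramseyBound (Fintype.card γ) r t f ≤ X.card →
    ∃ l : List α, l.length = t ∧ l.Nodup ∧ (∀ x ∈ l, x ∈ X) ∧
      ∀ (i : ℕ) (S : Finset α), S.card = r → S ⊆ F ∪ (l.take i).toFinset →
        ∀ y ∈ l.drop i, ∀ y' ∈ l.drop i, c (insert y S) = c (insert y' S) := by
  induction t with
  | zero =>
    intro f α _ c F X _ _ _
    exact ⟨[], rfl, List.nodup_nil, by simp, by simp⟩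
  | succ t ih =>
    intro f α _ c F X hF hdisj hcard
    rw [ramseyBound] at hcard
    obtain ⟨X', hX'X, hX'card, hX'const⟩ :=
      pigeon_step r c F X (ramseyBound (Fintype.card γ) r t (f + 1) + 1) (by rwa [hF])
    have hne : X'.Nonempty := card_pos.1 (by omega)
    obtain ⟨a, ha⟩ := hne
    have haX : a ∈ X := hX'X ha
    have haF : a ∉ F := fun h => (disjoint_left.1 hdisj h) haX
    obtain ⟨l', hlen', hnd', hmem', hgood'⟩ := ih (f + 1) α c (insert a F) (X'.erase a)
      (by rw [card_insert_of_notMem haF, hF])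
      (by
        rw [disjoint_left]
        intro x hx hx'
        rcases mem_insert.1 hx with rfl | hxF
        · exact (notMem_erase _ _) hx'
        · exact (disjoint_left.1 hdisj hxF) (hX'X (mem_of_mem_erase hx')))
      (by rw [card_erase_of_mem ha]; omega)
    refine ⟨a :: l', by simp [hlen'], ?_, ?_, ?_⟩
    · refine List.nodup_cons.2 ⟨fun h => ?_, hnd'⟩
      exact (notMem_erase a X') (hmem' a h)
    · intro x hx
      rcases List.mem_cons.1 hx with rfl | hx'
      · exact haX
      · exact hX'X (mem_of_mem_erase (hmem' x hx'))
    · intro i S hScard hSsub y hy y' hy'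
      cases i with
      | zero =>
        have hSF : S ⊆ F := by simpa using hSsub
        have hy1 : y ∈ X' := by
          rcases List.mem_cons.1 (by simpa using hy) with rfl | h
          · exact ha
          · exact mem_of_mem_erase (hmem' _ h)
        have hy2 : y' ∈ X' := by
          rcases List.mem_cons.1 (by simpa using hy') with rfl | h
          · exact ha
          · exact mem_of_mem_erase (hmem' _ h)
        exact hX'const S (mem_powersetCard.2 ⟨hSF, hScard⟩) y hy1 y' hy2
      | succ i =>
        have hsub' : S ⊆ insert a F ∪ (l'.take i).toFinset := by
          intro x hx
          have := hSsub hx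
          rw [List.take_succ_cons] at this
          rcases mem_union.1 this with h | h
          · exact mem_union.2 (Or.inl (mem_insert.2 (Or.inr h)))
          · rcases List.mem_toFinset.1 h with h1
            rcases List.mem_cons.1 h1 with rfl | h2
            · exact mem_union.2 (Or.inl (mem_insert_self _ _))
            · exact mem_union.2 (Or.inr (List.mem_toFinset.2 h2))
        rw [List.drop_succ_cons] at hy hy'
        exact hgood' i S hScard hsub' y hy y' hy'




/-- Ramsey's theorem for hypergraphs with colors in a finite type. -/
theorem ramsey_aux (r : ℕ) : ∀ (m : ℕ), ∃ n : ℕ, ∀ (α : Type) [DecidableEq α]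
    (c : Finset α → γ) (X : Finset α), n ≤ X.card →
    ∃ Y ⊆ X, Y.card = m ∧ ∀ A ∈ Y.powersetCard r, ∀ B ∈ Y.powersetCard r, c A = c B := by
  induction r with
  | zero =>
    intro m
    refine ⟨m, fun α _ c X hX => ?_⟩
    obtain ⟨Y, hYX, hYcard⟩ := exists_subset_card_eq hX
    refine ⟨Y, hYX, hYcard, fun A hA B hB => ?_⟩
    have hA0 : A = ∅ := card_eq_zero.1 (mem_powersetCard.1 hA).2
    have hB0 : B = ∅ := card_eq_zero.1 (mem_powersetCard.1 hB).2
    rw [hA0, hB0]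
  | succ r ih =>
    intro m
    obtain ⟨n₁, h₁⟩ := ih m
    refine ⟨ramseyBound (Fintype.card γ) r (n₁ + 1) 0, fun α _ c X hX => ?_⟩
    obtain ⟨l, hlen, hnd, hmem, hgood⟩ := presequence r (n₁ + 1) 0 α c ∅ X rfl
      (disjoint_empty_left X) hX
    have hlt : n₁ < l.length := by omega
    set alast : α := l[n₁] with halast
    set G : Finset α := l.dropLast.toFinset with hG
    have hGnodup : l.dropLast.Nodup := (List.dropLast_sublist l).nodup hnd
    have hGcard : G.card = n₁ := by
      rw [hG, List.toFinset_card_of_nodup hGnodup, List.length_dropLast, hlen]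
      omega
    -- key facts about members of G
    have hidx : ∀ x ∈ G, x ∈ l ∧ l.idxOf x < n₁ := by
      intro x hx
      rw [hG, List.mem_toFinset] at hx
      obtain ⟨j, hj, hxj⟩ := List.mem_iff_getElem.1 hx
      have hj' : j < l.length := lt_of_lt_of_le hj (by simp)
      have hxl : x ∈ l := by
        rw [← hxj]; simp only [List.getElem_dropLast]; exact List.getElem_mem _
      have : l.idxOf x = j := by
        rw [← hxj]; simp only [List.getElem_dropLast]
        exact List.Nodup.idxOf_getElem hnd j hj'
      rw [List.length_dropLast, hlen] at hj
      exact ⟨hxl, by omega⟩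
    obtain ⟨Z, hZG, hZcard, hZhom⟩ := h₁ α (fun S => c (insert alast S)) G (le_of_eq hGcard.symm)
    refine ⟨Z, fun x hx => hmem x (hidx x (hZG hx)).1, hZcard, ?_⟩
    -- each (r+1)-subset A of Z satisfies c A = ĉ (A minus its last element)
    have key : ∀ A ∈ Z.powersetCard (r + 1), ∃ S ∈ Z.powersetCard r,
        c A = c (insert alast S) := by
      intro A hA
      obtain ⟨hAZ, hAcard⟩ := mem_powersetCard.1 hA
      have hAne : A.Nonempty := card_pos.1 (by omega)
      obtain ⟨y, hyA, hymax⟩ := A.exists_max_image (fun x => l.idxOf x) hAne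
      have hyG : y ∈ G := hZG (hAZ hyA)
      obtain ⟨hyl, hyidx⟩ := hidx y hyG
      set i : ℕ := l.idxOf y with hi
      set S : Finset α := A.erase y with hSdef
      have hScard : S.card = r := by
        rw [hSdef, card_erase_of_mem hyA, hAcard]
        omega
      have hSsub : S ⊆ ∅ ∪ (l.take i).toFinset := by
        intro x hx
        have hxA : x ∈ A := mem_of_mem_erase hx
        have hxne : x ≠ y := ne_of_mem_erase hx
        obtain ⟨hxl, _⟩ := hidx x (hZG (hAZ hxA))
        have hle : l.idxOf x ≤ i := hymax x hxA
        have hne : l.idxOf x ≠ i := by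
          intro h
          apply hxne
          have h1 : l.idxOf x < l.length := List.idxOf_lt_length_iff.2 hxl
          have := List.idxOf_get (a := x) (l := l) h1
          have h2 := List.idxOf_get (a := y) (l := l) (List.idxOf_lt_length_iff.2 hyl)
          rw [← this, ← h2]
          congr 1
          exact Fin.ext (by simp only [hi] at h ⊢; omega)
        refine mem_union.2 (Or.inr (List.mem_toFinset.2 ?_))
        exact list_mem_take_of_indexOf_lt hxl (by omega)
      have hy_drop : y ∈ l.drop i := list_mem_drop_of_le_indexOf hyl le_rfl
      have halast_mem : alast ∈ l := by rw [halast]; exact List.getElem_mem _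
      have halast_idx : l.idxOf alast = n₁ := by
        rw [halast]; exact List.Nodup.idxOf_getElem hnd n₁ hlt
      have ha_drop : alast ∈ l.drop i := by
        apply list_mem_drop_of_le_indexOf halast_mem
        rw [halast_idx]; omega
      have hcA : c A = c (insert y S) := by rw [hSdef, insert_erase hyA]
      refine ⟨S, mem_powersetCard.2 ⟨fun x hx => hAZ (mem_of_mem_erase hx), hScard⟩, ?_⟩
      rw [hcA]
      exact hgood i S hScard hSsub y hy_drop alast ha_drop
    intro A hA B hB
    obtain ⟨SA, hSA, hcA⟩ := key A hA
    obtain ⟨SB, hSB, hcB⟩ := key B hB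
    rw [hcA, hcB]
    exact hZhom SA hSA SB hSB

end Ramsey


private lemma succAbove_agree {n : ℕ} (i j : Fin n) (h : j ≠ i) :
    (Fin.succAbove i.succ) j = (Fin.succAbove i.castSucc) j := by
  rcases lt_or_gt_of_ne h with hlt | hgt
  · rw [Fin.succAbove_of_castSucc_lt _ _
        ((Fin.castSucc_lt_castSucc_iff.2 hlt).trans (Fin.castSucc_lt_succ (i := i))),
      Fin.succAbove_of_castSucc_lt _ _ (Fin.castSucc_lt_castSucc_iff.2 hlt)]
  · rw [Fin.succAbove_of_le_castSucc _ _
        (Fin.castSucc_lt_iff_succ_le.1 (Fin.castSucc_lt_castSucc_iff.2 hgt)),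
      Fin.succAbove_of_le_castSucc _ _ (le_of_lt (Fin.castSucc_lt_castSucc_iff.2 hgt))]

/-- The polychromatic subset lemma over `ℕ`. -/
lemma main_nat (r m : ℕ) (hr : 1 ≤ r) :
    ∃ N : ℕ, ∀ (X : Finset ℕ) (c : Finset ℕ → ℕ),
      N < X.card →
      (∀ A ∈ X.powersetCard r, ∀ B ∈ X.powersetCard r, (A ∩ B).card = r - 1 → c A ≠ c B) →
      ∃ X' ⊆ X, X'.card = m ∧
        ∀ A ∈ X'.powersetCard r, ∀ B ∈ X'.powersetCard r, A ≠ B → c A ≠ c B := by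
  classical
  obtain ⟨n, hn⟩ := ramsey_aux (γ := Finset (Finset (Fin (2*r)) × Finset (Fin (2*r))))
    (2*r) (m + 2*r + 1)
  refine ⟨n, fun X c hXcard hJ => ?_⟩
  set χ : Finset ℕ → Finset (Finset (Fin (2*r)) × Finset (Fin (2*r))) := fun D =>
    if h : D.card = 2*r then
      univ.filter (fun pq => c (pq.1.image (D.orderEmbOfFin h)) = c (pq.2.image (D.orderEmbOfFin h)))
    else ∅ with hχ
  obtain ⟨Y, hYX, hYcard, hYhom⟩ := hn ℕ χ X (by omega)
  have hmemχ : ∀ (D : Finset ℕ) (h : D.card = 2*r) (P Q : Finset (Fin (2*r))),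
      ((P, Q) ∈ χ D ↔
        c (P.image (D.orderEmbOfFin h)) = c (Q.image (D.orderEmbOfFin h))) := by
    intro D h P Q
    simp only [hχ, dif_pos h, mem_filter, mem_univ, true_and]
  -- transfer between any two order embeddings into Y
  have key : ∀ (f g : Fin (2*r) ↪o ℕ), (∀ x, f x ∈ Y) → (∀ x, g x ∈ Y) →
      ∀ P Q : Finset (Fin (2*r)),
      c (P.image ⇑f) = c (Q.image ⇑f) → c (P.image ⇑g) = c (Q.image ⇑g) := by
    intro f g hf hg P Q hPQ
    have hcardf : (univ.image ⇑f).card = 2*r := by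
      rw [card_image_of_injective _ f.injective, card_univ, Fintype.card_fin]
    have hcardg : (univ.image ⇑g).card = 2*r := by
      rw [card_image_of_injective _ g.injective, card_univ, Fintype.card_fin]
    have hfe : f = (univ.image ⇑f).orderEmbOfFin hcardf :=
      orderEmbOfFin_unique' _ (fun x => mem_image_of_mem _ (mem_univ x))
    have hge : g = (univ.image ⇑g).orderEmbOfFin hcardg :=
      orderEmbOfFin_unique' _ (fun x => mem_image_of_mem _ (mem_univ x))
    have hmemf : univ.image ⇑f ∈ Y.powersetCard (2*r) :=
      mem_powersetCard.2 ⟨fun x hx => by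
        obtain ⟨j, -, rfl⟩ := mem_image.1 hx; exact hf j, hcardf⟩
    have hmemg : univ.image ⇑g ∈ Y.powersetCard (2*r) :=
      mem_powersetCard.2 ⟨fun x hx => by
        obtain ⟨j, -, rfl⟩ := mem_image.1 hx; exact hg j, hcardg⟩
    have h1 : (P, Q) ∈ χ (univ.image ⇑f) :=
      (hmemχ _ hcardf P Q).2 (by rw [← hfe]; exact hPQ)
    have h2 : (P, Q) ∈ χ (univ.image ⇑g) := by
      rw [← hYhom _ hmemf _ hmemg]; exact h1
    have := (hmemχ _ hcardg P Q).1 h2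
    rwa [← hge] at this
  -- Y is rainbow
  have hrainY : ∀ A ∈ Y.powersetCard r, ∀ B ∈ Y.powersetCard r, A ≠ B → c A ≠ c B := by
    intro A hA B hB hne heq
    obtain ⟨hAY, hAcard⟩ := mem_powersetCard.1 hA
    obtain ⟨hBY, hBcard⟩ := mem_powersetCard.1 hB
    obtain ⟨D, hABD, hDY, hDcard⟩ := exists_subsuperset_card_eq (n := 2*r)
      (union_subset hAY hBY) (le_trans (card_union_le A B) (by omega)) (by omega)
    set e := D.orderEmbOfFin hDcard with he
    set P : Finset (Fin (2*r)) := univ.filter (fun j => e j ∈ A) with hP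
    set Q : Finset (Fin (2*r)) := univ.filter (fun j => e j ∈ B) with hQ
    have himg : ∀ (T : Finset ℕ), T ⊆ D →
        (univ.filter (fun j => e j ∈ T)).image ⇑e = T := by
      intro T hTD
      ext x
      simp only [mem_image, mem_filter, mem_univ, true_and]
      constructor
      · rintro ⟨j, hj, rfl⟩; exact hj
      · intro hx
        have : x ∈ Set.range ⇑e := by rw [he, range_orderEmbOfFin]; exact hTD hx
        obtain ⟨j, rfl⟩ := this
        exact ⟨j, hx, rfl⟩
    have hPA : P.image ⇑e = A := himg A (subset_trans subset_union_left hABD)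
    have hQB : Q.image ⇑e = B := himg B (subset_trans subset_union_right hABD)
    have hPcard : P.card = r := by
      have h := card_image_of_injective P e.injective
      rw [hPA, hAcard] at h
      omega
    have hQcard : Q.card = r := by
      have h := card_image_of_injective Q e.injective
      rw [hQB, hBcard] at h
      omega
    have hPQ : P ≠ Q := fun h => hne (by rw [← hPA, ← hQB, h])
    obtain ⟨i, hiP, hiQ⟩ : ∃ i ∈ P, i ∉ Q := by
      by_contra hcon
      push_neg at hcon
      exact hPQ (eq_of_subset_of_card_le hcon (by omega))
    obtain ⟨Y₀, hY₀Y, hY₀card⟩ := exists_subset_card_eq (s := Y) (n := 2*r+1) (by omega)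
    set z := Y₀.orderEmbOfFin hY₀card with hz
    set g₁ : Fin (2*r) ↪o ℕ := (Fin.succAboveOrderEmb i.succ).trans z with hg₁
    set g₂ : Fin (2*r) ↪o ℕ := (Fin.succAboveOrderEmb i.castSucc).trans z with hg₂
    have hzY : ∀ x : Fin (2*r+1), z x ∈ Y := fun x => hY₀Y (orderEmbOfFin_mem _ _ _)
    have heY : ∀ x, e x ∈ Y := fun x => hDY (orderEmbOfFin_mem _ _ _)
    have hg₁Y : ∀ x, g₁ x ∈ Y := fun x => hzY _
    have hg₂Y : ∀ x, g₂ x ∈ Y := fun x => hzY _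
    have hkey1 : c (P.image ⇑g₁) = c (Q.image ⇑g₁) :=
      key e g₁ heY hg₁Y P Q (by rw [hPA, hQB]; exact heq)
    have hkey2 : c (P.image ⇑g₂) = c (Q.image ⇑g₂) :=
      key e g₂ heY hg₂Y P Q (by rw [hPA, hQB]; exact heq)
    have hQ12 : Q.image ⇑g₁ = Q.image ⇑g₂ := by
      apply image_congr
      intro j hj
      have hjne : j ≠ i := fun h => hiQ (h ▸ hj)
      simp only [hg₁, hg₂, RelEmbedding.coe_trans, Function.comp_apply,
        Fin.succAboveOrderEmb_apply]
      rw [succAbove_agree i j hjne]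
    set C : Finset ℕ := (P.erase i).image ⇑g₁ with hC
    have hC2 : (P.erase i).image ⇑g₂ = C := by
      apply image_congr
      intro j hj
      have hjne : j ≠ i := ne_of_mem_erase hj
      simp only [hg₁, hg₂, RelEmbedding.coe_trans, Function.comp_apply,
        Fin.succAboveOrderEmb_apply]
      rw [succAbove_agree i j hjne]
    have hg₁i : g₁ i = z i.castSucc := by
      simp only [hg₁, RelEmbedding.coe_trans, Function.comp_apply,
        Fin.succAboveOrderEmb_apply, Fin.succAbove_succ_self]
    have hg₂i : g₂ i = z i.succ := by
      simp only [hg₂, RelEmbedding.coe_trans, Function.comp_apply,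
        Fin.succAboveOrderEmb_apply, Fin.succAbove_castSucc_self]
    have hA₁ : P.image ⇑g₁ = insert (z i.castSucc) C := by
      rw [← insert_erase hiP, image_insert, hg₁i]
    have hA₂ : P.image ⇑g₂ = insert (z i.succ) C := by
      rw [← insert_erase hiP, image_insert, hg₂i, hC2]
    have hcs_notin : z i.castSucc ∉ C := by
      rw [hC]
      intro hmem
      obtain ⟨j, hj, hje⟩ := mem_image.1 hmem
      have : i.succ.succAbove j = i.castSucc := z.injective (by
        simpa only [hg₁, RelEmbedding.coe_trans, Function.comp_apply,
          Fin.succAboveOrderEmb_apply] using hje)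
      have : j = i := Fin.succAbove_right_injective (by
        rw [this, Fin.succAbove_succ_self])
      exact (ne_of_mem_erase hj) this
    have hsc_notin : z i.succ ∉ C := by
      rw [hC]
      intro hmem
      obtain ⟨j, hj, hje⟩ := mem_image.1 hmem
      have : i.succ.succAbove j = i.succ := z.injective (by
        simpa only [hg₁, RelEmbedding.coe_trans, Function.comp_apply,
          Fin.succAboveOrderEmb_apply] using hje)
      exact Fin.succAbove_ne i.succ j this
    have hcsne : z i.castSucc ≠ z i.succ :=
      fun h => (Fin.castSucc_lt_succ (i := i)).ne (z.injective h)
    have hinter : (P.image ⇑g₁) ∩ (P.image ⇑g₂) = C := by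
      rw [hA₁, hA₂]
      ext x
      simp only [mem_inter, mem_insert]
      constructor
      · rintro ⟨h1 | h1, h2 | h2⟩
        · exact absurd (h1 ▸ h2 : z i.castSucc = z i.succ) hcsne
        · exact h2
        · exact h1
        · exact h1
      · intro hx; exact ⟨Or.inr hx, Or.inr hx⟩
    have hCcard : C.card = r - 1 := by
      rw [hC, card_image_of_injective _ g₁.injective, card_erase_of_mem hiP, hPcard]
    have hmem₁ : P.image ⇑g₁ ∈ X.powersetCard r := mem_powersetCard.2
      ⟨fun x hx => by obtain ⟨j, -, rfl⟩ := mem_image.1 hx; exact hYX (hg₁Y j),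
        by rw [card_image_of_injective _ g₁.injective, hPcard]⟩
    have hmem₂ : P.image ⇑g₂ ∈ X.powersetCard r := mem_powersetCard.2
      ⟨fun x hx => by obtain ⟨j, -, rfl⟩ := mem_image.1 hx; exact hYX (hg₂Y j),
        by rw [card_image_of_injective _ g₂.injective, hPcard]⟩
    exact hJ _ hmem₁ _ hmem₂ (by rw [hinter, hCcard]) (hkey1.trans (hQ12 ▸ hkey2.symm))
  -- extract the m-subset
  obtain ⟨X', hX'Y, hX'card⟩ := exists_subset_card_eq (s := Y) (n := m) (by omega)
  refine ⟨X', hX'Y.trans hYX, hX'card, fun A hA B hB hne => ?_⟩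
  have hA' : A ∈ Y.powersetCard r := by
    obtain ⟨h1, h2⟩ := mem_powersetCard.1 hA
    exact mem_powersetCard.2 ⟨h1.trans hX'Y, h2⟩
  have hB' : B ∈ Y.powersetCard r := by
    obtain ⟨h1, h2⟩ := mem_powersetCard.1 hB
    exact mem_powersetCard.2 ⟨h1.trans hX'Y, h2⟩
  exact hrainY A hA' B hB' hne

/-- Polychromatic subset lemma. Let `r ≥ 1` and `m ≥ r`. There exists `n(m,r)` such that for
every set `X` with `|X| > n(m,r)` and every coloring `c` of the `r`-subsets of `X` in which
any two `r`-subsets intersecting in exactly `r-1` elements receive different colors, there is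
an `m`-subset `X' ⊆ X` all of whose `r`-subsets receive pairwise distinct colors. -/
theorem polychromatic_subset_lemma (r m : ℕ) (hr : 1 ≤ r) (hm : r ≤ m) :
    ∃ N : ℕ, ∀ (α : Type) [DecidableEq α] (X : Finset α) (c : Finset α → ℕ),
      N < X.card →
      (∀ A ∈ X.powersetCard r, ∀ B ∈ X.powersetCard r,
        (A ∩ B).card = r - 1 → c A ≠ c B) →
      ∃ X' ⊆ X, X'.card = m ∧
        ∀ A ∈ X'.powersetCard r, ∀ B ∈ X'.powersetCard r, A ≠ B → c A ≠ c B := by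
  classical
  obtain ⟨N, hN⟩ := main_nat r m hr
  refine ⟨N, fun α _ X c hXcard hJ => ?_⟩
  have hXne : X.Nonempty := card_pos.1 (by omega)
  obtain ⟨x₀, hx₀⟩ := hXne
  set g : ℕ → α := fun i => X.toList.getD i x₀ with hg
  set X₀ : Finset ℕ := Finset.range X.card with hX₀
  have hlen : X.toList.length = X.card := X.length_toList
  have hgget : ∀ i (h : i < X.card), g i = X.toList[i]'(by omega) := by
    intro i h
    rw [hg]
    exact List.getD_eq_getElem _ _ (by omega)
  have hgmem : ∀ i ∈ X₀, g i ∈ X := by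
    intro i hi
    rw [hX₀, Finset.mem_range] at hi
    rw [hgget i hi]
    rw [← Finset.mem_toList]
    exact List.getElem_mem _
  have hinj : Set.InjOn g ↑X₀ := by
    intro i hi j hj hij
    rw [Finset.mem_coe, hX₀, Finset.mem_range] at hi hj
    rw [hgget i hi, hgget j hj] at hij
    exact (List.Nodup.getElem_inj_iff X.nodup_toList).1 hij
  set c' : Finset ℕ → ℕ := fun T => c (T.image g) with hc'
  have hX₀card : N < X₀.card := by rw [hX₀, Finset.card_range]; exact hXcard
  have himgmem : ∀ T ⊆ X₀, T.card = r → T.image g ∈ X.powersetCard r := by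
    intro T hT hTcard
    refine mem_powersetCard.2 ⟨fun x hx => ?_, ?_⟩
    · obtain ⟨i, hi, rfl⟩ := mem_image.1 hx
      exact hgmem i (hT hi)
    · rw [card_image_of_injOn (hinj.mono (by exact_mod_cast hT)), hTcard]
  have hJ' : ∀ A ∈ X₀.powersetCard r, ∀ B ∈ X₀.powersetCard r,
      (A ∩ B).card = r - 1 → c' A ≠ c' B := by
    intro A hA B hB hAB
    obtain ⟨hAX₀, hAcard⟩ := mem_powersetCard.1 hA
    obtain ⟨hBX₀, hBcard⟩ := mem_powersetCard.1 hB
    have hinj' : Set.InjOn g (↑A ∪ ↑B) := hinj.mono (by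
      intro x hx
      rcases hx with hx | hx
      · exact hAX₀ hx
      · exact hBX₀ hx)
    have hint : (A.image g ∩ B.image g).card = r - 1 := by
      rw [← image_inter_of_injOn _ _ hinj',
        card_image_of_injOn (hinj'.mono (by
          intro x hx
          exact Or.inl (mem_of_mem_inter_left hx))), hAB]
    exact hJ _ (himgmem A hAX₀ hAcard) _ (himgmem B hBX₀ hBcard) hint
  obtain ⟨Y, hYX₀, hYcard, hYrain⟩ := hN X₀ c' hX₀card hJ'
  refine ⟨Y.image g, fun x hx => ?_, ?_, ?_⟩
  · obtain ⟨i, hi, rfl⟩ := mem_image.1 hx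
    exact hgmem i (hYX₀ hi)
  · rw [card_image_of_injOn (hinj.mono (by exact_mod_cast hYX₀)), hYcard]
  · intro A hA B hB hne
    obtain ⟨hAim, hAcard⟩ := mem_powersetCard.1 hA
    obtain ⟨hBim, hBcard⟩ := mem_powersetCard.1 hB
    set A₀ : Finset ℕ := Y.filter (fun i => g i ∈ A) with hA₀
    set B₀ : Finset ℕ := Y.filter (fun i => g i ∈ B) with hB₀
    have himgA : A₀.image g = A := by
      ext x
      simp only [hA₀, mem_image, mem_filter]
      constructor
      · rintro ⟨i, ⟨-, hi⟩, rfl⟩; exact hi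
      · intro hx
        obtain ⟨i, hi, rfl⟩ := mem_image.1 (hAim hx)
        exact ⟨i, ⟨hi, hx⟩, rfl⟩
    have himgB : B₀.image g = B := by
      ext x
      simp only [hB₀, mem_image, mem_filter]
      constructor
      · rintro ⟨i, ⟨-, hi⟩, rfl⟩; exact hi
      · intro hx
        obtain ⟨i, hi, rfl⟩ := mem_image.1 (hBim hx)
        exact ⟨i, ⟨hi, hx⟩, rfl⟩
    have hA₀sub : A₀ ⊆ Y := filter_subset _ _
    have hB₀sub : B₀ ⊆ Y := filter_subset _ _
    have hA₀card : A₀.card = r := by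
      have h := card_image_of_injOn (hinj.mono ((coe_subset.2 (hA₀sub.trans hYX₀)) :
        (↑A₀ : Set ℕ) ⊆ ↑X₀))
      rw [himgA, hAcard] at h
      omega
    have hB₀card : B₀.card = r := by
      have h := card_image_of_injOn (hinj.mono ((coe_subset.2 (hB₀sub.trans hYX₀)) :
        (↑B₀ : Set ℕ) ⊆ ↑X₀))
      rw [himgB, hBcard] at h
      omega
    have hne₀ : A₀ ≠ B₀ := fun h => hne (by rw [← himgA, ← himgB, h])
    have := hYrain A₀ (mem_powersetCard.2 ⟨hA₀sub, hA₀card⟩)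
      B₀ (mem_powersetCard.2 ⟨hB₀sub, hB₀card⟩) hne₀
    rw [hc'] at this
    simpa [himgA, himgB] using this
end

section
/- In the polychromatic lemma's extension step: let X_a be a finite set, c a coloring of r-subsets of X_a such that any two r-subsets sharing an element have distinct colors, and X_b ⊆ X_a with |X_b| = m-1 such that all r-subsets of X_b have distinct colors. Let A = {A ⊆ X_a : |A| = r, |A ∩ X_b| = r-1} and B = the r-subsets of X_b. If |X_a| ≥ m + C(m-1, r)·(m-1)/(r-1), then there exists e ∈ X_a \ X_b such that no member of A containing e shares a color with any member of B; consequently all r-subsets of X' = X_b ∪ {e} have pairwise distinct colors. -/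
open Finset

/-- Extension step of the polychromatic lemma. Let `X_a` be a finite set, `c` a coloring of
`r`-subsets of `X_a` in which any two distinct intersecting `r`-subsets get distinct colors,
and `X_b ⊆ X_a` with `|X_b| = m-1` whose `r`-subsets all have distinct colors. Let
`A = {A ⊆ X_a : |A| = r, |A ∩ X_b| = r-1}` and `B` the `r`-subsets of `X_b`. If
`|X_a| ≥ m + C(m-1,r)·(m-1)/(r-1)` then there is `e ∈ X_a \ X_b` such that no member of `A`
containing `e` shares a color with a member of `B`; consequently all `r`-subsets of
`X' = X_b ∪ {e}` have pairwise distinct colors. -/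
theorem polychromatic_extension_step {α : Type*} [DecidableEq α]
    (r m : ℕ) (hr : 2 ≤ r) (hm : r ≤ m)
    (Xa Xb : Finset α) (hba : Xb ⊆ Xa) (hXb : Xb.card = m - 1)
    (c : Finset α → ℕ)
    (hc : ∀ A ∈ Xa.powersetCard r, ∀ B ∈ Xa.powersetCard r,
      A ≠ B → (A ∩ B).Nonempty → c A ≠ c B)
    (hrainbow : ∀ A ∈ Xb.powersetCard r, ∀ B ∈ Xb.powersetCard r, A ≠ B → c A ≠ c B)
    (hcard : (m : ℝ) + ((m - 1).choose r : ℝ) * ((m : ℝ) - 1) / ((r : ℝ) - 1)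
      ≤ (Xa.card : ℝ)) :
    ∃ e ∈ Xa \ Xb,
      (∀ A ∈ Xa.powersetCard r, (A ∩ Xb).card = r - 1 → e ∈ A →
        ∀ B ∈ Xb.powersetCard r, c A ≠ c B) ∧
      (∀ A ∈ (insert e Xb).powersetCard r, ∀ B ∈ (insert e Xb).powersetCard r,
        A ≠ B → c A ≠ c B) := by
  classical
  have hr1 : 1 ≤ r := le_trans (by norm_num) hr
  have hm1 : 1 ≤ m := le_trans hr1 hm
  set Cn := (m - 1).choose r with hCn
  set D := (m - 1) / (r - 1) with hD
  set badA : Finset (Finset α) := (Xa.powersetCard r).filter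
    (fun A => (A ∩ Xb).card = r - 1 ∧ ∃ B ∈ Xb.powersetCard r, c A = c B) with hbadA
  set badE : Finset α := (Xa \ Xb).filter (fun e => ∃ A ∈ badA, e ∈ A) with hbadE
  set Bc : Finset ℕ := (Xb.powersetCard r).image c with hBc
  -- fiber bound
  have hfiber : ∀ t : ℕ, ((badA.filter (fun A => c A = t)).card) ≤ D := by
    intro t
    set F := badA.filter (fun A => c A = t) with hF
    have hdisj : ∀ A₁ ∈ F, ∀ A₂ ∈ F, A₁ ≠ A₂ →
        Disjoint (A₁ ∩ Xb) (A₂ ∩ Xb) := by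
      intro A₁ h₁ A₂ h₂ hne
      rw [hF, mem_filter, hbadA, mem_filter] at h₁ h₂
      by_contra hnd
      have hnon : ((A₁ ∩ Xb) ∩ (A₂ ∩ Xb)).Nonempty :=
        not_disjoint_iff_nonempty_inter.mp hnd
      have hnon' : (A₁ ∩ A₂).Nonempty := by
        obtain ⟨x, hx⟩ := hnon
        simp only [mem_inter] at hx
        exact ⟨x, mem_inter.mpr ⟨hx.1.1, hx.2.1⟩⟩
      exact hc A₁ h₁.1.1 A₂ h₂.1.1 hne hnon' (h₁.2.trans h₂.2.symm)
    have hsum : ∑ A ∈ F, (A ∩ Xb).card ≤ m - 1 := by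
      rw [← card_biUnion hdisj]
      calc (F.biUnion (fun A => A ∩ Xb)).card ≤ Xb.card := by
            apply card_le_card
            intro x hx
            simp only [mem_biUnion, mem_inter] at hx
            obtain ⟨A, _, _, hxb⟩ := hx
            exact hxb
        _ = m - 1 := hXb
    have heach : ∀ A ∈ F, (A ∩ Xb).card = r - 1 := by
      intro A hA
      rw [hF, mem_filter, hbadA, mem_filter] at hA
      exact hA.1.2.1
    have : F.card * (r - 1) ≤ m - 1 := by
      calc F.card * (r - 1) = ∑ _A ∈ F, (r - 1) := by rw [sum_const, smul_eq_mul]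
        _ = ∑ A ∈ F, (A ∩ Xb).card := by
            exact (Finset.sum_congr rfl heach).symm
        _ ≤ m - 1 := hsum
    rw [hD]
    exact Nat.le_div_iff_mul_le (by omega) |>.mpr this
  -- badA bound
  have hbadAcard : badA.card ≤ Cn * D := by
    have hsub : badA ⊆ Bc.biUnion (fun t => badA.filter (fun A => c A = t)) := by
      intro A hA
      have hA' := hA
      rw [hbadA, mem_filter] at hA'
      obtain ⟨B, hB, hcB⟩ := hA'.2.2
      rw [mem_biUnion]
      exact ⟨c B, mem_image.mpr ⟨B, hB, rfl⟩, mem_filter.mpr ⟨hA, hcB⟩⟩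
    calc badA.card ≤ (Bc.biUnion (fun t => badA.filter (fun A => c A = t))).card :=
          card_le_card hsub
      _ ≤ ∑ t ∈ Bc, (badA.filter (fun A => c A = t)).card := card_biUnion_le
      _ ≤ ∑ _t ∈ Bc, D := Finset.sum_le_sum (fun t _ => hfiber t)
      _ = Bc.card * D := by rw [sum_const, smul_eq_mul]
      _ ≤ Cn * D := by
          apply Nat.mul_le_mul_right
          calc Bc.card ≤ (Xb.powersetCard r).card := card_image_le
            _ = Cn := by rw [card_powersetCard, hXb]
  -- badE bound
  have hbadEcard : badE.card ≤ Cn * D := by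
    have hsub : badE ⊆ badA.biUnion (fun A => A \ Xb) := by
      intro e he
      rw [hbadE, mem_filter] at he
      obtain ⟨A, hA, heA⟩ := he.2
      rw [mem_biUnion]
      refine ⟨A, hA, mem_sdiff.mpr ⟨heA, (mem_sdiff.mp he.1).2⟩⟩
    have h1 : ∀ A ∈ badA, (A \ Xb).card = 1 := by
      intro A hA
      rw [hbadA, mem_filter, mem_powersetCard] at hA
      have := card_sdiff_add_card_inter A Xb
      omega
    calc badE.card ≤ (badA.biUnion (fun A => A \ Xb)).card := card_le_card hsub
      _ ≤ ∑ A ∈ badA, (A \ Xb).card := card_biUnion_le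
      _ = ∑ _A ∈ badA, 1 := Finset.sum_congr rfl h1
      _ = badA.card := by rw [sum_const, smul_eq_mul, mul_one]
      _ ≤ Cn * D := hbadAcard
  -- find good e
  have hlt : badE.card < (Xa \ Xb).card := by
    have hcards : (Xa \ Xb).card = Xa.card - Xb.card := card_sdiff_of_subset hba
    have hle : Xb.card ≤ Xa.card := card_le_card hba
    rw [← Nat.cast_lt (α := ℝ)]
    have h1 : ((Xa \ Xb).card : ℝ) = (Xa.card : ℝ) - (Xb.card : ℝ) := by
      rw [hcards, Nat.cast_sub hle]
    have h2 : ((badE.card : ℕ) : ℝ) ≤ (Cn : ℝ) * (D : ℝ) := by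
      exact_mod_cast Nat.cast_le.mpr hbadEcard
    have h3 : (D : ℝ) ≤ ((m - 1 : ℕ) : ℝ) / ((r - 1 : ℕ) : ℝ) := Nat.cast_div_le
    have h4 : ((m - 1 : ℕ) : ℝ) = (m : ℝ) - 1 := by
      rw [Nat.cast_sub hm1]; norm_num
    have h5 : ((r - 1 : ℕ) : ℝ) = (r : ℝ) - 1 := by
      rw [Nat.cast_sub hr1]; norm_num
    have h6 : (Cn : ℝ) * (D : ℝ) ≤ (Cn : ℝ) * (((m : ℝ) - 1) / ((r : ℝ) - 1)) := by
      apply mul_le_mul_of_nonneg_left _ (Nat.cast_nonneg Cn)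
      rw [← h4, ← h5]; exact h3
    have hXbr : (Xb.card : ℝ) = (m : ℝ) - 1 := by rw [hXb, h4]
    rw [h1, hXbr]
    have := hcard
    rw [mul_div_assoc] at this
    linarith
  have hns : ¬ (Xa \ Xb ⊆ badE) := fun h => absurd (card_le_card h) (not_le.mpr hlt)
  obtain ⟨e, he, heb⟩ := not_subset.mp hns
  refine ⟨e, he, ?_⟩
  obtain ⟨heXa, heXb⟩ := mem_sdiff.mp he
  have hgood : ∀ A ∈ Xa.powersetCard r, (A ∩ Xb).card = r - 1 → e ∈ A →
      ∀ B ∈ Xb.powersetCard r, c A ≠ c B := by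
    intro A hA hint heA B hB hcc
    apply heb
    rw [hbadE, mem_filter]
    exact ⟨he, A, mem_filter.mpr ⟨hA, hint, B, hB, hcc⟩, heA⟩
  refine ⟨hgood, ?_⟩
  intro A hA B hB hne
  rw [mem_powersetCard] at hA hB
  have hXa' : insert e Xb ⊆ Xa := insert_subset heXa hba
  have hAa : A ∈ Xa.powersetCard r := mem_powersetCard.mpr ⟨hA.1.trans hXa', hA.2⟩
  have hBa : B ∈ Xa.powersetCard r := mem_powersetCard.mpr ⟨hB.1.trans hXa', hB.2⟩
  have key : ∀ S T : Finset α, S ⊆ insert e Xb → S.card = r → T ⊆ insert e Xb →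
      T.card = r → e ∈ S → e ∉ T → c S ≠ c T := by
    intro S T hS hScard hT hTcard heS heT
    have hTb : T ⊆ Xb := fun x hx => by
      rcases mem_insert.mp (hT hx) with h | h
      · exact absurd (h ▸ hx) heT
      · exact h
    have hSint : S ∩ Xb = S.erase e := by
      ext x
      simp only [mem_inter, mem_erase]
      constructor
      · rintro ⟨hxS, hxb⟩
        exact ⟨fun h => heXb (h ▸ hxb), hxS⟩
      · rintro ⟨hxe, hxS⟩
        rcases mem_insert.mp (hS hxS) with h | h
        · exact absurd h hxe
        · exact ⟨hxS, h⟩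
    have hScard' : (S ∩ Xb).card = r - 1 := by
      rw [hSint, card_erase_of_mem heS, hScard]
    exact hgood S (mem_powersetCard.mpr ⟨hS.trans hXa', hScard⟩) hScard' heS T
      (mem_powersetCard.mpr ⟨hTb, hTcard⟩)
  by_cases heA : e ∈ A <;> by_cases heB : e ∈ B
  · exact hc A hAa B hBa hne ⟨e, mem_inter.mpr ⟨heA, heB⟩⟩
  · exact key A B hA.1 hA.2 hB.1 hB.2 heA heB
  · exact (key B A hB.1 hB.2 hA.1 hA.2 heB heA).symm
  · have hAb : A ⊆ Xb := fun x hx => by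
      rcases mem_insert.mp (hA.1 hx) with h | h
      · exact absurd (h ▸ hx) heA
      · exact h
    have hBb : B ⊆ Xb := fun x hx => by
      rcases mem_insert.mp (hB.1 hx) with h | h
      · exact absurd (h ▸ hx) heB
      · exact h
    exact hrainbow A (mem_powersetCard.mpr ⟨hAb, hA.2⟩) B (mem_powersetCard.mpr ⟨hBb, hB.2⟩) hne
end

section
/- Fort refinement lemma: Let M be a sparse paving matroid of rank r and X a fort of M, i.e., for every (r-1)-subset A of X there is a non-basis C of M with C = A ∪ {e} for some e ∉ X. Then for every m ≥ r there exists n(m,r) such that if |X| > n(m,r), there is X' ⊆ X with |X'| ≥ m such that distinct (r-1)-subsets of X' are completed to non-bases by distinct elements outside X'. -/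
open Finset

/-- Fort refinement lemma. Let `M` be a sparse paving matroid of rank `r`, identified with its
family `F` of non-bases (dependent `r`-sets, pairwise intersecting in at most `r-2` elements)
on a ground set `E`, and let `X ⊆ E` be a fort of `M`: every `(r-1)`-subset `A` of `X` is
completed to a non-basis `A ∪ {e}` by some `e ∉ X`. Then for every `m ≥ r` there is `n(m,r)`
such that if `|X| > n(m,r)` there is `X' ⊆ X` with `|X'| ≥ m` such that distinct
`(r-1)`-subsets of `X'` are completed to non-bases by distinct elements outside `X'`. -/
theorem fort_refinement_lemma (r m : ℕ) (hr : 2 ≤ r) (hm : r ≤ m) :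
    ∃ N : ℕ, ∀ (α : Type) [DecidableEq α] (E : Finset α) (F : Finset (Finset α)) (X : Finset α),
      F ⊆ E.powersetCard r →
      (∀ A ∈ F, ∀ B ∈ F, A ≠ B → (A ∩ B).card + 2 ≤ r) →
      X ⊆ E →
      (∀ A ∈ X.powersetCard (r - 1), ∃ e, e ∉ X ∧ insert e A ∈ F) →
      N < X.card →
      ∃ X' ⊆ X, m ≤ X'.card ∧
        ∀ A ∈ X'.powersetCard (r - 1), ∀ B ∈ X'.powersetCard (r - 1), A ≠ B →
          ∀ e f, e ∉ X' → f ∉ X' → insert e A ∈ F → insert f B ∈ F → e ≠ f := by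
  classical
  set k := r - 1 with hkdef
  have hk1 : 1 ≤ k := by omega
  have hkr : k + 1 = r := by omega
  set K : ℕ := 2 * k * 4 ^ (2 * k) * (2 * k) * m ^ (2 * k) with hKdef
  refine ⟨K + 2 * k + m, ?_⟩
  intro α _ E F X hFE hFF hXE hfort hN
  set n := X.card with hndef
  have hmn : m ≤ n := by omega
  have hX0 : X.Nonempty := by
    rw [← Finset.card_pos]; omega
  obtain ⟨x₀, hx₀⟩ := hX0
  -- the coloring
  set c : Finset α → α := fun A =>
    if h : ∃ e, e ∉ X ∧ insert e A ∈ F then h.choose else x₀ with hcdef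
  have hc : ∀ A ∈ X.powersetCard k, c A ∉ X ∧ insert (c A) A ∈ F := by
    intro A hA
    have h : ∃ e, e ∉ X ∧ insert e A ∈ F := hfort A hA
    simp only [hcdef, dif_pos h]
    exact h.choose_spec
  -- every member of F has card r
  have hFr : ∀ C ∈ F, C.card = r := by
    intro C hC
    exact (Finset.mem_powersetCard.mp (hFE hC)).2
  -- uniqueness of the completing element
  have huniq : ∀ A ∈ X.powersetCard k, ∀ e, e ∉ A → insert e A ∈ F → e = c A := by
    intro A hA e he hin
    by_contra hne
    obtain ⟨hAX, hAcard⟩ := Finset.mem_powersetCard.mp hA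
    obtain ⟨hcX, hcF⟩ := hc A hA
    have hcnA : c A ∉ A := fun h => hcX (hAX h)
    have hne' : insert e A ≠ insert (c A) A := by
      intro h
      have : e ∈ insert (c A) A := h ▸ Finset.mem_insert_self e A
      rcases Finset.mem_insert.mp this with h' | h'
      · exact hne h'
      · exact he h'
    have h2 := hFF _ hin _ hcF hne'
    have hsub : A ⊆ insert e A ∩ insert (c A) A :=
      Finset.subset_inter (Finset.subset_insert _ _) (Finset.subset_insert _ _)
    have h3 := Finset.card_le_card hsub
    omega
  -- separation: equal colors force small intersection
  have hsep : ∀ A ∈ X.powersetCard k, ∀ B ∈ X.powersetCard k, A ≠ B → c A = c B →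
      (A ∩ B).card + 3 ≤ r := by
    intro A hA B hB hAB hcc
    obtain ⟨hAX, hAcard⟩ := Finset.mem_powersetCard.mp hA
    obtain ⟨hBX, hBcard⟩ := Finset.mem_powersetCard.mp hB
    obtain ⟨hcX, hcFA⟩ := hc A hA
    obtain ⟨hcXB, hcFB⟩ := hc B hB
    rw [← hcc] at hcFB
    have heA : c A ∉ A := fun h => hcX (hAX h)
    have heB : c A ∉ B := fun h => hcX (hBX h)
    have hne' : insert (c A) A ≠ insert (c A) B := by
      intro h
      apply hAB
      rw [← Finset.erase_insert heA, ← Finset.erase_insert heB, h]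
    have h2 := hFF _ hcFA _ hcFB hne'
    have hint : insert (c A) A ∩ insert (c A) B = insert (c A) (A ∩ B) := by
      rw [Finset.insert_inter_distrib]
    have heAB : c A ∉ A ∩ B := fun h => heA (Finset.mem_inter.mp h).1
    rw [hint, Finset.card_insert_of_notMem heAB] at h2
    omega
  -- bad pairs
  set P : Finset (Finset α × Finset α) :=
    ((X.powersetCard k) ×ˢ (X.powersetCard k)).filter
      (fun p => p.1 ≠ p.2 ∧ c p.1 = c p.2) with hPdef
  set ι : Finset α × Finset α → Finset α × Finset α :=
    fun p => (p.1, if h : (p.2 \ p.1).Nonempty then p.2.erase h.choose else p.2) with hιdef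
  have hPmem : ∀ p ∈ P, p.1 ∈ X.powersetCard k ∧ p.2 ∈ X.powersetCard k ∧
      p.1 ≠ p.2 ∧ c p.1 = c p.2 := by
    intro p hp
    rw [hPdef, Finset.mem_filter, Finset.mem_product] at hp
    exact ⟨hp.1.1, hp.1.2, hp.2.1, hp.2.2⟩
  have hBA : ∀ p ∈ P, (p.2 \ p.1).Nonempty := by
    intro p hp
    obtain ⟨h1, h2, h3, _⟩ := hPmem p hp
    rw [Finset.sdiff_nonempty]
    intro hsub
    exact h3 (Finset.eq_of_subset_of_card_le hsub
      (by rw [(Finset.mem_powersetCard.mp h1).2, (Finset.mem_powersetCard.mp h2).2])).symm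
  -- properties of ι on P
  have hιspec : ∀ p ∈ P, (ι p).1 = p.1 ∧ (ι p).2 ⊆ p.2 ∧ (ι p).2.card = k - 1 ∧
      (p.1 ∪ p.2).card = ((ι p).1 ∪ (ι p).2).card + 1 := by
    intro p hp
    obtain ⟨h1, h2, h3, _⟩ := hPmem p hp
    have hne := hBA p hp
    obtain ⟨hb1, hb2⟩ := Finset.mem_sdiff.mp hne.choose_spec
    have hι : ι p = (p.1, p.2.erase hne.choose) := by
      simp only [hιdef]
      rw [dif_pos hne]
    rw [hι]
    refine ⟨rfl, Finset.erase_subset _ _, ?_, ?_⟩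
    · rw [Finset.card_erase_of_mem hb1, (Finset.mem_powersetCard.mp h2).2]
    · have hU : p.1 ∪ p.2 = insert hne.choose (p.1 ∪ p.2.erase hne.choose) := by
        rw [← Finset.union_insert, Finset.insert_erase hb1]
      have hnb : hne.choose ∉ p.1 ∪ p.2.erase hne.choose := by
        simp only [Finset.mem_union, not_or]
        exact ⟨hb2, Finset.notMem_erase _ _⟩
      rw [hU, Finset.card_insert_of_notMem hnb]
  have hinj : ∀ p ∈ P, ∀ q ∈ P, ι p = ι q → p = q := by
    intro p hp q hq hpq
    obtain ⟨hp1, hp2, hp3, hp4⟩ := hPmem p hp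
    obtain ⟨hq1, hq2, hq3, hq4⟩ := hPmem q hq
    obtain ⟨hip1, hip2, hip3, _⟩ := hιspec p hp
    obtain ⟨hiq1, hiq2, hiq3, _⟩ := hιspec q hq
    have h1 : p.1 = q.1 := by rw [← hip1, ← hiq1, hpq]
    have hD : (ι p).2 = (ι q).2 := by rw [hpq]
    have h2 : p.2 = q.2 := by
      by_contra hne
      have hcc : c p.2 = c q.2 := by rw [← hp4, ← hq4, h1]
      have hsub : (ι p).2 ⊆ p.2 ∩ q.2 := Finset.subset_inter hip2 (hD ▸ hiq2)
      have h5 := Finset.card_le_card hsub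
      have h6 := hsep _ hp2 _ hq2 hne hcc
      omega
    exact Prod.ext h1 h2
  -- weight function
  set w : ℕ → ℕ := fun s => if s ≤ m then (n - s).choose (m - s) else 0 with hwdef
  have hsup : ∀ U : Finset α, U ⊆ X →
      ((X.powersetCard m).filter (fun S => U ⊆ S)).card ≤ w U.card := by
    intro U hUX
    by_cases hUm : U.card ≤ m
    · rw [hwdef]
      simp only [if_pos hUm]
      have : ((X.powersetCard m).filter (fun S => U ⊆ S)).card ≤
          ((X \ U).powersetCard (m - U.card)).card := by
        apply Finset.card_le_card_of_injOn (fun S => S \ U)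
        · intro S hS
          rw [Finset.mem_coe, Finset.mem_filter, Finset.mem_powersetCard] at hS
          obtain ⟨⟨hSX, hScard⟩, hUS⟩ := hS
          rw [Finset.mem_coe, Finset.mem_powersetCard]
          exact ⟨Finset.sdiff_subset_sdiff hSX (le_refl U),
            by rw [Finset.card_sdiff_of_subset hUS, hScard]⟩
        · intro S₁ hS₁ S₂ hS₂ h12
          rw [Finset.coe_filter] at hS₁ hS₂
          obtain ⟨_, hU1⟩ := hS₁
          obtain ⟨_, hU2⟩ := hS₂
          have h12' : S₁ \ U = S₂ \ U := h12
          rw [← Finset.sdiff_union_of_subset hU1, ← Finset.sdiff_union_of_subset hU2, h12']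
      rwa [Finset.card_powersetCard, Finset.card_sdiff_of_subset hUX] at this
    · rw [hwdef]
      simp only [if_neg hUm, Nat.le_zero, Finset.card_eq_zero, Finset.filter_eq_empty_iff]
      intro S hS hUS
      rw [Finset.mem_powersetCard] at hS
      exact hUm (hS.2 ▸ Finset.card_le_card hUS)
  -- bad m-sets
  set Bad : Finset (Finset α) :=
    (X.powersetCard m).filter (fun S => ∃ p ∈ P, p.1 ∪ p.2 ⊆ S) with hBaddef
  have step1 : Bad.card ≤ ∑ p ∈ P, w ((p.1 ∪ p.2).card) := by
    have hsub : Bad ⊆ P.biUnion (fun p => (X.powersetCard m).filter (fun S => p.1 ∪ p.2 ⊆ S)) := by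
      intro S hS
      rw [hBaddef, Finset.mem_filter] at hS
      obtain ⟨p, hp, hp2⟩ := hS.2
      exact Finset.mem_biUnion.mpr ⟨p, hp, Finset.mem_filter.mpr ⟨hS.1, hp2⟩⟩
    calc Bad.card ≤ _ := Finset.card_le_card hsub
      _ ≤ ∑ p ∈ P, ((X.powersetCard m).filter (fun S => p.1 ∪ p.2 ⊆ S)).card :=
          Finset.card_biUnion_le
      _ ≤ ∑ p ∈ P, w ((p.1 ∪ p.2).card) := by
          apply Finset.sum_le_sum
          intro p hp
          obtain ⟨h1, h2, _, _⟩ := hPmem p hp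
          exact hsup _ (Finset.union_subset (Finset.mem_powersetCard.mp h1).1
            (Finset.mem_powersetCard.mp h2).1)
  -- sum over image of ι
  set Q : Finset (Finset α × Finset α) :=
    (X.powersetCard k) ×ˢ (X.powersetCard (k - 1)) with hQdef
  set f : Finset α × Finset α → ℕ := fun q => w ((q.1 ∪ q.2).card + 1) with hfdef
  have step2 : ∑ p ∈ P, w ((p.1 ∪ p.2).card) ≤ ∑ q ∈ Q, f q := by
    have h1 : ∀ p ∈ P, w ((p.1 ∪ p.2).card) = f (ι p) := by
      intro p hp
      obtain ⟨hι1, _, _, hι4⟩ := hιspec p hp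
      rw [hfdef]
      simp only
      rw [hι4]
    rw [Finset.sum_congr rfl h1, ← Finset.sum_image hinj]
    apply Finset.sum_le_sum_of_subset
    intro q hq
    obtain ⟨p, hp, rfl⟩ := Finset.mem_image.mp hq
    obtain ⟨hp1, hp2, _, _⟩ := hPmem p hp
    obtain ⟨hι1, hι2, hι3, _⟩ := hιspec p hp
    rw [hQdef, Finset.mem_product]
    constructor
    · rw [hι1]; exact hp1
    · rw [Finset.mem_powersetCard]
      exact ⟨hι2.trans (Finset.mem_powersetCard.mp hp2).1, hι3⟩
  have hmaps : ∀ q ∈ Q, (q.1 ∪ q.2).card ∈ Finset.range (2 * k) := by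
    intro q hq
    rw [hQdef, Finset.mem_product] at hq
    have h1 := (Finset.mem_powersetCard.mp hq.1).2
    have h2 := (Finset.mem_powersetCard.mp hq.2).2
    have h3 := Finset.card_union_le q.1 q.2
    rw [Finset.mem_range]
    omega
  have step3 : ∑ q ∈ Q, f q =
      ∑ u ∈ Finset.range (2 * k),
        ∑ q ∈ Q.filter (fun q => (q.1 ∪ q.2).card = u), f q :=
    (Finset.sum_fiberwise_of_maps_to hmaps f).symm
  have hinner : ∀ u, ∑ q ∈ Q.filter (fun q => (q.1 ∪ q.2).card = u), f q =
      (Q.filter (fun q => (q.1 ∪ q.2).card = u)).card * w (u + 1) := by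
    intro u
    have hfq : ∀ q ∈ Q.filter (fun q => (q.1 ∪ q.2).card = u), f q = w (u + 1) := by
      intro q hq
      rw [hfdef]
      simp only
      rw [(Finset.mem_filter.mp hq).2]
    rw [Finset.sum_congr rfl hfq, Finset.sum_const, smul_eq_mul]
  have hfib : ∀ u ∈ Finset.range (2 * k),
      (Q.filter (fun q => (q.1 ∪ q.2).card = u)).card ≤ n.choose u * 4 ^ (2 * k) := by
    intro u hu
    rw [Finset.mem_range] at hu
    have hsub : Q.filter (fun q => (q.1 ∪ q.2).card = u) ⊆
        (X.powersetCard u).biUnion (fun U => U.powerset ×ˢ U.powerset) := by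
      intro q hq
      rw [Finset.mem_filter] at hq
      obtain ⟨hqQ, hqu⟩ := hq
      rw [hQdef, Finset.mem_product] at hqQ
      apply Finset.mem_biUnion.mpr
      refine ⟨q.1 ∪ q.2, ?_, ?_⟩
      · rw [Finset.mem_powersetCard]
        exact ⟨Finset.union_subset (Finset.mem_powersetCard.mp hqQ.1).1
          (Finset.mem_powersetCard.mp hqQ.2).1, hqu⟩
      · rw [Finset.mem_product]
        exact ⟨Finset.mem_powerset.mpr Finset.subset_union_left,
          Finset.mem_powerset.mpr Finset.subset_union_right⟩
    calc (Q.filter (fun q => (q.1 ∪ q.2).card = u)).card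
        ≤ ((X.powersetCard u).biUnion (fun U => U.powerset ×ˢ U.powerset)).card :=
          Finset.card_le_card hsub
      _ ≤ ∑ U ∈ X.powersetCard u, (U.powerset ×ˢ U.powerset).card := Finset.card_biUnion_le
      _ ≤ ∑ U ∈ X.powersetCard u, 4 ^ (2 * k) := by
          apply Finset.sum_le_sum
          intro U hU
          have hUcard := (Finset.mem_powersetCard.mp hU).2
          rw [Finset.card_product, Finset.card_powerset, hUcard, ← Nat.pow_add]
          calc 2 ^ (u + u) ≤ 2 ^ (2 * (2 * k)) :=
                Nat.pow_le_pow_right (by norm_num) (by omega)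
            _ = 4 ^ (2 * k) := by rw [Nat.pow_mul]
      _ = n.choose u * 4 ^ (2 * k) := by
          rw [Finset.sum_const, smul_eq_mul, Finset.card_powersetCard]
  have hchoosem : 0 < n.choose m := Nat.choose_pos hmn
  have hnum : ∀ u ∈ Finset.range (2 * k),
      2 * k * (n.choose u * 4 ^ (2 * k) * w (u + 1)) < n.choose m := by
    intro u hu
    rw [Finset.mem_range] at hu
    by_cases hsm : u + 1 ≤ m
    · rw [hwdef]
      simp only [if_pos hsm]
      have hlt : 2 * k * 4 ^ (2 * k) * (u + 1) * m.choose (u + 1) < n - u := by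
        have h1 : m.choose (u + 1) ≤ m ^ (2 * k) :=
          le_trans (Nat.choose_le_pow _ _) (Nat.pow_le_pow_right (by omega) (by omega))
        have h2 : 2 * k * 4 ^ (2 * k) * (u + 1) * m.choose (u + 1) ≤ K := by
          rw [hKdef]
          exact Nat.mul_le_mul (Nat.mul_le_mul_left _ (by omega)) h1
        omega
      have key : (2 * k * (n.choose u * 4 ^ (2 * k) * (n - (u + 1)).choose (m - (u + 1)))) * (n - u)
          = (2 * k * 4 ^ (2 * k) * (u + 1) * m.choose (u + 1)) * n.choose m := by
        have e1 := Nat.choose_succ_right_eq n u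
        have e2 := Nat.choose_mul (n := n) hsm
        calc (2 * k * (n.choose u * 4 ^ (2 * k) * (n - (u + 1)).choose (m - (u + 1)))) * (n - u)
            = 2 * k * 4 ^ (2 * k) * ((n.choose u * (n - u)) * (n - (u + 1)).choose (m - (u + 1))) := by
              ring
          _ = 2 * k * 4 ^ (2 * k) * ((n.choose (u + 1) * (u + 1)) * (n - (u + 1)).choose (m - (u + 1))) := by
              rw [e1]
          _ = 2 * k * 4 ^ (2 * k) * (u + 1) * (n.choose (u + 1) * (n - (u + 1)).choose (m - (u + 1))) := by
              ring
          _ = 2 * k * 4 ^ (2 * k) * (u + 1) * (n.choose m * m.choose (u + 1)) := by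
              rw [← e2]
          _ = (2 * k * 4 ^ (2 * k) * (u + 1) * m.choose (u + 1)) * n.choose m := by
              ring
      have hmul : (2 * k * (n.choose u * 4 ^ (2 * k) * (n - (u + 1)).choose (m - (u + 1)))) * (n - u)
          < n.choose m * (n - u) := by
        rw [key, mul_comm (n.choose m) (n - u)]
        exact mul_lt_mul_of_pos_right hlt hchoosem
      exact lt_of_mul_lt_mul_right hmul (Nat.zero_le _)
    · rw [hwdef]
      simp only [if_neg hsm]
      simpa using hchoosem
  have step5 : ∑ u ∈ Finset.range (2 * k), n.choose u * 4 ^ (2 * k) * w (u + 1) < n.choose m := by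
    have hsum : ∑ u ∈ Finset.range (2 * k), 2 * k * (n.choose u * 4 ^ (2 * k) * w (u + 1)) <
        ∑ _u ∈ Finset.range (2 * k), n.choose m := by
      apply Finset.sum_lt_sum_of_nonempty
      · rw [Finset.nonempty_range_iff]; omega
      · exact hnum
    rw [← Finset.mul_sum, Finset.sum_const, Finset.card_range, smul_eq_mul] at hsum
    exact Nat.lt_of_mul_lt_mul_left hsum
  have hBadlt : Bad.card < (X.powersetCard m).card := by
    rw [Finset.card_powersetCard]
    calc Bad.card ≤ ∑ p ∈ P, w ((p.1 ∪ p.2).card) := step1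
      _ ≤ ∑ q ∈ Q, f q := step2
      _ = ∑ u ∈ Finset.range (2 * k),
          ∑ q ∈ Q.filter (fun q => (q.1 ∪ q.2).card = u), f q := step3
      _ = ∑ u ∈ Finset.range (2 * k),
          (Q.filter (fun q => (q.1 ∪ q.2).card = u)).card * w (u + 1) :=
          Finset.sum_congr rfl (fun u _ => hinner u)
      _ ≤ ∑ u ∈ Finset.range (2 * k), n.choose u * 4 ^ (2 * k) * w (u + 1) :=
          Finset.sum_le_sum (fun u hu => Nat.mul_le_mul_right _ (hfib u hu))
      _ < n.choose m := step5
  have hns : ¬ (X.powersetCard m ⊆ Bad) :=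
    fun h => absurd (Finset.card_le_card h) (not_le.mpr hBadlt)
  obtain ⟨S, hSmem, hSBad⟩ := Finset.not_subset.mp hns
  obtain ⟨hSX, hScard⟩ := Finset.mem_powersetCard.mp hSmem
  refine ⟨S, hSX, le_of_eq hScard.symm, ?_⟩
  intro A hA B hB hAB e fe heS hfS heF hfF
  obtain ⟨hAS, hAcard⟩ := Finset.mem_powersetCard.mp hA
  obtain ⟨hBS, hBcard⟩ := Finset.mem_powersetCard.mp hB
  have hA' : A ∈ X.powersetCard k := Finset.mem_powersetCard.mpr ⟨hAS.trans hSX, hAcard⟩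
  have hB' : B ∈ X.powersetCard k := Finset.mem_powersetCard.mpr ⟨hBS.trans hSX, hBcard⟩
  have heA : e ∉ A := fun h => heS (hAS h)
  have hfB : fe ∉ B := fun h => hfS (hBS h)
  have he := huniq A hA' e heA heF
  have hf := huniq B hB' fe hfB hfF
  intro hef
  have hcc : c A = c B := by rw [← he, ← hf, hef]
  apply hSBad
  rw [hBaddef, Finset.mem_filter]
  refine ⟨hSmem, (A, B), ?_, Finset.union_subset hAS hBS⟩
  rw [hPdef, Finset.mem_filter, Finset.mem_product]
  exact ⟨⟨hA', hB'⟩, hAB, hcc⟩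
end
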